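/- arXiv:2601.08270 — 8 statements merged into one kernel-verified Lean document; each statement's English description precedes it below -/
import Mathlib

section
/- Let T be a finite tree with at least two vertices. Then the mutual-visibility number of T satisfies μ(T) = 2 + Σ_{v ∈ Br(T)} (deg_T(v) − 2), where Br(T) is the set of vertices of T of degree at least 3. -/
open SimpleGraph

variable {V : Type*}

/-- Two vertices `u`, `v` are `X`-visible in `G` if some shortest `u,v`-path
has no internal vertex in `X`. -/
def Visible (G : SimpleGraph V) (X : Set V) (u v : V) : Prop :=
  ∃ p : G.Walk u v, p.length = G.dist u v ∧
    ∀ x ∈ p.support, x ≠ u → x ≠ v → x ∉ X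

/-- `S` is a mutual-visibility set of `G` if every two distinct vertices of `S`
are `S`-visible. -/
def MutualVisSet (G : SimpleGraph V) (S : Set V) : Prop :=
  ∀ u ∈ S, ∀ v ∈ S, u ≠ v → Visible G S u v

/-- The mutual-visibility number of `G`: the maximum cardinality of a
mutual-visibility set of `G`. -/
noncomputable def muNumber (G : SimpleGraph V) : ℕ :=
  sSup {n : ℕ | ∃ S : Set V, MutualVisSet G S ∧ S.ncard = n}

/-- The set of leaves (degree-one vertices) of `G`. -/
def leaves (G : SimpleGraph V) : Set V := {v | (G.neighborSet v).ncard = 1}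

/-- The set of branch vertices (degree at least three) of `G`. -/
def branchVerts (G : SimpleGraph V) : Set V := {v | 3 ≤ (G.neighborSet v).ncard}

/-- The Steiner subtree `T⟨S⟩` of a tree `T` spanned by `S`: the union of the
(unique) paths of `T` between pairs of vertices of `S`; equivalently the minimal
subtree of `T` containing `S`. -/
def steinerSub (T : SimpleGraph V) (S : Set V) : T.Subgraph where
  verts := {x | ∃ u ∈ S, ∃ v ∈ S, ∃ p : T.Walk u v, p.IsPath ∧ x ∈ p.support}
  Adj x y := ∃ u ∈ S, ∃ v ∈ S, ∃ p : T.Walk u v, p.IsPath ∧ s(x, y) ∈ p.edges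
  adj_sub := by
    rintro x y ⟨u, hu, v, hv, p, hp, he⟩
    exact p.adj_of_mem_edges he
  edge_vert := by
    rintro x y ⟨u, hu, v, hv, p, hp, he⟩
    exact ⟨u, hu, v, hv, p, hp, p.fst_mem_support_of_mem_edges he⟩
  symm := by
    constructor
    rintro x y ⟨u, hu, v, hv, p, hp, he⟩
    exact ⟨u, hu, v, hv, p, hp, by rwa [Sym2.eq_swap] at he⟩

/-- The set of leaves (degree-one vertices) of a subgraph `H` of `T`. -/
def subgraphLeaves {T : SimpleGraph V} (H : T.Subgraph) : Set V :=
  {x ∈ H.verts | (H.neighborSet x).ncard = 1}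

namespace TreeMu

open SimpleGraph Walk

variable {T : SimpleGraph V}

/-- The unique path between two vertices of a tree. -/
noncomputable def tp (hT : T.IsTree) (u v : V) : T.Walk u v :=
  (hT.existsUnique_path u v).choose

lemma tp_isPath (hT : T.IsTree) (u v : V) : (tp hT u v).IsPath :=
  (hT.existsUnique_path u v).choose_spec.1

lemma tp_unique (hT : T.IsTree) {u v : V} (p : T.Walk u v) (hp : p.IsPath) :
    p = tp hT u v :=
  (hT.existsUnique_path u v).choose_spec.2 p hp

lemma tp_length (hT : T.IsTree) (u v : V) : (tp hT u v).length = T.dist u v := by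
  obtain ⟨p, hp, hl⟩ := hT.isConnected.exists_path_of_dist u v
  rwa [tp_unique hT p hp] at hl

lemma tp_not_nil (hT : T.IsTree) {u v : V} (h : u ≠ v) : ¬ (tp hT u v).Nil := by
  rw [nil_iff_length_eq]
  exact fun hl => h (Walk.eq_of_length_eq_zero hl)

/-- The first step (neighbor of `u`) on the unique path from `u` to `v`. -/
noncomputable def fs (hT : T.IsTree) (u v : V) : V := (tp hT u v).getVert 1

lemma adj_fs (hT : T.IsTree) {u v : V} (h : u ≠ v) : T.Adj u (fs hT u v) :=
  adj_snd (tp_not_nil hT h)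

lemma fs_of_adj (hT : T.IsTree) {u a : V} (h : T.Adj u a) : fs hT u a = a := by
  have he : (Walk.cons h Walk.nil) = tp hT u a := tp_unique hT _ (by simp [h.ne])
  rw [fs, ← he]
  rfl

lemma takeUntil_getVert_one [DecidableEq V] {s x z : V} (p : T.Walk s x)
    (hz : z ∈ p.support) (hzs : z ≠ s) :
    (p.takeUntil z hz).getVert 1 = p.getVert 1 := by
  cases p with
  | nil =>
    rw [mem_support_nil_iff] at hz
    exact absurd hz hzs
  | cons r q =>
    rw [Walk.takeUntil]
    rw [dif_neg (fun h => hzs h.symm)]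
    simp [Walk.getVert_cons_succ, Walk.getVert_zero]

lemma support_inter [DecidableEq V] (hT : T.IsTree) {s x y z : V}
    {p : T.Walk s x} {q : T.Walk s y}
    (hp : p.IsPath) (hq : q.IsPath) (hne : p.getVert 1 ≠ q.getVert 1)
    (h1 : z ∈ p.support) (h2 : z ∈ q.support) : z = s := by
  by_contra hzs
  have e : p.takeUntil z h1 = q.takeUntil z h2 :=
    (hT.existsUnique_path s z).unique (hp.takeUntil h1) (hq.takeUntil h2)
  have := congrArg (fun w => Walk.getVert w 1) e
  rw [takeUntil_getVert_one p h1 hzs, takeUntil_getVert_one q h2 hzs] at this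
  exact hne this

lemma mem_tp_of_fs_ne (hT : T.IsTree) {s x y : V} (hx : x ≠ s) (hy : y ≠ s)
    (hne : fs hT s x ≠ fs hT s y) : s ∈ (tp hT x y).support := by
  classical
  have hp := tp_isPath hT s x
  have hq := tp_isPath hT s y
  have hw : ((tp hT s x).reverse.append (tp hT s y)).IsPath := by
    rw [isPath_def, support_append]
    apply List.Nodup.append
    · rw [support_reverse, List.nodup_reverse]
      exact hp.support_nodup
    · exact (hq.support_nodup).sublist (List.tail_sublist _)
    · intro z hz1 hz2
      have hzp : z ∈ (tp hT s x).support := by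
        rwa [support_reverse, List.mem_reverse] at hz1
      have hzq : z ∈ (tp hT s y).support := List.mem_of_mem_tail hz2
      have hzs : z = s := support_inter hT hp hq hne hzp hzq
      subst hzs
      have hnd := hq.support_nodup
      rw [support_eq_cons] at hnd
      exact (List.nodup_cons.mp hnd).1 hz2
  have he : (tp hT s x).reverse.append (tp hT s y) = tp hT x y := tp_unique hT _ hw
  rw [← he, mem_support_append_iff]
  left
  exact Walk.end_mem_support _

lemma tp_avoids (hT : T.IsTree) {S : Set V} (hS : MutualVisSet T S) {u v : V}
    (hu : u ∈ S) (hv : v ∈ S) (huv : u ≠ v) :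
    ∀ z ∈ (tp hT u v).support, z ≠ u → z ≠ v → z ∉ S := by
  classical
  obtain ⟨w, _, hav⟩ := hS u hu v hv huv
  have hb : w.bypass = tp hT u v := tp_unique hT _ w.bypass_isPath
  intro z hz hzu hzv
  exact hav z (w.support_bypass_subset (by rw [hb]; exact hz)) hzu hzv

lemma fs_const (hT : T.IsTree) {S : Set V} (hS : MutualVisSet T S) {s t1 t2 : V}
    (hs : s ∈ S) (h1 : t1 ∈ S) (h2 : t2 ∈ S) (n1 : t1 ≠ s) (n2 : t2 ≠ s) :
    fs hT s t1 = fs hT s t2 := by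
  by_contra hne
  have h12 : t1 ≠ t2 := by rintro rfl; exact hne rfl
  exact tp_avoids hT hS h1 h2 h12 s (mem_tp_of_fs_ne hT n1 n2 hne) (Ne.symm n1) (Ne.symm n2) hs



lemma internal_two_adj : ∀ {u v : V} (p : T.Walk u v), p.IsPath →
    ∀ x ∈ p.support, x ≠ u → x ≠ v → ∃ a b, a ≠ b ∧ T.Adj x a ∧ T.Adj x b := by
  intro u v p
  induction p with
  | nil =>
    intro _ x hx hxu _
    rw [mem_support_nil_iff] at hx
    exact absurd hx hxu
  | @cons u b v h q ih =>
    intro hp x hx hxu hxv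
    rw [support_cons, List.mem_cons] at hx
    rcases hx with rfl | hx
    · exact absurd rfl hxu
    by_cases hxb : x = b
    · subst hxb
      cases q with
      | nil => exact absurd rfl hxv
      | @cons b c v h2 r =>
        refine ⟨u, c, ?_, h.symm, h2⟩
        have hu : u ∉ (Walk.cons h2 r).support := ((Walk.cons_isPath_iff h _).mp hp).2
        rintro rfl
        exact hu (by rw [support_cons]; exact List.mem_cons_of_mem _ r.start_mem_support)
    · exact ih ((Walk.cons_isPath_iff h q).mp hp).1 x hx hxb hxv

lemma internal_deg [Fintype V] {u v x : V} (p : T.Walk u v) (hp : p.IsPath)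
    (hx : x ∈ p.support) (hxu : x ≠ u) (hxv : x ≠ v) :
    2 ≤ (T.neighborSet x).ncard := by
  obtain ⟨a, b, hab, ha, hb⟩ := internal_two_adj p hp x hx hxu hxv
  have hsub : ({a, b} : Set V) ⊆ T.neighborSet x := by
    intro t ht
    rcases ht with rfl | rfl
    · exact ha
    · exact hb
  calc 2 = ({a, b} : Set V).ncard := (Set.ncard_pair hab).symm
    _ ≤ (T.neighborSet x).ncard := Set.ncard_le_ncard hsub (Set.toFinite _)

lemma leaves_mvs [Fintype V] (hT : T.IsTree) : MutualVisSet T (leaves T) := by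
  intro u hu v hv huv
  refine ⟨tp hT u v, tp_length hT u v, fun x hx hxu hxv hxS => ?_⟩
  have h2 := internal_deg (tp hT u v) (tp_isPath hT u v) hx hxu hxv
  have h1 : (T.neighborSet x).ncard = 1 := hxS
  omega

lemma edge_end_length : ∀ {w l : V} (r : T.Walk w l), r.IsPath → s(l, w) ∈ r.edges →
    r.length = 1 := by
  intro w l r
  induction r with
  | nil => simp
  | @cons w z l h q ih =>
    intro hp he
    rw [edges_cons, List.mem_cons] at he
    rcases he with he | he
    · rcases Sym2.eq_iff.mp he with ⟨rfl, rfl⟩ | ⟨rfl, -⟩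
      · exact absurd h (T.irrefl)
      · have hq : q.IsPath := hp.of_cons
        rw [Walk.isPath_iff_eq_nil] at hq
        subst hq
        rfl
    · have : w ∈ q.support := Walk.snd_mem_support_of_mem_edges q he
      exact absurd this ((Walk.cons_isPath_iff h q).mp hp).2

lemma deg_pos [Fintype V] (hT : T.IsTree) (h2 : 2 ≤ Fintype.card V) (v : V) :
    1 ≤ (T.neighborSet v).ncard := by
  obtain ⟨u, hu⟩ := Fintype.exists_ne_of_one_lt_card h2 v
  have hadj : T.Adj v (fs hT v u) := adj_fs hT (Ne.symm hu)
  have hne : (T.neighborSet v).Nonempty := ⟨_, hadj⟩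
  have := (Set.ncard_pos (Set.toFinite _)).mpr hne
  omega

lemma exists_leaf_branch [Fintype V] (hT : T.IsTree) (h2 : 2 ≤ Fintype.card V)
    {s a : V} (h : T.Adj s a) :
    ∃ l, (T.neighborSet l).ncard = 1 ∧ l ≠ s ∧ fs hT s l = a := by
  classical
  set F := Finset.univ.filter (fun t => t ≠ s ∧ fs hT s t = a) with hF
  have hFne : F.Nonempty := ⟨a, by simp [hF, h.ne', fs_of_adj hT h]⟩
  obtain ⟨l, hlF, hmax⟩ := F.exists_max_image (fun t => (tp hT s t).length) hFne
  rw [hF, Finset.mem_filter] at hlF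
  obtain ⟨-, hls, hfsl⟩ := hlF
  refine ⟨l, ?_, hls, hfsl⟩
  by_contra hdeg
  have hd1 : 1 ≤ (T.neighborSet l).ncard := deg_pos hT h2 l
  have hd2 : 2 ≤ (T.neighborSet l).ncard := by omega
  set p := tp hT s l with hpdef
  have hppath : p.IsPath := tp_isPath hT s l
  have hplen : 1 ≤ p.length := by
    have hnn := tp_not_nil hT (Ne.symm hls)
    rw [not_nil_iff_lt_length, ← hpdef] at hnn
    omega
  have hexw : ∃ w, T.Adj l w ∧ w ∉ p.support := by
    by_contra hall
    push_neg at hall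
    have key : ∀ w, T.Adj l w → w = p.getVert (p.length - 1) := by
      intro w hw
      have hws : w ∈ p.support := hall w hw
      have hrp : (p.dropUntil w hws).IsPath := hppath.dropUntil hws
      have hedge : s(l, w) ∈ (p.dropUntil w hws).edges := by
        by_contra hno
        exact hT.IsAcyclic (Walk.cons hw (p.dropUntil w hws))
          ((Walk.cons_isCycle_iff _ hw).mpr ⟨hrp, hno⟩)
      have hr1 : (p.dropUntil w hws).length = 1 := edge_end_length _ hrp hedge
      have hspec := p.take_spec hws
      have hlen : (p.takeUntil w hws).length + 1 = p.length := by
        have := congrArg Walk.length hspec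
        rw [Walk.length_append, hr1] at this
        omega
      have hgv : ((p.takeUntil w hws).append (p.dropUntil w hws)).getVert (p.length - 1) = w := by
        rw [Walk.getVert_append, if_neg (by omega),
          (show p.length - 1 - (p.takeUntil w hws).length = 0 by omega), Walk.getVert_zero]
      rw [hspec] at hgv
      exact hgv.symm
    obtain ⟨w1, hw1, w2, hw2, hww⟩ := (Set.one_lt_ncard (Set.toFinite _)).mp hd2
    exact hww ((key w1 hw1).trans (key w2 hw2).symm)
  obtain ⟨w, hw, hwp⟩ := hexw
  have hq : (p.concat hw).IsPath := by
    rw [← Walk.isPath_reverse_iff, Walk.reverse_concat]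
    refine (Walk.cons_isPath_iff _ _).mpr ⟨hppath.reverse, ?_⟩
    rw [support_reverse, List.mem_reverse]
    exact hwp
  have hqq : p.concat hw = tp hT s w := tp_unique hT _ hq
  have hfsw : fs hT s w = a := by
    rw [fs, ← hqq, Walk.concat_eq_append, Walk.getVert_append]
    by_cases h1 : 1 < p.length
    · rw [if_pos h1]
      exact hfsl
    · have hp1 : p.length = 1 := by omega
      rw [if_neg (by omega), hp1]
      simp only [Nat.sub_self, Walk.getVert_zero]
      rw [← hfsl, fs, ← hpdef, ← hp1, Walk.getVert_length]
  have hws : w ≠ s := fun hh => hwp (hh ▸ p.start_mem_support)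
  have hwF : w ∈ F := by
    rw [hF, Finset.mem_filter]
    exact ⟨Finset.mem_univ _, hws, hfsw⟩
  have hle := hmax w hwF
  rw [← hqq] at hle
  simp only [Walk.length_concat] at hle
  omega



lemma ncard_nbr_eq_degree [Fintype V] [DecidableRel T.Adj] (v : V) :
    (T.neighborSet v).ncard = T.degree v := by
  rw [← card_neighborSet_eq_degree, Set.ncard_eq_toFinset_card', Set.toFinset_card]

lemma leaf_count [Fintype V] (hT : T.IsTree) (h2 : 2 ≤ Fintype.card V) :
    (leaves T).ncard = 2 + ∑ᶠ v ∈ branchVerts T, ((T.neighborSet v).ncard - 2) := by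
  classical
  have hdc : ∀ v, (T.neighborSet v).ncard = T.degree v := fun v => ncard_nbr_eq_degree v
  have hbv : branchVerts T = ↑(Finset.univ.filter fun v => 3 ≤ T.degree v) := by
    ext v
    simp [branchVerts, hdc]
  have hfin : ∑ᶠ v ∈ branchVerts T, ((T.neighborSet v).ncard - 2) =
      ∑ v ∈ Finset.univ.filter (fun v => 3 ≤ T.degree v), (T.degree v - 2) := by
    rw [hbv, finsum_mem_coe_finset]
    exact Finset.sum_congr rfl fun v _ => by rw [hdc]
  have hlv : (leaves T).ncard = (Finset.univ.filter fun v => T.degree v = 1).card := by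
    rw [← Set.ncard_coe_finset]
    congr 1
    ext v
    simp [leaves, hdc]
  rw [hfin, hlv]
  have hsum : ∑ v, T.degree v = 2 * (Fintype.card V - 1) := by
    rw [sum_degrees_eq_twice_card_edges]
    have := hT.card_edgeFinset
    omega
  have hpos : ∀ v, 1 ≤ T.degree v := fun v => by rw [← hdc]; exact deg_pos hT h2 v
  -- work in ℤ
  set A := Finset.univ.filter (fun v => T.degree v = 1) with hA
  set B := Finset.univ.filter (fun v => 3 ≤ T.degree v) with hB
  have e1 : ∑ v : V, ((T.degree v : ℤ) - 2) = -2 := by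
    rw [Finset.sum_sub_distrib, Finset.sum_const, ← Nat.cast_sum, hsum]
    rw [Nat.cast_mul, Nat.cast_sub (by omega : 1 ≤ Fintype.card V)]
    simp [Finset.card_univ]
    ring
  rw [← Finset.sum_filter_add_sum_filter_not Finset.univ (fun v => T.degree v = 1)
    (fun v => ((T.degree v : ℤ) - 2))] at e1
  rw [← Finset.sum_filter_add_sum_filter_not
    (Finset.univ.filter (fun v => ¬ T.degree v = 1)) (fun v => T.degree v = 2)
    (fun v => ((T.degree v : ℤ) - 2))] at e1
  have hAe : ∑ v ∈ Finset.univ.filter (fun v => T.degree v = 1),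
      ((T.degree v : ℤ) - 2) = -(A.card : ℤ) := by
    have hc : ∀ v ∈ Finset.univ.filter (fun v => T.degree v = 1),
        ((T.degree v : ℤ) - 2) = -1 := by
      intro v hv
      rw [Finset.mem_filter] at hv
      rw [hv.2]
      norm_num
    rw [Finset.sum_congr rfl hc, Finset.sum_const, ← hA, nsmul_eq_mul]
    ring
  have hCe : ∑ v ∈ (Finset.univ.filter (fun v => ¬ T.degree v = 1)).filter
      (fun v => T.degree v = 2), ((T.degree v : ℤ) - 2) = 0 := by
    apply Finset.sum_eq_zero
    intro v hv
    rw [Finset.mem_filter] at hv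
    rw [hv.2]
    ring
  have hBe : (Finset.univ.filter (fun v => ¬ T.degree v = 1)).filter
      (fun v => ¬ T.degree v = 2) = B := by
    rw [hB]
    ext v
    simp only [Finset.mem_filter, Finset.mem_univ, true_and]
    have := hpos v
    omega
  rw [hAe, hCe, hBe] at e1
  have hBcast : ((∑ v ∈ B, (T.degree v - 2) : ℕ) : ℤ) =
      ∑ v ∈ B, ((T.degree v : ℤ) - 2) := by
    rw [Nat.cast_sum]
    apply Finset.sum_congr rfl
    intro v hv
    rw [hB, Finset.mem_filter] at hv
    rw [Nat.cast_sub (by omega : 2 ≤ T.degree v)]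
    norm_num
  have : (A.card : ℤ) = ((2 + ∑ v ∈ B, (T.degree v - 2) : ℕ) : ℤ) := by
    push_cast [hBcast]
    linarith
  exact_mod_cast this

lemma two_le_leaves [Fintype V] (hT : T.IsTree) (h2 : 2 ≤ Fintype.card V) :
    2 ≤ (leaves T).ncard := by
  rw [leaf_count hT h2]
  omega

lemma mvs_card_le [Fintype V] (hT : T.IsTree) (h2 : 2 ≤ Fintype.card V)
    {S : Set V} (hS : MutualVisSet T S) : S.ncard ≤ (leaves T).ncard := by
  classical
  by_cases hsmall : S.ncard ≤ 2
  · exact le_trans hsmall (two_le_leaves hT h2)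
  push_neg at hsmall
  have hEx : ∀ s ∈ S, ∃ l, l ∈ leaves T ∧
      (l = s ∨ (l ≠ s ∧ ∀ t ∈ S, t ≠ s → fs hT s l ≠ fs hT s t)) := by
    intro s hs
    by_cases hls : s ∈ leaves T
    · exact ⟨s, hls, Or.inl rfl⟩
    · obtain ⟨t0, ht0S, ht0⟩ := Set.exists_ne_of_one_lt_ncard (s := S) (by omega) s
      have hsd1 : 1 ≤ (T.neighborSet s).ncard := deg_pos hT h2 s
      have hsd2 : 2 ≤ (T.neighborSet s).ncard := by
        rcases Nat.lt_or_ge (T.neighborSet s).ncard 2 with hlt | hge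
        · exact absurd (by omega : (T.neighborSet s).ncard = 1) hls
        · exact hge
      obtain ⟨a, haN, b, hbN, hab⟩ := (Set.one_lt_ncard (Set.toFinite _)).mp hsd2
      set d := fs hT s t0 with hd
      obtain ⟨c, hcN, hcd⟩ : ∃ c, T.Adj s c ∧ c ≠ d := by
        by_cases had : a = d
        · exact ⟨b, hbN, fun hh => hab (by rw [had, hh])⟩
        · exact ⟨a, haN, had⟩
      obtain ⟨l, hl1, hlns, hfsl⟩ := exists_leaf_branch hT h2 hcN
      refine ⟨l, hl1, Or.inr ⟨hlns, fun t ht hts => ?_⟩⟩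
      rw [hfsl, fs_const hT hS hs ht ht0S hts ht0, ← hd]
      exact hcd
  choose! f hf1 hf2 using hEx
  have hinj : Set.InjOn f S := by
    intro s1 h1 s2 h2' hfe
    by_contra hne
    rcases hf2 s1 h1 with e1 | ⟨hne1, hp1⟩ <;> rcases hf2 s2 h2' with e2 | ⟨hne2, hp2⟩
    · exact hne (e1.symm.trans (hfe.trans e2))
    · exact hp2 s1 h1 hne (by rw [← hfe, e1])
    · exact hp1 s2 h2' (fun hh => hne hh.symm) (by rw [hfe, e2])
    · have m1 : s1 ∈ (tp hT (f s1) s2).support :=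
        mem_tp_of_fs_ne hT hne1 (Ne.symm hne) (hp1 s2 h2' (Ne.symm hne))
      have m2 : s2 ∈ (tp hT (f s1) s1).support := by
        have := mem_tp_of_fs_ne hT hne2 hne (hp2 s1 h1 hne)
        rwa [← hfe] at this
      set r := tp hT (f s1) s2 with hr
      have et : r.takeUntil s1 m1 = tp hT (f s1) s1 :=
        tp_unique hT _ ((tp_isPath hT (f s1) s2).takeUntil m1)
      have hs2take : s2 ∈ (r.takeUntil s1 m1).support := by rw [et]; exact m2
      have hnd := (tp_isPath hT (f s1) s2).support_nodup
      rw [← hr] at hnd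
      rw [← r.take_spec m1, support_append] at hnd
      have hs2tail : s2 ∈ (r.dropUntil s1 m1).support.tail := by
        have hend := (r.dropUntil s1 m1).end_mem_support
        rw [support_eq_cons] at hend
        rcases List.mem_cons.mp hend with hh | hh
        · exact absurd hh.symm hne
        · exact hh
      exact (List.disjoint_of_nodup_append hnd) hs2take hs2tail
  have himg : f '' S ⊆ leaves T := by
    rintro _ ⟨s, hs, rfl⟩
    exact hf1 s hs
  calc S.ncard = (f '' S).ncard := (Set.ncard_image_of_injOn hinj).symm
    _ ≤ (leaves T).ncard := Set.ncard_le_ncard himg (Set.toFinite _)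

end TreeMu

/-- For a finite tree with at least two vertices,
`μ(T) = 2 + Σ_{v ∈ Br(T)} (deg v - 2)`. -/
theorem stmt4 [Fintype V] (T : SimpleGraph V) (hT : T.IsTree)
    (h2 : 2 ≤ Fintype.card V) :
    muNumber T = 2 + ∑ᶠ v ∈ branchVerts T, ((T.neighborSet v).ncard - 2) := by
  classical
  have hub : ∀ n ∈ {n : ℕ | ∃ S : Set V, MutualVisSet T S ∧ S.ncard = n},
      n ≤ (leaves T).ncard := by
    rintro n ⟨S, hS, rfl⟩
    exact TreeMu.mvs_card_le hT h2 hS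
  have hmem : (leaves T).ncard ∈ {n : ℕ | ∃ S : Set V, MutualVisSet T S ∧ S.ncard = n} :=
    ⟨leaves T, TreeMu.leaves_mvs hT, rfl⟩
  have hmu : muNumber T = (leaves T).ncard := by
    apply le_antisymm
    · exact csSup_le ⟨_, hmem⟩ hub
    · exact le_csSup ⟨(leaves T).ncard, fun n hn => hub n hn⟩ hmem
  rw [hmu, TreeMu.leaf_count hT h2]
end

section
/- Let T be a finite tree containing at least one branch vertex, and let S ⊆ V(T) be a mutual-visibility set of T. If S contains a vertex of the Steiner subtree T⟨Br(T)⟩ spanned by the set Br(T) of branch vertices of T, then |S| < |𝓛(T)|, where 𝓛(T) is the set of leaves of T. -/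
open SimpleGraph
set_option linter.unusedSectionVars false
set_option linter.unusedVariables false
set_option maxHeartbeats 1000000

variable {V : Type*}

section Tree

variable {T : SimpleGraph V} (hT : T.IsTree)

/-- The unique path between two vertices of a tree. -/
noncomputable def pth (u v : V) : T.Walk u v := (hT.existsUnique_path u v).choose

lemma pth_isPath (u v : V) : (pth hT u v).IsPath := (hT.existsUnique_path u v).choose_spec.1

lemma pth_uniq {u v : V} (p : T.Walk u v) (hp : p.IsPath) : p = pth hT u v :=
  (hT.existsUnique_path u v).choose_spec.2 p hp

lemma pth_nil (u : V) : pth hT u u = SimpleGraph.Walk.nil :=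
  (pth_uniq hT _ (SimpleGraph.Walk.IsPath.nil)).symm

lemma pth_rev (u v : V) : (pth hT u v).reverse = pth hT v u :=
  pth_uniq hT _ ((pth_isPath hT u v).reverse)

lemma mem_pth_rev {u v x : V} : x ∈ (pth hT u v).support ↔ x ∈ (pth hT v u).support := by
  rw [← pth_rev hT u v, SimpleGraph.Walk.support_reverse, List.mem_reverse]

lemma len_pos {u v : V} (h : u ≠ v) : 0 < (pth hT u v).length := by
  rcases Nat.eq_zero_or_pos (pth hT u v).length with h0 | h0
  · exact absurd (SimpleGraph.Walk.eq_of_length_eq_zero h0) h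
  · exact h0

lemma len_eq_zero {u v : V} (h : (pth hT u v).length = 0) : u = v :=
  SimpleGraph.Walk.eq_of_length_eq_zero h

/-- The next vertex after `u` on the path from `u` to `v`. -/
noncomputable def nxt (u v : V) : V := (pth hT u v).getVert 1

lemma adj_nxt {u v : V} (h : u ≠ v) : T.Adj u (nxt hT u v) := by
  have := (pth hT u v).adj_getVert_succ (len_pos hT h)
  simpa [SimpleGraph.Walk.getVert_zero, nxt] using this

lemma nxt_ne {u v : V} (h : u ≠ v) : nxt hT u v ≠ u := (adj_nxt hT h).ne'

lemma nxt_mem_support {u v : V} (h : u ≠ v) : nxt hT u v ∈ (pth hT u v).support :=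
  SimpleGraph.Walk.mem_support_iff_exists_getVert.mpr ⟨1, rfl, len_pos hT h⟩

lemma pth_adj {u v : V} (h : T.Adj u v) :
    pth hT u v = SimpleGraph.Walk.cons h SimpleGraph.Walk.nil := by
  refine (pth_uniq hT _ ?_).symm
  rw [SimpleGraph.Walk.cons_isPath_iff]
  exact ⟨SimpleGraph.Walk.IsPath.nil, by simp [h.ne]⟩

lemma nxt_adj {u v : V} (h : T.Adj u v) : nxt hT u v = v := by
  rw [nxt, pth_adj hT h]
  simp [SimpleGraph.Walk.getVert_cons_succ]

section DE
variable [DecidableEq V]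

lemma pth_split {u v x : V} (hx : x ∈ (pth hT u v).support) :
    (pth hT u x).append (pth hT x v) = pth hT u v := by
  have ht := pth_uniq hT ((pth hT u v).takeUntil x hx) ((pth_isPath hT u v).takeUntil hx)
  have hd := pth_uniq hT ((pth hT u v).dropUntil x hx) ((pth_isPath hT u v).dropUntil hx)
  rw [← ht, ← hd]
  exact SimpleGraph.Walk.take_spec _ hx

lemma len_split {u v x : V} (hx : x ∈ (pth hT u v).support) :
    (pth hT u x).length + (pth hT x v).length = (pth hT u v).length := by
  rw [← pth_split hT hx, SimpleGraph.Walk.length_append]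

lemma getVert1_append {u v w : V} {p : T.Walk u v} {q : T.Walk v w} (h : 0 < p.length) :
    (p.append q).getVert 1 = p.getVert 1 := by
  rw [SimpleGraph.Walk.getVert_append]
  rcases Nat.lt_or_ge 1 p.length with h1 | h1
  · rw [if_pos h1]
  · have hl : p.length = 1 := le_antisymm h1 h
    have h2 : p.getVert 1 = v := by rw [← hl]; exact p.getVert_length
    rw [if_neg (by omega), hl, h2]
    simp

lemma nxt_split {u v x : V} (hx : x ∈ (pth hT u v).support) (hux : u ≠ x) :
    nxt hT u v = nxt hT u x := by
  rw [nxt, nxt, ← pth_split hT hx, getVert1_append (len_pos hT hux)]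

lemma fork {u v w x : V} (hxv : x ∈ (pth hT u v).support) (hxw : x ∈ (pth hT u w).support)
    (hne : nxt hT u v ≠ nxt hT u w) : x = u := by
  by_contra hxu
  exact hne ((nxt_split hT hxv (Ne.symm hxu)).trans (nxt_split hT hxw (Ne.symm hxu)).symm)

lemma mid {u v w : V} (huv : u ≠ v) (huw : u ≠ w) (hne : nxt hT u v ≠ nxt hT u w) :
    u ∈ (pth hT v w).support := by
  have hq : ((pth hT v u).append (pth hT u w)).IsPath := by
    apply SimpleGraph.Walk.IsPath.mk'
    rw [SimpleGraph.Walk.support_append, List.nodup_append]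
    refine ⟨(pth_isPath hT v u).support_nodup, (pth_isPath hT u w).support_nodup.tail, ?_⟩
    intro x hx1 y hx2 hxy
    subst hxy
    have hx2' : x ∈ (pth hT u w).support := List.mem_of_mem_tail hx2
    have hx1' : x ∈ (pth hT u v).support := (mem_pth_rev hT).mpr hx1
    have hxu : x = u := fork hT hx1' hx2' hne
    have hu_mem : u ∈ ((pth hT u w).support).tail := hxu ▸ hx2
    have hnd := (pth_isPath hT u w).support_nodup
    rw [(pth hT u w).support_eq_cons] at hnd
    exact (List.nodup_cons.mp hnd).1 hu_mem
  have := pth_uniq hT _ hq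
  rw [← this]
  rw [SimpleGraph.Walk.mem_support_iff_exists_getVert]
  exact ⟨(pth hT v u).length, by
    rw [SimpleGraph.Walk.getVert_append]
    simp [SimpleGraph.Walk.getVert_length, SimpleGraph.Walk.length_append]⟩

/-- extension of a path by one edge at the far end -/
lemma pth_ext {s x z : V} (hsx : s ≠ x) (hz : T.Adj x z) (hzs : z ∉ (pth hT s x).support) :
    pth hT s z = (pth hT s x).concat hz := by
  refine (pth_uniq hT _ ?_).symm
  rw [SimpleGraph.Walk.concat_eq_append]
  apply SimpleGraph.Walk.IsPath.mk'
  rw [SimpleGraph.Walk.support_append, List.nodup_append]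
  refine ⟨(pth_isPath hT s x).support_nodup, by simp, ?_⟩
  intro y hy1 y' hy2 hyy
  subst hyy
  simp only [SimpleGraph.Walk.support_cons, SimpleGraph.Walk.support_nil, List.tail_cons,
    List.mem_singleton] at hy2
  subst hy2
  exact hzs hy1

lemma len_ext {s x z : V} (hsx : s ≠ x) (hz : T.Adj x z) (hzs : z ∉ (pth hT s x).support) :
    (pth hT s z).length = (pth hT s x).length + 1 := by
  rw [pth_ext hT hsx hz hzs, SimpleGraph.Walk.length_concat]

lemma nxt_ext {s x z : V} (hsx : s ≠ x) (hz : T.Adj x z) (hzs : z ∉ (pth hT s x).support) :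
    nxt hT s z = nxt hT s x := by
  rw [nxt, nxt, pth_ext hT hsx hz hzs, SimpleGraph.Walk.concat_eq_append,
    getVert1_append (len_pos hT hsx)]

lemma nbr_unique {s x z1 z2 : V} (hz1 : T.Adj x z1) (hz2 : T.Adj x z2)
    (h1 : z1 ∈ (pth hT s x).support) (h2 : z2 ∈ (pth hT s x).support) : z1 = z2 := by
  have key : ∀ z1 z2 : V, T.Adj x z1 → z1 ∈ (pth hT s x).support →
      z2 ∈ (pth hT s x).support → z2 ≠ x → z2 ∈ (pth hT s z1).support := by
    intro z1 z2 hz1 h1 h2 hz2x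
    have hsplit := pth_split hT h1
    have hedge : pth hT z1 x = SimpleGraph.Walk.cons hz1.symm SimpleGraph.Walk.nil :=
      pth_adj hT hz1.symm
    rw [← hsplit, SimpleGraph.Walk.support_append, List.mem_append] at h2
    rcases h2 with h2 | h2
    · exact h2
    · rw [hedge] at h2
      simp only [SimpleGraph.Walk.support_cons, SimpleGraph.Walk.support_nil,
        List.tail_cons, List.mem_singleton] at h2
      exact absurd h2 hz2x
  have h12 : z2 ∈ (pth hT s z1).support := key z1 z2 hz1 h1 h2 hz2.ne'
  have h21 : z1 ∈ (pth hT s z2).support := key z2 z1 hz2 h2 h1 hz1.ne'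
  have l1 := len_split hT h12
  have l2 := len_split hT h21
  have e1 := len_split hT h1
  have e2 := len_split hT h2
  have hx1 : (pth hT z1 x).length = 1 := by rw [pth_adj hT hz1.symm]; rfl
  have hx2 : (pth hT z2 x).length = 1 := by rw [pth_adj hT hz2.symm]; rfl
  have : (pth hT z2 z1).length = 0 := by omega
  exact (len_eq_zero hT this).symm

end DE
end Tree

section Main

variable {T : SimpleGraph V} (hT : T.IsTree) [DecidableEq V]

lemma branchLeaf [Fintype V] {s z : V} (hadj : T.Adj s z) :
    ∃ x, x ∈ leaves T ∧ x ≠ s ∧ nxt hT s x = z := by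
  classical
  set D : Finset V := Finset.univ.filter (fun x => x ≠ s ∧ nxt hT s x = z) with hD
  have hzD : z ∈ D := by
    simp [hD, hadj.ne', nxt_adj hT hadj]
  obtain ⟨x, hxD, hmax⟩ := D.exists_max_image (fun y => (pth hT s y).length) ⟨z, hzD⟩
  simp only [hD, Finset.mem_filter, Finset.mem_univ, true_and] at hxD
  obtain ⟨hxs, hxz⟩ := hxD
  have hnbr : ∀ w, T.Adj x w → w ∈ (pth hT s x).support := by
    intro w hw
    by_contra hws
    have hwD : w ∈ D := by
      have h1 : w ≠ s := fun h => hws (h ▸ (pth hT s x).start_mem_support)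
      simp only [hD, Finset.mem_filter, Finset.mem_univ, true_and]
      exact ⟨h1, (nxt_ext hT (Ne.symm hxs) hw hws).trans hxz⟩
    have hle := hmax w hwD
    rw [len_ext hT (Ne.symm hxs) hw hws] at hle
    omega
  have hc : T.Adj x (nxt hT x s) := adj_nxt hT (Ne.symm hxs).symm
  have hsingle : T.neighborSet x = {nxt hT x s} := by
    apply Set.eq_singleton_iff_unique_mem.mpr
    exact ⟨hc, fun w hw => nbr_unique hT hw hc (hnbr w hw) (hnbr _ hc)⟩
  refine ⟨x, ?_, hxs, hxz⟩
  show (T.neighborSet x).ncard = 1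
  rw [hsingle]
  exact Set.ncard_singleton _

lemma vis {S : Set V} (hS : MutualVisSet T S) {s t : V} (hs : s ∈ S) (ht : t ∈ S)
    (hst : s ≠ t) {x : V} (hx : x ∈ (pth hT s t).support) (hxs : x ≠ s) (hxt : x ≠ t) :
    x ∉ S := by
  obtain ⟨p, -, hint⟩ := hS s hs t ht hst
  have hb : p.bypass = pth hT s t := pth_uniq hT _ p.bypass_isPath
  exact hint x (p.support_bypass_subset (hb ▸ hx)) hxs hxt

lemma two_nbrs [Fintype V] {w : V} (hw : w ∈ branchVerts T) (a : V) :
    ∃ z1 z2, T.Adj w z1 ∧ T.Adj w z2 ∧ z1 ≠ z2 ∧ z1 ≠ a ∧ z2 ≠ a := by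
  have h3 : 3 ≤ (T.neighborSet w).ncard := hw
  have hle := Set.ncard_le_ncard_diff_add_ncard (T.neighborSet w) {a} (Set.toFinite _)
  rw [Set.ncard_singleton] at hle
  have h2 : 1 < (T.neighborSet w \ {a}).ncard := by omega
  obtain ⟨z1, hz1, z2, hz2, hne⟩ := (Set.one_lt_ncard (Set.toFinite _)).mp h2
  exact ⟨z1, z2, hz1.1, hz2.1, hne, hz1.2, hz2.2⟩

end Main

/-- If a mutual-visibility set `S` of a finite tree `T` with a branch vertex
contains a vertex of the Steiner subtree spanned by `Br(T)`, then `|S| < |𝓛(T)|`. -/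
theorem stmt6 [Fintype V] (T : SimpleGraph V) (hT : T.IsTree)
    (hbr : (branchVerts T).Nonempty) (S : Set V) (hS : MutualVisSet T S)
    (h : ∃ b ∈ S, b ∈ (steinerSub T (branchVerts T)).verts) :
    S.ncard < (leaves T).ncard := by
  classical
  obtain ⟨b, hbS, hbSt⟩ := h
  -- at least three leaves
  have hthree : 3 ≤ (leaves T).ncard := by
    obtain ⟨w, hw⟩ := hbr
    have hch : ∀ z : V, ∃ x, T.Adj w z → (x ∈ leaves T ∧ x ≠ w ∧ nxt hT w x = z) := by
      intro z
      by_cases hz : T.Adj w z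
      · obtain ⟨x, h1, h2, h3⟩ := branchLeaf hT hz
        exact ⟨x, fun _ => ⟨h1, h2, h3⟩⟩
      · exact ⟨w, fun h => absurd h hz⟩
    choose f hf using hch
    have hinj : Set.InjOn f (T.neighborSet w) := by
      intro z1 hz1 z2 hz2 hEq
      have e1 := (hf z1 hz1).2.2
      have e2 := (hf z2 hz2).2.2
      rw [hEq] at e1
      exact e1.symm.trans e2
    have hsub : f '' T.neighborSet w ⊆ leaves T := by
      rintro _ ⟨z, hz, rfl⟩
      exact (hf z hz).1
    calc (3 : ℕ) ≤ (T.neighborSet w).ncard := hw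
      _ = (f '' T.neighborSet w).ncard := (Set.ncard_image_of_injOn hinj).symm
      _ ≤ (leaves T).ncard := Set.ncard_le_ncard hsub (Set.toFinite _)
  rcases le_or_gt S.ncard 1 with hS1 | hS1
  · omega
  -- main case : |S| ≥ 2
  have hch : ∀ s : V, ∃ t, t ∈ S ∧ t ≠ s := fun s => Set.exists_ne_of_one_lt_ncard hS1 s
  choose tf htfS htfne using hch
  set N : V → V := fun s => nxt hT s (tf s) with hN
  have hNkey : ∀ s ∈ S, ∀ t ∈ S, t ≠ s → nxt hT s t = N s := by
    intro s hs t ht hts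
    by_cases hteq : t = tf s
    · rw [hteq]
    · by_contra hne
      have hmid := mid hT (Ne.symm hts) (Ne.symm (htfne s)) hne
      exact vis hT hS ht (htfS s) hteq hmid (Ne.symm hts) (Ne.symm (htfne s)) hs
  set C : V → V → Prop := fun s x => x = s ∨ (x ≠ s ∧ nxt hT s x ≠ N s) with hC
  have hCnot : ∀ s ∈ S, ∀ t ∈ S, s ≠ t → ¬ C s t := by
    intro s hs t ht hst hCt
    rcases hCt with h | ⟨h1, h2⟩
    · exact hst h.symm
    · exact h2 (hNkey s hs t ht (Ne.symm hst))
  have hdisj : ∀ s ∈ S, ∀ t ∈ S, s ≠ t → ∀ x, C s x → C t x → False := by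
    intro s hs t ht hst x hxs0 hxt0
    rcases hxs0 with h | ⟨hxs, hnxs⟩
    · exact hCnot t ht s hs (Ne.symm hst) (h ▸ hxt0)
    · rcases hxt0 with h | ⟨hxt, hnxt⟩
      · exact hCnot s hs t ht hst (h ▸ (Or.inr ⟨hxs, hnxs⟩ : C s x))
      · have hms : s ∈ (pth hT x t).support := by
          refine mid hT (Ne.symm hxs) hst ?_
          rw [hNkey s hs t ht hst.symm]
          exact hnxs
        have hmt : t ∈ (pth hT x s).support := by
          refine mid hT (Ne.symm hxt) (Ne.symm hst) ?_
          rw [hNkey t ht s hs hst]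
          exact hnxt
        have l1 := len_split hT hms
        have l2 := len_split hT hmt
        have hpos := len_pos hT hst
        omega
  -- leaf selector
  have hgex : ∀ s : V, ∃ ℓ, s ∈ S → (ℓ ∈ leaves T ∧ C s ℓ) := by
    intro s
    by_cases hs : s ∈ S
    · by_cases hz : ∃ z, T.Adj s z ∧ z ≠ N s
      · obtain ⟨z, hz1, hz2⟩ := hz
        obtain ⟨x, hx1, hx2, hx3⟩ := branchLeaf hT hz1
        exact ⟨x, fun _ => ⟨hx1, Or.inr ⟨hx2, by rw [hx3]; exact hz2⟩⟩⟩
      · push_neg at hz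
        refine ⟨s, fun _ => ⟨?_, Or.inl rfl⟩⟩
        have hadj : T.Adj s (N s) := adj_nxt hT (Ne.symm (htfne s))
        have hsingle : T.neighborSet s = {N s} :=
          Set.eq_singleton_iff_unique_mem.mpr ⟨hadj, fun w hw => hz w hw⟩
        show (T.neighborSet s).ncard = 1
        rw [hsingle]; exact Set.ncard_singleton _
    · exact ⟨s, fun h => absurd h hs⟩
  choose g hg using hgex
  -- two leaves in C b
  obtain ⟨ℓ1, ℓ2, h12, hl1leaf, hl2leaf, hC1, hC2⟩ :
      ∃ ℓ1 ℓ2, ℓ1 ≠ ℓ2 ∧ ℓ1 ∈ leaves T ∧ ℓ2 ∈ leaves T ∧ C b ℓ1 ∧ C b ℓ2 := by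
    obtain ⟨u, hu, v, hv, p, hp, hbp⟩ := hbSt
    rw [pth_uniq hT p hp] at hbp
    by_cases hbBr : b ∈ branchVerts T
    · obtain ⟨z1, z2, hz1, hz2, hzz, hz1n, hz2n⟩ := two_nbrs hbBr (N b)
      obtain ⟨m1, hm1l, hm1b, hm1n⟩ := branchLeaf hT hz1
      obtain ⟨m2, hm2l, hm2b, hm2n⟩ := branchLeaf hT hz2
      refine ⟨m1, m2, ?_, hm1l, hm2l, Or.inr ⟨hm1b, by rw [hm1n]; exact hz1n⟩,
        Or.inr ⟨hm2b, by rw [hm2n]; exact hz2n⟩⟩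
      intro hEq
      rw [hEq, hm2n] at hm1n
      exact hzz hm1n.symm
    · have hbu : b ≠ u := fun h => hbBr (h ▸ hu)
      have hbv : b ≠ v := fun h => hbBr (h ▸ hv)
      have hnuv : nxt hT b u ≠ nxt hT b v := by
        intro hc
        have hcb : nxt hT b u ≠ b := nxt_ne hT hbu
        have hcu : nxt hT b u ∈ (pth hT b u).support := nxt_mem_support hT hbu
        have hcv : nxt hT b u ∈ (pth hT b v).support := hc ▸ nxt_mem_support hT hbv
        have hnd : ((pth hT u b).append (pth hT b v)).IsPath := by
          rw [pth_split hT hbp]; exact pth_isPath hT u v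
        have hnd2 := hnd.support_nodup
        rw [SimpleGraph.Walk.support_append] at hnd2
        have hdisj' := List.disjoint_of_nodup_append hnd2
        apply hdisj' ((mem_pth_rev hT).mpr hcu)
        rw [(pth hT b v).support_eq_cons] at hcv
        rcases List.mem_cons.mp hcv with h' | h'
        · exact absurd h' hcb
        · exact h'
      obtain ⟨w, hwBr, hwb, hwnxt⟩ : ∃ w, w ∈ branchVerts T ∧ w ≠ b ∧ nxt hT b w ≠ N b := by
        by_cases hu' : nxt hT b u = N b
        · exact ⟨v, hv, Ne.symm hbv, by rw [← hu']; exact (Ne.symm hnuv)⟩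
        · exact ⟨u, hu, Ne.symm hbu, hu'⟩
      obtain ⟨z1, z2, hz1, hz2, hzz, hz1n, hz2n⟩ := two_nbrs hwBr (nxt hT w b)
      have mk : ∀ z, T.Adj w z → z ≠ nxt hT w b →
          ∃ ℓ, ℓ ∈ leaves T ∧ C b ℓ ∧ nxt hT w ℓ = z := by
        intro z hz hzn
        obtain ⟨ℓ, hl1, hl2, hl3⟩ := branchLeaf hT hz
        have hwmid : w ∈ (pth hT ℓ b).support := by
          refine mid hT (Ne.symm hl2) hwb ?_
          rw [hl3]; exact hzn
        have hlb : ℓ ≠ b := by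
          intro hEq
          rw [hEq, pth_nil hT] at hwmid
          simp only [SimpleGraph.Walk.support_nil, List.mem_singleton] at hwmid
          exact hwb hwmid
        have hbmem : w ∈ (pth hT b ℓ).support := (mem_pth_rev hT).mpr hwmid
        have hkey : nxt hT b ℓ = nxt hT b w := nxt_split hT hbmem (Ne.symm hwb)
        exact ⟨ℓ, hl1, Or.inr ⟨hlb, by rw [hkey]; exact hwnxt⟩, hl3⟩
      obtain ⟨m1, hm1l, hm1C, hm1n⟩ := mk z1 hz1 hz1n
      obtain ⟨m2, hm2l, hm2C, hm2n⟩ := mk z2 hz2 hz2n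
      refine ⟨m1, m2, ?_, hm1l, hm2l, hm1C, hm2C⟩
      intro hEq
      rw [hEq, hm2n] at hm1n
      exact hzz hm1n.symm
  -- final counting
  set L : V := if g b = ℓ1 then ℓ2 else ℓ1 with hL
  have hLleaf : L ∈ leaves T := by
    rw [hL]; split_ifs <;> assumption
  have hLC : C b L := by
    rw [hL]; split_ifs <;> assumption
  have hLne : g b ≠ L := by
    rw [hL]; split_ifs with h'
    · rw [h']; exact h12
    · exact h'
  have himg : ∀ s ∈ S, g s ∈ leaves T \ {L} := by
    intro s hs
    obtain ⟨hgl, hgC⟩ := hg s hs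
    refine ⟨hgl, ?_⟩
    simp only [Set.mem_singleton_iff]
    intro hEq
    by_cases hsb : s = b
    · rw [hsb] at hEq; exact hLne hEq
    · exact hdisj s hs b hbS hsb L (hEq ▸ hgC) hLC
  have hinj : Set.InjOn g S := by
    intro s hs t ht hEq
    by_contra hst
    exact hdisj s hs t ht hst (g s) (hg s hs).2 (hEq ▸ (hg t ht).2)
  have hLmem : L ∈ leaves T := hLleaf
  have hcount := Set.ncard_diff_singleton_add_one hLmem (Set.toFinite _)
  calc S.ncard = (g '' S).ncard := (Set.ncard_image_of_injOn hinj).symm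
    _ ≤ (leaves T \ {L}).ncard :=
        Set.ncard_le_ncard (by rintro _ ⟨s, hs, rfl⟩; exact himg s hs) (Set.toFinite _)
    _ < (leaves T).ncard := by omega
end

section
/- Let T be a tree, let Q ⊆ V(T) be a mutual-visibility set of T, let u ∈ Q and w ∈ V(T) \ Q. Then the pair {u, w} is Q-visible if and only if either a_Q(w) = u or a_Q(w) ∈ V(T⟨Q⟩) \ Q, where a_Q(w) is the attachment point of w with respect to Q: the unique vertex of the Steiner subtree T⟨Q⟩ closest to w. -/
open SimpleGraph

variable {V : Type*}

section TreeAux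

open Walk

variable {V : Type*} [DecidableEq V] {T : SimpleGraph V}

set_option linter.unusedSectionVars false

lemma myAppendIsPath {u v w : V} {p : T.Walk u v} {q : T.Walk v w}
    (hp : p.IsPath) (hq : q.IsPath)
    (h : ∀ x, x ∈ p.support → x ∈ q.support → x = v) : (p.append q).IsPath := by
  rw [Walk.isPath_def, Walk.support_append, List.nodup_append]
  refine ⟨hp.support_nodup, hq.support_nodup.tail, ?_⟩
  intro x hx y hx' hxy
  subst hxy
  have hxq : x ∈ q.support := List.mem_of_mem_tail hx'
  have hxv := h x hx hxq
  subst hxv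
  have hnd := hq.support_nodup
  rw [q.support_eq_cons] at hnd
  exact (List.nodup_cons.mp hnd).1 hx'

lemma myBypassPath : ∀ {u v : V} {p : T.Walk u v}, p.IsPath → p.bypass = p := by
  intro u v p
  induction p with
  | nil => intro _; rfl
  | cons ha p ih =>
    intro h
    rw [Walk.cons_isPath_iff] at h
    have hb : p.bypass = p := ih h.1
    simp only [Walk.bypass]
    rw [dif_neg (by rw [hb]; exact h.2), hb]

lemma myBypassLt : ∀ {u v : V} (W : T.Walk u v), ¬ W.IsPath → W.bypass.length < W.length := by
  intro u v W
  induction W with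
  | nil => intro h; exact absurd IsPath.nil h
  | @cons u x v ha p ih =>
    intro h
    simp only [Walk.bypass]
    split_ifs with hs
    · calc (p.bypass.dropUntil u hs).length ≤ p.bypass.length := Walk.length_dropUntil_le _ hs
        _ ≤ p.length := Walk.length_bypass_le p
        _ < (Walk.cons ha p).length := by rw [Walk.length_cons]; omega
    · have hnp : ¬ p.IsPath := by
        intro hp
        exact h (hp.cons (by rw [← myBypassPath hp]; exact hs))
      have := ih hnp
      rw [Walk.length_cons, Walk.length_cons]
      omega

/-- In a tree, any path realizes the distance. -/
lemma treePathLength (hT : T.IsTree) {x y : V} {p : T.Walk x y} (hp : p.IsPath) :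
    p.length = T.dist x y := by
  obtain ⟨W, hW⟩ := hT.isConnected.exists_walk_length_eq_dist x y
  have hbl : W.bypass.length = T.dist x y :=
    le_antisymm (le_trans (Walk.length_bypass_le W) (le_of_eq hW)) (SimpleGraph.dist_le _)
  have : (⟨p, hp⟩ : T.Path x y) = ⟨W.bypass, W.bypass_isPath⟩ :=
    hT.IsAcyclic.path_unique _ _
  have hpw : p = W.bypass := congrArg Subtype.val this
  rw [hpw]; exact hbl

lemma treeShortestIsPath (hT : T.IsTree) {x y : V} {W : T.Walk x y}
    (h : W.length = T.dist x y) : W.IsPath := by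
  by_contra hnp
  have h1 := myBypassLt W hnp
  have h2 : T.dist x y ≤ W.bypass.length := SimpleGraph.dist_le _
  omega

/-- In a tree, the unique path is contained in any walk between the same endpoints. -/
lemma treePathSupportSubset (hT : T.IsTree) {x y : V} {p : T.Walk x y} (hp : p.IsPath)
    (W : T.Walk x y) : p.support ⊆ W.support := by
  have : (⟨p, hp⟩ : T.Path x y) = ⟨W.bypass, W.bypass_isPath⟩ :=
    hT.IsAcyclic.path_unique _ _
  have hpw : p = W.bypass := congrArg Subtype.val this
  rw [hpw]; exact Walk.support_bypass_subset W

/-- Distance splits along a vertex of a path in a tree. -/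
lemma treeDistAdd (hT : T.IsTree) {x y : V} {p : T.Walk x y} (hp : p.IsPath) {z : V}
    (hz : z ∈ p.support) : T.dist x z + T.dist z y = T.dist x y := by
  have h1 : (p.takeUntil z hz).length = T.dist x z := treePathLength hT (hp.takeUntil hz)
  have h2 : (p.dropUntil z hz).length = T.dist z y := treePathLength hT (hp.dropUntil hz)
  have h3 := congrArg Walk.length (p.take_spec hz)
  rw [Walk.length_append] at h3
  rw [← h1, ← h2, h3]
  exact treePathLength hT hp

lemma treeMemOfDistAdd (hT : T.IsTree) {x y z : V}
    (h : T.dist x z + T.dist z y = T.dist x y) {p : T.Walk x y} (hp : p.IsPath) :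
    z ∈ p.support := by
  obtain ⟨q1, hq1⟩ := hT.isConnected.exists_walk_length_eq_dist x z
  obtain ⟨q2, hq2⟩ := hT.isConnected.exists_walk_length_eq_dist z y
  have hW : (q1.append q2).length = T.dist x y := by
    rw [Walk.length_append, hq1, hq2, h]
  have hWp : (q1.append q2).IsPath := treeShortestIsPath hT hW
  have : (⟨p, hp⟩ : T.Path x y) = ⟨q1.append q2, hWp⟩ := hT.IsAcyclic.path_unique _ _
  have hpw : p = q1.append q2 := congrArg Subtype.val this
  rw [hpw, Walk.mem_support_append_iff]
  exact Or.inl q1.end_mem_support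

/-- Two vertices on a path in a tree are linearly ordered by distance from the start. -/
lemma treeOrderOnPath (hT : T.IsTree) {x y : V} {p : T.Walk x y} (hp : p.IsPath)
    {z1 z2 : V} (h1 : z1 ∈ p.support) (h2 : z2 ∈ p.support) :
    T.dist x z1 + T.dist z1 z2 = T.dist x z2 ∨ T.dist x z2 + T.dist z2 z1 = T.dist x z1 := by
  have hsp := p.take_spec h1
  have h2' : z2 ∈ (p.takeUntil z1 h1).support ∨ z2 ∈ (p.dropUntil z1 h1).support := by
    rw [← Walk.mem_support_append_iff, hsp]; exact h2
  rcases h2' with h2' | h2'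
  · right
    exact treeDistAdd hT (hp.takeUntil h1) h2'
  · left
    have e1 := treeDistAdd hT hp h1
    have e2 := treeDistAdd hT hp h2
    have e3 := treeDistAdd hT (hp.dropUntil h1) h2'
    omega

end TreeAux

/-- Let `Q` be a mutual-visibility set of a tree `T`, `u ∈ Q`, `w ∉ Q`, and let
`a` be the attachment point of `w` w.r.t. `Q` (the vertex of `T⟨Q⟩` closest to `w`).
Then `{u, w}` is `Q`-visible iff `a = u` or `a ∈ V(T⟨Q⟩) \ Q`. -/
theorem stmt8 (T : SimpleGraph V) (hT : T.IsTree) (Q : Set V)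
    (hQ : MutualVisSet T Q) (u w : V) (hu : u ∈ Q) (hw : w ∉ Q) (a : V)
    (ha : a ∈ (steinerSub T Q).verts)
    (hmin : ∀ y ∈ (steinerSub T Q).verts, T.dist w a ≤ T.dist w y) :
    Visible T Q u w ↔ (a = u ∨ a ∈ (steinerSub T Q).verts \ Q) := by
  classical
  have hc := hT.isConnected
  -- Q is contained in the Steiner subtree
  have Qsub : ∀ q ∈ Q, q ∈ (steinerSub T Q).verts := fun q hq =>
    ⟨q, hq, q, hq, Walk.nil, Walk.IsPath.nil, Walk.start_mem_support _⟩
  -- convexity of the Steiner subtree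
  have convex : ∀ x ∈ (steinerSub T Q).verts, ∀ y ∈ (steinerSub T Q).verts,
      ∀ p : T.Walk x y, p.IsPath → ∀ z ∈ p.support, z ∈ (steinerSub T Q).verts := by
    rintro x ⟨q1, hq1, q2, hq2, px, hpx, hxm⟩ y ⟨q3, hq3, q4, hq4, py, hpy, hym⟩ p hp z hz
    obtain ⟨p13, hp13len⟩ := hc.exists_walk_length_eq_dist q1 q3
    have hp13 : p13.IsPath := treeShortestIsPath hT hp13len
    have hzW := treePathSupportSubset hT hp
      ((px.takeUntil x hxm).reverse.append (p13.append (py.takeUntil y hym))) hz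
    rw [Walk.mem_support_append_iff, Walk.mem_support_append_iff, Walk.support_reverse,
      List.mem_reverse] at hzW
    rcases hzW with h | h | h
    · exact ⟨q1, hq1, q2, hq2, px, hpx, px.support_takeUntil_subset hxm h⟩
    · exact ⟨q1, hq1, q3, hq3, p13, hp13, h⟩
    · exact ⟨q3, hq3, q4, hq4, py, hpy, py.support_takeUntil_subset hym h⟩
  -- the gate property of the attachment point
  have gate : ∀ y ∈ (steinerSub T Q).verts, T.dist w y = T.dist w a + T.dist a y := by
    intro y hy
    obtain ⟨q0, hq0len⟩ := hc.exists_walk_length_eq_dist a w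
    have hq0 : q0.IsPath := treeShortestIsPath hT hq0len
    obtain ⟨p0, hp0len⟩ := hc.exists_walk_length_eq_dist a y
    have hp0 : p0.IsPath := treeShortestIsPath hT hp0len
    have hne : (q0.support.toFinset ∩ p0.support.toFinset).Nonempty :=
      ⟨a, by simp [q0.start_mem_support, p0.start_mem_support]⟩
    obtain ⟨m, hm, hmax⟩ := Finset.exists_max_image _ (fun z => T.dist a z) hne
    rw [Finset.mem_inter, List.mem_toFinset, List.mem_toFinset] at hm
    obtain ⟨hmq, hmp⟩ := hm
    have d1 : T.dist a m + T.dist m w = T.dist a w := treeDistAdd hT hq0 hmq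
    have d2 : T.dist a m + T.dist m y = T.dist a y := treeDistAdd hT hp0 hmp
    have hmv : m ∈ (steinerSub T Q).verts := convex a ha y hy p0 hp0 m hmp
    have h1 : T.dist w a ≤ T.dist w m := hmin m hmv
    have c1 : T.dist w a = T.dist a w := SimpleGraph.dist_comm
    have c2 : T.dist w m = T.dist m w := SimpleGraph.dist_comm
    have hma : T.dist a m = 0 := by omega
    obtain rfl : a = m := (hc.dist_eq_zero_iff).mp hma
    -- now build the path from w to y through a
    have inter : ∀ z, z ∈ (q0.dropUntil a hmq).support →
        z ∈ (p0.dropUntil a hmp).support → z = a := by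
      intro z hz1 hz2
      have hzq : z ∈ q0.support := q0.support_dropUntil_subset hmq hz1
      have hzp : z ∈ p0.support := p0.support_dropUntil_subset hmp hz2
      have hle : T.dist a z ≤ T.dist a a := hmax z (by
        rw [Finset.mem_inter, List.mem_toFinset, List.mem_toFinset]; exact ⟨hzq, hzp⟩)
      have e1 : T.dist a z + T.dist z w = T.dist a w :=
        treeDistAdd hT (hq0.dropUntil hmq) hz1
      have e2 : T.dist a z + T.dist z w = T.dist a w := treeDistAdd hT hq0 hzq
      have : T.dist a z = 0 := by
        have : T.dist a a = 0 := by simp [SimpleGraph.dist_self]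
        omega
      exact ((hc.dist_eq_zero_iff).mp this).symm
    have hWp : ((q0.dropUntil a hmq).reverse.append (p0.dropUntil a hmp)).IsPath := by
      apply myAppendIsPath (hq0.dropUntil hmq).reverse (hp0.dropUntil hmp)
      intro z hz1 hz2
      rw [Walk.support_reverse, List.mem_reverse] at hz1
      exact inter z hz1 hz2
    have hWlen := treePathLength hT hWp
    rw [Walk.length_append, Walk.length_reverse] at hWlen
    have l1 : (q0.dropUntil a hmq).length = T.dist a w :=
      treePathLength hT (hq0.dropUntil hmq)
    have l2 : (p0.dropUntil a hmp).length = T.dist a y :=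
      treePathLength hT (hp0.dropUntil hmp)
    omega
  -- the hard claim: no Q-vertex strictly inside the path from a to u
  have H : a ∉ Q → a ≠ u → ∀ x ∈ Q, ∀ (s : T.Walk a u), s.IsPath →
      x ∈ s.support → x ≠ u → x ≠ a → False := by
    intro haQ hau x hxQ s hs hxs hxu hxa
    obtain ⟨q1, hq1, q2, hq2, pq, hpq, ham⟩ := ha
    have oneSide : ∀ q ∈ Q, ∀ r : T.Walk a q, r.IsPath →
        (∀ z, z ∈ s.support → z ∈ r.support → z = a) → False := by
      intro q hqQ r hr hint
      have hqu : q ≠ u := by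
        intro h
        subst h
        exact hau (hint q s.end_mem_support r.end_mem_support).symm
      have hW : (s.reverse.append r).IsPath := by
        apply myAppendIsPath hs.reverse hr
        intro z hz1 hz2
        rw [Walk.support_reverse, List.mem_reverse] at hz1
        exact hint z hz1 hz2
      obtain ⟨p0, hp0len, hp0int⟩ := hQ u hu q hqQ (Ne.symm hqu)
      have hxp0 : x ∈ p0.support := by
        apply treePathSupportSubset hT hW p0
        rw [Walk.mem_support_append_iff, Walk.support_reverse, List.mem_reverse]
        exact Or.inl hxs
      have hxq : x ≠ q := by
        intro h
        subst h
        exact hxa (hint x hxs r.end_mem_support)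
      exact (hp0int x hxp0 hxu hxq) hxQ
    have key : (∀ z, z ∈ s.support → z ∈ (pq.takeUntil a ham).support → z = a)
        ∨ (∀ z, z ∈ s.support → z ∈ (pq.dropUntil a ham).support → z = a) := by
      by_contra hk
      push_neg at hk
      obtain ⟨⟨z1, hz1s, hz1r, hz1a⟩, ⟨z2, hz2s, hz2r, hz2a⟩⟩ := hk
      have f1 : T.dist q1 z1 + T.dist z1 a = T.dist q1 a :=
        treeDistAdd hT (hpq.takeUntil ham) hz1r
      have f2 : T.dist a z2 + T.dist z2 q2 = T.dist a q2 :=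
        treeDistAdd hT (hpq.dropUntil ham) hz2r
      have g : T.dist q1 a + T.dist a q2 = T.dist q1 q2 := treeDistAdd hT hpq ham
      have tri1 : T.dist q1 q2 ≤ T.dist q1 z1 + T.dist z1 q2 := hc.dist_triangle
      have tri2 : T.dist z1 q2 ≤ T.dist z1 z2 + T.dist z2 q2 := hc.dist_triangle
      have ord := treeOrderOnPath hT hs hz1s hz2s
      have c1 : T.dist z1 a = T.dist a z1 := SimpleGraph.dist_comm
      have c2 : T.dist z2 a = T.dist a z2 := SimpleGraph.dist_comm
      have c3 : T.dist z1 z2 = T.dist z2 z1 := SimpleGraph.dist_comm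
      have pz1 : T.dist a z1 ≠ 0 := fun h0 => hz1a ((hc.dist_eq_zero_iff).mp h0).symm
      have pz2 : T.dist a z2 ≠ 0 := fun h0 => hz2a ((hc.dist_eq_zero_iff).mp h0).symm
      rcases ord with h | h <;> omega
    rcases key with k | k
    · refine oneSide q1 hq1 (pq.takeUntil a ham).reverse (hpq.takeUntil ham).reverse ?_
      intro z hz1 hz2
      rw [Walk.support_reverse, List.mem_reverse] at hz2
      exact k z hz1 hz2
    · exact oneSide q2 hq2 (pq.dropUntil a ham) (hpq.dropUntil ham) k
  constructor
  · rintro ⟨p, hplen, hpint⟩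
    by_contra hcon
    push_neg at hcon
    obtain ⟨hau, hav⟩ := hcon
    have haQ : a ∈ Q := by
      by_contra h
      exact hav ⟨ha, h⟩
    have haw : a ≠ w := fun h => hw (h ▸ haQ)
    have hg := gate u (Qsub u hu)
    have hp : p.IsPath := treeShortestIsPath hT hplen
    have hadd : T.dist u a + T.dist a w = T.dist u w := by
      have c1 : T.dist u a = T.dist a u := SimpleGraph.dist_comm
      have c2 : T.dist a w = T.dist w a := SimpleGraph.dist_comm
      have c3 : T.dist u w = T.dist w u := SimpleGraph.dist_comm
      omega
    have hmem : a ∈ p.support := treeMemOfDistAdd hT hadd hp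
    exact (hpint a hmem hau haw) haQ
  · rintro (hunion | ⟨haV, haQ⟩)
    · obtain ⟨p, hplen⟩ := hc.exists_walk_length_eq_dist u w
      refine ⟨p, hplen, ?_⟩
      intro x hx hxu hxw hxQ
      have hp := treeShortestIsPath hT hplen
      have e := treeDistAdd hT hp hx
      have h1 := hmin x (Qsub x hxQ)
      have pux : T.dist u x ≠ 0 := fun h0 => hxu ((hc.dist_eq_zero_iff).mp h0).symm
      have c1 : T.dist w u = T.dist u w := SimpleGraph.dist_comm
      have c2 : T.dist w x = T.dist x w := SimpleGraph.dist_comm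
      have c3 : T.dist w a = T.dist w u := by rw [hunion]
      omega
    · have hau : a ≠ u := fun h => haQ (h ▸ hu)
      have hg := gate u (Qsub u hu)
      obtain ⟨p1, hp1len⟩ := hc.exists_walk_length_eq_dist u a
      have hp1 := treeShortestIsPath hT hp1len
      obtain ⟨p2, hp2len⟩ := hc.exists_walk_length_eq_dist a w
      have hp2 := treeShortestIsPath hT hp2len
      refine ⟨p1.append p2, ?_, ?_⟩
      · rw [Walk.length_append, hp1len, hp2len]
        have c1 : T.dist u a = T.dist a u := SimpleGraph.dist_comm
        have c2 : T.dist a w = T.dist w a := SimpleGraph.dist_comm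
        have c3 : T.dist u w = T.dist w u := SimpleGraph.dist_comm
        omega
      · intro x hx hxu hxw hxQ
        rw [Walk.mem_support_append_iff] at hx
        rcases hx with hx | hx
        · by_cases hxa : x = a
          · exact haQ (hxa ▸ hxQ)
          · refine H haQ hau x hxQ p1.reverse hp1.reverse ?_ hxu hxa
            rw [Walk.support_reverse, List.mem_reverse]
            exact hx
        · by_cases hxa : x = a
          · exact haQ (hxa ▸ hxQ)
          · have e := treeDistAdd hT hp2 hx
            have h1 := hmin x (Qsub x hxQ)
            have pax : T.dist a x ≠ 0 := fun h0 => hxa ((hc.dist_eq_zero_iff).mp h0).symm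
            have c1 : T.dist w a = T.dist a w := SimpleGraph.dist_comm
            have c2 : T.dist w x = T.dist x w := SimpleGraph.dist_comm
            omega
end

section
/- Every finite tree T is absolute-clear: for every nonempty subset Q ⊆ V(T), whenever there exist multiple maximal absolute c_Q-visible sets, they are pairwise disjoint. -/
open SimpleGraph

variable {V : Type*}

/-- `W ⊆ V \ Q` is a `c_Q`-visible set: every two distinct vertices of `W` are
`Q`-visible, and every pair `{u, w}` with `u ∈ Q`, `w ∈ W` is `Q`-visible. -/
def CQVisible (G : SimpleGraph V) (Q W : Set V) : Prop :=
  W ⊆ Qᶜ ∧ (∀ w₁ ∈ W, ∀ w₂ ∈ W, w₁ ≠ w₂ → Visible G Q w₁ w₂) ∧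
    ∀ u ∈ Q, ∀ w ∈ W, Visible G Q u w

/-- `W` is an absolute `c_Q`-visible set: a `c_Q`-visible set such that `Q`
itself is a mutual-visibility set of `G`. -/
def AbsCQVisible (G : SimpleGraph V) (Q W : Set V) : Prop :=
  CQVisible G Q W ∧ MutualVisSet G Q

/-- `W` is a maximal absolute `c_Q`-visible set: it is not properly contained
in any larger absolute `c_Q`-visible set. -/
def MaxAbsCQVisible (G : SimpleGraph V) (Q W : Set V) : Prop :=
  AbsCQVisible G Q W ∧ ∀ W', AbsCQVisible G Q W' → W ⊆ W' → W' = W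

/-- In a tree, any path between two vertices has length equal to the distance. -/
lemma tree_path_length_eq_dist [DecidableEq V] {T : SimpleGraph V} (hT : T.IsTree) {u v : V}
    (r : T.Walk u v) (hr : r.IsPath) : r.length = T.dist u v := by
  obtain ⟨w, hw⟩ := hT.isConnected.exists_walk_length_eq_dist u v
  have hb : w.bypass.length = T.dist u v :=
    le_antisymm (hw ▸ w.length_bypass_le) (T.dist_le _)
  have := hT.existsUnique_path u v
  obtain ⟨p, -, hp⟩ := this
  have h1 : r = p := hp r hr
  have h2 : w.bypass = p := hp w.bypass w.bypass_isPath
  rw [h1, ← h2, hb]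

/-- Transitivity of visibility through a non-`Q` vertex in a tree. -/
lemma tree_visible_trans [DecidableEq V] {T : SimpleGraph V} (hT : T.IsTree) {Q : Set V} {u x v : V}
    (hx : x ∉ Q) (h1 : Visible T Q u x) (h2 : Visible T Q x v) : Visible T Q u v := by
  obtain ⟨p, hp, hpQ⟩ := h1
  obtain ⟨q, hq, hqQ⟩ := h2
  refine ⟨(p.append q).bypass, tree_path_length_eq_dist hT _ ((p.append q).bypass_isPath), ?_⟩
  intro y hy hyu hyv
  have hy' : y ∈ (p.append q).support := (p.append q).support_bypass_subset hy
  rw [SimpleGraph.Walk.mem_support_append_iff] at hy'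
  rcases hy' with hy' | hy'
  · by_cases hyx : y = x
    · exact hyx ▸ hx
    · exact hpQ y hy' hyu hyx
  · by_cases hyx : y = x
    · exact hyx ▸ hx
    · exact hqQ y hy' hyx hyv

/-- Every finite tree is absolute-clear: for every nonempty `Q ⊆ V(T)`, any two
distinct maximal absolute `c_Q`-visible sets are disjoint. -/
theorem stmt10 [Fintype V] (T : SimpleGraph V) (hT : T.IsTree) :
    ∀ Q : Set V, Q.Nonempty → ∀ W₁ W₂ : Set V,
      MaxAbsCQVisible T Q W₁ → MaxAbsCQVisible T Q W₂ → W₁ ≠ W₂ →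
      Disjoint W₁ W₂ := by
  classical
  intro Q _ W₁ W₂ hW₁ hW₂ hne
  rw [Set.disjoint_left]
  by_contra hcon
  push_neg at hcon
  obtain ⟨x, hx1, hx2⟩ := hcon
  obtain ⟨⟨⟨hsub1, hpair1, hqw1⟩, hmv⟩, hmax1⟩ := hW₁
  obtain ⟨⟨⟨hsub2, hpair2, hqw2⟩, -⟩, hmax2⟩ := hW₂
  have hxQ : x ∉ Q := hsub1 hx1
  have habs : AbsCQVisible T Q (W₁ ∪ W₂) := by
    refine ⟨⟨Set.union_subset hsub1 hsub2, ?_, ?_⟩, hmv⟩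
    · rintro w₁ (h1 | h1) w₂ (h2 | h2) hne'
      · exact hpair1 w₁ h1 w₂ h2 hne'
      · -- w₁ ∈ W₁, w₂ ∈ W₂
        by_cases hw1x : w₁ = x
        · exact hpair2 w₁ (hw1x ▸ hx2) w₂ h2 hne'
        · by_cases hw2x : w₂ = x
          · exact hpair1 w₁ h1 w₂ (hw2x ▸ hx1) hne'
          · exact tree_visible_trans hT hxQ (hpair1 w₁ h1 x hx1 hw1x)
              (hpair2 x hx2 w₂ h2 (Ne.symm hw2x))
      · -- w₁ ∈ W₂, w₂ ∈ W₁
        by_cases hw1x : w₁ = x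
        · exact hpair1 w₁ (hw1x ▸ hx1) w₂ h2 hne'
        · by_cases hw2x : w₂ = x
          · exact hpair2 w₁ h1 w₂ (hw2x ▸ hx2) hne'
          · exact tree_visible_trans hT hxQ (hpair2 w₁ h1 x hx2 hw1x)
              (hpair1 x hx1 w₂ h2 (Ne.symm hw2x))
      · exact hpair2 w₁ h1 w₂ h2 hne'
    · rintro u hu w (hw | hw)
      · exact hqw1 u hu w hw
      · exact hqw2 u hu w hw
  have e1 : W₁ ∪ W₂ = W₁ := hmax1 _ habs Set.subset_union_left
  have e2 : W₁ ∪ W₂ = W₂ := hmax2 _ habs Set.subset_union_right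
  exact hne (e1 ▸ e2)
end

section
/- Let T be a finite tree with at least two edges, and let L(T) be the line graph of T. Then μ(L(T)) = μ(T), i.e., the mutual-visibility number of the line graph of T equals the mutual-visibility number of T. -/
open SimpleGraph

variable {V : Type*}

namespace MVAux
variable {V : Type*} {T : SimpleGraph V}

lemma path_eq (hT : T.IsTree) {u v : V} {p q : T.Walk u v} (hp : p.IsPath) (hq : q.IsPath) :
    p = q :=
  (hT.existsUnique_path u v).unique hp hq

lemma path_length (hT : T.IsTree) {u v : V} {p : T.Walk u v} (hp : p.IsPath) :
    p.length = T.dist u v := by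
  obtain ⟨q, hq, hql⟩ := hT.isConnected.exists_path_of_dist u v
  rw [path_eq hT hp hq, hql]

lemma btw_of_mem_support (hT : T.IsTree) {u v x : V} {p : T.Walk u v} (hp : p.IsPath)
    (hx : x ∈ p.support) : T.dist u x + T.dist x v = T.dist u v := by
  classical
  have h1 : (p.takeUntil x hx).IsPath := hp.takeUntil hx
  have h2 : (p.dropUntil x hx).IsPath := hp.dropUntil hx
  have := congrArg Walk.length (p.take_spec hx)
  rw [Walk.length_append] at this
  rw [← path_length hT hp, ← path_length hT h1, ← path_length hT h2, this]

lemma isPath_append_of {u v x : V} {a : T.Walk u x} {b : T.Walk x v}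
    (ha : a.IsPath) (hb : b.IsPath)
    (hd : ∀ z ∈ a.support, z ∈ b.support → z = x) : (a.append b).IsPath := by
  rw [Walk.isPath_def, Walk.support_append, List.nodup_append]
  have hbc := b.support_eq_cons
  have hbn := hb.support_nodup
  rw [hbc, List.nodup_cons] at hbn
  refine ⟨ha.support_nodup, hbn.2, ?_⟩
  intro z hz y hz' hzy
  subst hzy
  have : z ∈ b.support := by rw [hbc]; exact List.mem_cons_of_mem _ hz'
  exact hbn.1 (hd z hz this ▸ hz')

/-- F4': distance additivity implies membership in (every) path. -/
lemma mem_support_of_btw (hT : T.IsTree) {u v x : V}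
    (hbtw : T.dist u x + T.dist x v = T.dist u v) {p : T.Walk u v} (hp : p.IsPath) :
    x ∈ p.support := by
  obtain ⟨a, ha, hal⟩ := hT.isConnected.exists_path_of_dist u x
  obtain ⟨b, hb, hbl⟩ := hT.isConnected.exists_path_of_dist x v
  have hd : ∀ z ∈ a.support, z ∈ b.support → z = x := by
    intro z hza hzb
    have e1 := btw_of_mem_support hT ha hza
    have e2 := btw_of_mem_support hT hb hzb
    have e3 := hT.isConnected.dist_triangle (u := u) (v := z) (w := v)
    have e4 : T.dist z x = T.dist x z := T.dist_comm ..
    have : T.dist x z = 0 := by omega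
    exact ((hT.isConnected.dist_eq_zero_iff).mp this).symm
  have hab : (a.append b).IsPath := isPath_append_of ha hb hd
  rw [path_eq hT hp hab, Walk.mem_support_append_iff]
  exact Or.inl (Walk.end_mem_support a)

lemma edge_isPath {a b : V} (h : T.Adj a b) : (Walk.cons h Walk.nil).IsPath := by
  simp [Walk.isPath_def, h.ne]

lemma adj_dist (hT : T.IsTree) {r a b : V} (h : T.Adj a b) :
    T.dist r b = T.dist r a + 1 ∨ T.dist r a = T.dist r b + 1 := by
  have hab : T.dist a b = 1 := dist_eq_one_iff_adj.mpr h
  have hba : T.dist b a = 1 := dist_eq_one_iff_adj.mpr h.symm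
  have tri1 := hT.isConnected.dist_triangle (u := r) (v := a) (w := b)
  have tri2 := hT.isConnected.dist_triangle (u := r) (v := b) (w := a)
  have hne : T.dist r a ≠ T.dist r b := by
    intro heq
    obtain ⟨q, hq, hql⟩ := hT.isConnected.exists_path_of_dist r b
    by_cases hmem : a ∈ q.support
    · have hb := btw_of_mem_support hT hq hmem
      omega
    · have hp : (q.append (Walk.cons h.symm Walk.nil)).IsPath := by
        refine isPath_append_of hq (edge_isPath h.symm) ?_
        intro z hz hz'
        simp only [Walk.support_cons, Walk.support_nil, List.mem_cons,
          List.mem_singleton] at hz'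
        rcases hz' with rfl | rfl | hz'
        · rfl
        · exact absurd hz hmem
        · exact absurd hz' List.not_mem_nil
      have := path_length hT hp
      rw [Walk.length_append] at this
      simp only [Walk.length_cons, Walk.length_nil] at this
      omega
  omega

lemma dist_pos_of_ne (hT : T.IsTree) {u v : V} (h : u ≠ v) : 1 ≤ T.dist u v :=
  hT.isConnected.pos_dist_of_ne h

/-- uniqueness of the closer neighbour -/
lemma closer_unique (hT : T.IsTree) {s w m₁ m₂ : V} {d : ℕ} (hd : T.dist s w = d + 1)
    (h₁ : T.Adj m₁ w) (h₂ : T.Adj m₂ w) (hd₁ : T.dist s m₁ = d) (hd₂ : T.dist s m₂ = d) :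
    m₁ = m₂ := by
  obtain ⟨p₁, hp₁, hl₁⟩ := hT.isConnected.exists_path_of_dist s m₁
  obtain ⟨p₂, hp₂, hl₂⟩ := hT.isConnected.exists_path_of_dist s m₂
  have hw₁ : w ∉ p₁.support := by
    intro hw
    have := btw_of_mem_support hT hp₁ hw
    have : T.dist w m₁ = 1 := dist_eq_one_iff_adj.mpr h₁.symm
    omega
  have hw₂ : w ∉ p₂.support := by
    intro hw
    have := btw_of_mem_support hT hp₂ hw
    have : T.dist w m₂ = 1 := dist_eq_one_iff_adj.mpr h₂.symm
    omega
  have hq₁ : (p₁.concat h₁).IsPath := by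
    rw [Walk.concat_eq_append]
    refine isPath_append_of hp₁ (edge_isPath h₁) ?_
    intro z hz hz'
    simp only [Walk.support_cons, Walk.support_nil, List.mem_cons,
      List.mem_singleton] at hz'
    rcases hz' with rfl | rfl | hz'
    · rfl
    · exact absurd hz hw₁
    · exact absurd hz' List.not_mem_nil
  have hq₂ : (p₂.concat h₂).IsPath := by
    rw [Walk.concat_eq_append]
    refine isPath_append_of hp₂ (edge_isPath h₂) ?_
    intro z hz hz'
    simp only [Walk.support_cons, Walk.support_nil, List.mem_cons,
      List.mem_singleton] at hz'
    rcases hz' with rfl | rfl | hz'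
    · rfl
    · exact absurd hz hw₂
    · exact absurd hz' List.not_mem_nil
  have heq : p₁.concat h₁ = p₂.concat h₂ := path_eq hT hq₁ hq₂
  have g₁ : (p₁.concat h₁).getVert d = m₁ := by
    rw [Walk.concat_eq_append, Walk.getVert_append]
    simp [hl₁, hd₁]
  have g₂ : (p₂.concat h₂).getVert d = m₂ := by
    rw [Walk.concat_eq_append, Walk.getVert_append]
    simp [hl₂, hd₂]
  rw [← g₁, ← g₂, heq]

/-- existence of a closer neighbour -/
lemma closer_exists (hT : T.IsTree) {s w : V} {d : ℕ} (hd : T.dist s w = d + 1) :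
    ∃ m, T.Adj m w ∧ T.dist s m = d := by
  obtain ⟨p, hp, hl⟩ := hT.isConnected.exists_path_of_dist s w
  refine ⟨p.getVert d, ?_, ?_⟩
  · have := p.adj_getVert_succ (i := d) (by omega)
    rw [show d + 1 = p.length by omega, Walk.getVert_length] at this
    exact this
  · have hmem : p.getVert d ∈ p.support :=
      Walk.mem_support_iff_exists_getVert.mpr ⟨d, rfl, by omega⟩
    have hb := btw_of_mem_support hT hp hmem
    have hadj : T.Adj (p.getVert d) w := by
      have := p.adj_getVert_succ (i := d) (by omega)
      rwa [show d + 1 = p.length by omega, Walk.getVert_length] at this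
    have : T.dist (p.getVert d) w = 1 := dist_eq_one_iff_adj.mpr hadj
    omega

lemma getVert_one_takeUntil [DecidableEq V] {s u x : V} (p : T.Walk s u) (hx : x ∈ p.support)
    (hxs : x ≠ s) : (p.takeUntil x hx).getVert 1 = p.getVert 1 := by
  have hspec := p.take_spec hx
  have hlen : 1 ≤ (p.takeUntil x hx).length := by
    by_contra hcon
    have h0 : (p.takeUntil x hx).length = 0 := by omega
    have h1 : (p.takeUntil x hx).getVert ((p.takeUntil x hx).length) = x :=
      Walk.getVert_length _
    rw [h0, Walk.getVert_zero] at h1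
    exact hxs h1.symm
  conv_rhs => rw [← hspec]
  rw [Walk.getVert_append]
  rcases Nat.lt_or_ge 1 (p.takeUntil x hx).length with hlt | hge
  · rw [if_pos hlt]
  · have h1 : (p.takeUntil x hx).length = 1 := by omega
    rw [if_neg (by omega), h1, Nat.sub_self, Walk.getVert_zero]
    have h2 : (p.takeUntil x hx).getVert ((p.takeUntil x hx).length) = x :=
      Walk.getVert_length _
    rw [h1] at h2
    exact h2

/-- DIR: if the unique paths from s to u and from s to v leave s in different
directions, then s lies between u and v. -/
lemma dist_add_of_dir_ne (hT : T.IsTree) {s u v : V}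
    {pu : T.Walk s u} {pv : T.Walk s v} (hpu : pu.IsPath) (hpv : pv.IsPath)
    (hdir : pu.getVert 1 ≠ pv.getVert 1) :
    T.dist u v = T.dist u s + T.dist s v := by
  classical
  have hd : ∀ z ∈ pu.support, z ∈ pv.support → z = s := by
    intro z hzu hzv
    by_contra hzs
    have h1 : (pu.takeUntil z hzu).IsPath := hpu.takeUntil hzu
    have h2 : (pv.takeUntil z hzv).IsPath := hpv.takeUntil hzv
    have heq : pu.takeUntil z hzu = pv.takeUntil z hzv := path_eq hT h1 h2
    have g1 := getVert_one_takeUntil pu hzu (fun h => hzs h)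
    have g2 := getVert_one_takeUntil pv hzv (fun h => hzs h)
    rw [← g1, ← g2, heq] at hdir
    exact hdir rfl
  have hrev : pu.reverse.IsPath := hpu.reverse
  have hp : (pu.reverse.append pv).IsPath := by
    refine isPath_append_of hrev hpv ?_
    intro z hz hz'
    rw [Walk.support_reverse, List.mem_reverse] at hz
    exact hd z hz hz'
  have := path_length hT hp
  rw [Walk.length_append, Walk.length_reverse, path_length hT hpu, path_length hT hpv] at this
  rw [← this, SimpleGraph.dist_comm (u := s) (v := u)]

/-- characterisation of the first vertex of the unique path -/
lemma getVert_one_of_btw (hT : T.IsTree) {s u n : V} {p : T.Walk s u} (hp : p.IsPath)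
    (hn : T.Adj s n) (hbtw : T.dist s u = T.dist n u + 1) : p.getVert 1 = n := by
  classical
  have hb : T.dist s n + T.dist n u = T.dist s u := by
    have : T.dist s n = 1 := dist_eq_one_iff_adj.mpr hn
    omega
  have hmem : n ∈ p.support := mem_support_of_btw hT hb hp
  have hns : n ≠ s := hn.ne'
  have h1 : (p.takeUntil n hmem).IsPath := hp.takeUntil hmem
  have heq : p.takeUntil n hmem = Walk.cons hn Walk.nil := path_eq hT h1 (edge_isPath hn)
  have := getVert_one_takeUntil p hmem hns
  rw [heq] at this
  rw [← this]
  rfl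

/-- FAR: beyond every neighbour there is a leaf. -/
lemma exists_leaf_beyond [Finite V] (hT : T.IsTree) {s n : V} (hn : T.Adj s n) :
    ∃ l, l ∈ leaves T ∧ T.dist s l = T.dist n l + 1 := by
  classical
  set A : Set V := {w | T.dist s w = T.dist n w + 1} with hA
  have hnA : n ∈ A := by
    simp only [hA, Set.mem_setOf_eq]
    rw [dist_eq_one_iff_adj.mpr hn, T.dist_self]
  obtain ⟨l, hlA, hlmax⟩ := Set.Finite.exists_maximalFor (fun w => T.dist s w) A
    (Set.toFinite A) ⟨n, hnA⟩
  have hlA' : T.dist s l = T.dist n l + 1 := hlA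
  refine ⟨l, ?_, hlA'⟩
  -- l is a leaf
  have hls : l ≠ s := by
    intro h
    rw [h, T.dist_self] at hlA'
    omega
  have hd1 : 1 ≤ T.dist s l := dist_pos_of_ne hT hls.symm
  obtain ⟨d, hd⟩ : ∃ d, T.dist s l = d + 1 := ⟨T.dist s l - 1, by omega⟩
  obtain ⟨m₀, hm₀, hm₀d⟩ := closer_exists hT hd
  -- every neighbour of l is closer to s
  have hcloser : ∀ m, T.Adj m l → T.dist s m = d := by
    intro m hm
    rcases adj_dist hT (r := s) hm with h1 | h2
    · -- dist s l = dist s m + 1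
      omega
    · -- dist s m = dist s l + 1 : m would be farther and in A
      exfalso
      have hmA : m ∈ A := by
        simp only [hA, Set.mem_setOf_eq]
        have t1 := hT.isConnected.dist_triangle (u := s) (v := n) (w := m)
        have t2 := hT.isConnected.dist_triangle (u := n) (v := l) (w := m)
        have hsn : T.dist s n = 1 := dist_eq_one_iff_adj.mpr hn
        have hlm : T.dist l m = 1 := dist_eq_one_iff_adj.mpr hm.symm
        omega
      have : T.dist s m ≤ T.dist s l := hlmax hmA (by show T.dist s l ≤ T.dist s m; omega)
      omega
  have hset : T.neighborSet l = {m₀} := by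
    ext m
    simp only [mem_neighborSet, Set.mem_singleton_iff]
    constructor
    · intro hm
      exact closer_unique hT hd hm.symm hm₀ (hcloser m hm.symm) hm₀d
    · rintro rfl
      exact hm₀.symm
  simp only [leaves, Set.mem_setOf_eq, hset, Set.ncard_singleton]

/-- side dichotomy for an edge ab -/
lemma side_dichotomy (hT : T.IsTree) {a b : V} (hab : T.Adj a b) (x : V) :
    T.dist a x = T.dist b x + 1 ∨ T.dist b x = T.dist a x + 1 := by
  have h := adj_dist hT (r := x) hab
  have c1 : T.dist x a = T.dist a x := SimpleGraph.dist_comm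
  have c2 : T.dist x b = T.dist b x := SimpleGraph.dist_comm
  omega

/-- CROSS: if x is on the a-side and y is on the b-side of the edge ab, then
the distance from x to y passes through the edge. -/
lemma cross (hT : T.IsTree) {a b x y : V} (hab : T.Adj a b)
    (hx : T.dist b x = T.dist a x + 1) (hy : T.dist a y = T.dist b y + 1) :
    T.dist x y = T.dist x a + 1 + T.dist b y := by
  by_cases hxa : x = a
  · subst hxa
    have c1 : T.dist x x = 0 := T.dist_self
    omega
  · have hya : y ≠ a := by
      intro h
      rw [h] at hy
      have c1 : T.dist a a = 0 := T.dist_self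
      have c2 : T.dist b a = 1 := dist_eq_one_iff_adj.mpr hab.symm
      omega
    obtain ⟨px, hpx, _⟩ := hT.isConnected.exists_path_of_dist a x
    obtain ⟨py, hpy, _⟩ := hT.isConnected.exists_path_of_dist a y
    have hgy : py.getVert 1 = b :=
      getVert_one_of_btw hT hpy hab hy
    have hgx : px.getVert 1 ≠ b := by
      intro h
      have hmem : b ∈ px.support := by
        rw [← h]
        exact Walk.mem_support_iff_exists_getVert.mpr ⟨1, rfl, by
          have : 1 ≤ px.length := by
            rw [path_length hT hpx]
            exact dist_pos_of_ne hT (fun hh => hxa hh.symm)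
          omega⟩
      have := btw_of_mem_support hT hpx hmem
      have hab1 : T.dist a b = 1 := dist_eq_one_iff_adj.mpr hab
      omega
    have hxy := dist_add_of_dir_ne hT hpx hpy (by rw [hgy]; exact hgx)
    omega

/-- walks not using the edge ab stay on one side -/
lemma side_of_walk_avoiding (hT : T.IsTree) {a b : V} (hab : T.Adj a b) {x y : V}
    (w : T.Walk x y) (hw : s(a, b) ∉ w.edges)
    (hx : T.dist b x = T.dist a x + 1) : T.dist b y = T.dist a y + 1 := by
  induction w with
  | nil => exact hx
  | @cons u u' y' hadj q ih =>
    simp only [Walk.edges_cons, List.mem_cons] at hw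
    push_neg at hw
    refine ih hw.2 ?_
    rcases side_dichotomy hT hab u' with h1 | h2
    · -- u' on b-side : contradiction
      exfalso
      have := cross hT hab hx h1
      have hd : T.dist u u' = 1 := dist_eq_one_iff_adj.mpr hadj
      have h0 : T.dist u a = 0 := by omega
      have h0' : T.dist b u' = 0 := by omega
      have hua : u = a := (hT.isConnected.dist_eq_zero_iff).mp h0
      have hub : u' = b := ((hT.isConnected.dist_eq_zero_iff).mp h0').symm
      exact hw.1 (by rw [hua, hub])
    · exact h2

/-- internal vertices of paths have at least two neighbours -/
lemma two_le_ncard_neighbors_of_internal [Finite V] (hT : T.IsTree) {u v x : V} {p : T.Walk u v}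
    (hp : p.IsPath) (hx : x ∈ p.support) (hxu : x ≠ u) (hxv : x ≠ v) :
    2 ≤ (T.neighborSet x).ncard := by
  have hb := btw_of_mem_support hT hp hx
  have hi : 1 ≤ T.dist u x := dist_pos_of_ne hT hxu.symm
  have hj : 1 ≤ T.dist x v := dist_pos_of_ne hT hxv
  have hdux : T.dist u x = (T.dist u x - 1) + 1 := by omega
  obtain ⟨m₁, hm₁, hm₁d⟩ := closer_exists hT hdux
  have hdvx : T.dist v x = (T.dist v x - 1) + 1 := by
    have : T.dist v x = T.dist x v := SimpleGraph.dist_comm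
    omega
  obtain ⟨m₂, hm₂, hm₂d⟩ := closer_exists hT hdvx
  have hne : m₁ ≠ m₂ := by
    intro h
    subst h
    have t1 := hT.isConnected.dist_triangle (u := u) (v := m₁) (w := v)
    have hbx := hb
    have c1 : T.dist v m₁ = T.dist v x - 1 := hm₂d
    have c2 : T.dist x v = T.dist v x := SimpleGraph.dist_comm
    have c3 : T.dist m₁ v = T.dist v m₁ := SimpleGraph.dist_comm
    omega
  have hsub : {m₁, m₂} ⊆ T.neighborSet x := by
    intro z hz
    rcases hz with rfl | hz
    · exact hm₁.symm
    · rw [Set.mem_singleton_iff] at hz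
      subst hz
      exact hm₂.symm
  calc 2 = ({m₁, m₂} : Set V).ncard := (Set.ncard_pair hne).symm
    _ ≤ (T.neighborSet x).ncard := Set.ncard_le_ncard hsub (Set.toFinite _)

lemma internal_not_leaf [Finite V] (hT : T.IsTree) {u v x : V} {p : T.Walk u v}
    (hp : p.IsPath) (hx : x ∈ p.support) (hxu : x ≠ u) (hxv : x ≠ v) :
    x ∉ leaves T := by
  have := two_le_ncard_neighbors_of_internal hT hp hx hxu hxv
  simp only [leaves, Set.mem_setOf_eq]
  omega

/-- the leaves of a tree form a mutual-visibility set -/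
lemma leaves_mutualVis [Finite V] (hT : T.IsTree) : MutualVisSet T (leaves T) := by
  intro u hu v hv huv
  obtain ⟨p, hp, hl⟩ := hT.isConnected.exists_path_of_dist u v
  exact ⟨p, hl, fun x hx hxu hxv => internal_not_leaf hT hp hx hxu hxv⟩

lemma exists_adj_pair [Finite V] (h2 : 1 ≤ T.edgeSet.ncard) : ∃ a b : V, T.Adj a b := by
  have hne : T.edgeSet.Nonempty := by
    rw [← Set.ncard_pos (Set.toFinite _)]
    omega
  obtain ⟨e, he⟩ := hne
  induction e with
  | h a b => exact ⟨a, b, he⟩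

lemma exists_ne_of_edges [Finite V] (h2 : 1 ≤ T.edgeSet.ncard) (s : V) : ∃ t, t ≠ s := by
  obtain ⟨a, b, hab⟩ := exists_adj_pair h2
  by_cases h : a = s
  · exact ⟨b, by rintro rfl; exact hab.ne (h ▸ rfl)⟩
  · exact ⟨a, h⟩

lemma exists_neighbor [Finite V] (hT : T.IsTree) (h2 : 1 ≤ T.edgeSet.ncard) (s : V) :
    ∃ n, T.Adj s n := by
  obtain ⟨t, ht⟩ := exists_ne_of_edges h2 s
  obtain ⟨p, hp, hl⟩ := hT.isConnected.exists_path_of_dist s t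
  have hnil : ¬p.Nil := by
    rw [Walk.nil_iff_length_eq, hl]
    have := dist_pos_of_ne hT (Ne.symm ht)
    omega
  exact ⟨p.getVert 1, p.adj_snd hnil⟩

lemma leaf_spec [Finite V] {u : V} (hu : u ∈ leaves T) : ∃ n, T.neighborSet u = {n} := by
  simp only [leaves, Set.mem_setOf_eq] at hu
  exact (Set.ncard_eq_one).mp hu

/-- the first step from a leaf is to its unique neighbour, and it lies between
the leaf and any other vertex -/
lemma leaf_btw_neighbor (hT : T.IsTree) {u n c : V} (hn : T.neighborSet u = {n})
    (hc : c ≠ u) : T.dist u n + T.dist n c = T.dist u c := by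
  obtain ⟨p, hp, hl⟩ := hT.isConnected.exists_path_of_dist u c
  have h1 : 1 ≤ p.length := by
    rw [hl]; exact dist_pos_of_ne hT (Ne.symm hc)
  have hnil : ¬p.Nil := by rw [Walk.nil_iff_length_eq]; omega
  have hadj : T.Adj u (p.getVert 1) := p.adj_snd hnil
  have hmemn : p.getVert 1 ∈ T.neighborSet u := hadj
  rw [hn, Set.mem_singleton_iff] at hmemn
  have hmem : n ∈ p.support :=
    Walk.mem_support_iff_exists_getVert.mpr ⟨1, hmemn, by omega⟩
  exact btw_of_mem_support hT hp hmem

lemma no_adj_leaves [Finite V] (hT : T.IsTree) (h2 : 2 ≤ T.edgeSet.ncard) {u v : V}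
    (huv : T.Adj u v) (hu : u ∈ leaves T) (hv : v ∈ leaves T) : False := by
  obtain ⟨nu, hnu⟩ := leaf_spec hu
  obtain ⟨nv, hnv⟩ := leaf_spec hv
  have hnuv : nu = v := by
    have : v ∈ T.neighborSet u := huv
    rw [hnu] at this; exact this.symm
  have hnvu : nv = u := by
    have : u ∈ T.neighborSet v := huv.symm
    rw [hnv] at this; exact this.symm
  rw [hnuv] at hnu
  rw [hnvu] at hnv
  have hexists : ∃ e ∈ T.edgeSet, e ≠ s(u, v) := by
    by_contra hcon
    push_neg at hcon
    have hsub : T.edgeSet ⊆ {s(u, v)} := fun e he => hcon e he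
    have := Set.ncard_le_ncard hsub (Set.toFinite _)
    rw [Set.ncard_singleton] at this
    omega
  obtain ⟨e, he, hene⟩ := hexists
  induction e with
  | h c d =>
    have hcd : T.Adj c d := he
    have hcu : ∀ x y : V, T.Adj x y → s(x,y) ≠ s(u,v) → x ≠ u := by
      intro x y hxy hne hxu
      rw [hxu] at hxy hne
      have : y ∈ T.neighborSet u := hxy
      rw [hnu, Set.mem_singleton_iff] at this
      exact hne (by rw [this])
    have hcv : ∀ x y : V, T.Adj x y → s(x,y) ≠ s(u,v) → x ≠ v := by
      intro x y hxy hne hxv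
      rw [hxv] at hxy hne
      have : y ∈ T.neighborSet v := hxy
      rw [hnv, Set.mem_singleton_iff] at this
      rw [this] at hne
      exact hne (Sym2.eq_swap)
    have hcu' : c ≠ u := hcu c d hcd hene
    have hcv' : c ≠ v := hcv c d hcd hene
    have e1 : T.dist u v + T.dist v c = T.dist u c := by
      have := leaf_btw_neighbor hT hnu hcu'
      exact this
    have e2 : T.dist v u + T.dist u c = T.dist v c := by
      have := leaf_btw_neighbor hT hnv hcv'
      exact this
    have c1 : T.dist u v = 1 := dist_eq_one_iff_adj.mpr huv
    have c2 : T.dist v u = 1 := dist_eq_one_iff_adj.mpr huv.symm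
    omega

lemma exists_escort [Finite V] (hT : T.IsTree) (h2 : 1 ≤ T.edgeSet.ncard) {S : Set V}
    (hS : MutualVisSet T S) {s : V} (hs : s ∈ S) :
    ∃ l ∈ leaves T, ∀ x ∈ S, x ≠ s → T.dist l x = T.dist l s + T.dist s x := by
  classical
  by_cases hleaf : s ∈ leaves T
  · refine ⟨s, hleaf, fun x hx hxs => ?_⟩
    have : T.dist s s = 0 := T.dist_self
    omega
  · -- all members of S \ {s} leave s in the same direction
    have claim_dir : ∀ x ∈ S, x ≠ s → ∀ y ∈ S, y ≠ s →
        ∀ (px : T.Walk s x) (py : T.Walk s y), px.IsPath → py.IsPath →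
        px.getVert 1 = py.getVert 1 := by
      intro x hx hxs y hy hys px py hpx hpy
      by_contra hne
      have hxy : x ≠ y := by
        rintro rfl
        rw [path_eq hT hpx hpy] at hne
        exact hne rfl
      have hbtw := dist_add_of_dir_ne hT hpx hpy hne
      obtain ⟨w, hwl, hwS⟩ := hS x hx y hy hxy
      have hwp : w.IsPath := w.isPath_of_length_eq_dist hwl
      have hsw : s ∈ w.support := by
        refine mem_support_of_btw hT ?_ hwp
        have c1 : T.dist x s = T.dist s x := SimpleGraph.dist_comm
        omega
      exact hwS s hsw (Ne.symm hxs) (Ne.symm hys) hs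
    by_cases hS' : ∃ x ∈ S, x ≠ s
    · obtain ⟨x0, hx0, hx0s⟩ := hS'
      obtain ⟨p0, hp0, _⟩ := hT.isConnected.exists_path_of_dist s x0
      set d0 := p0.getVert 1 with hd0
      have hd0adj : T.Adj s d0 := by
        refine p0.adj_snd ?_
        rw [Walk.nil_iff_length_eq]
        have h1 : p0.length = T.dist s x0 := path_length hT hp0
        have := dist_pos_of_ne hT (Ne.symm hx0s)
        omega
      -- s is not a leaf: find a neighbour different from d0
      have : ∃ n, T.Adj s n ∧ n ≠ d0 := by
        by_contra hcon
        push_neg at hcon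
        have hset : T.neighborSet s = {d0} := by
          ext m
          simp only [mem_neighborSet, Set.mem_singleton_iff]
          exact ⟨fun hm => hcon m hm, fun hm => hm ▸ hd0adj⟩
        exact hleaf (by simp only [leaves, Set.mem_setOf_eq, hset, Set.ncard_singleton])
      obtain ⟨n, hn, hnd0⟩ := this
      obtain ⟨l, hl, hldist⟩ := exists_leaf_beyond hT hn
      refine ⟨l, hl, fun x hx hxs => ?_⟩
      obtain ⟨pl, hpl, _⟩ := hT.isConnected.exists_path_of_dist s l
      obtain ⟨px, hpx, _⟩ := hT.isConnected.exists_path_of_dist s x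
      have hgl : pl.getVert 1 = n := getVert_one_of_btw hT hpl hn hldist
      have hgx : px.getVert 1 = d0 := claim_dir x hx hxs x0 hx0 hx0s px p0 hpx hp0
      have := dist_add_of_dir_ne hT hpl hpx (by rw [hgl, hgx]; exact hnd0)
      have c1 : T.dist l s = T.dist s l := SimpleGraph.dist_comm
      omega
    · push_neg at hS'
      obtain ⟨n, hn⟩ := exists_neighbor hT h2 s
      obtain ⟨l, hl, _⟩ := exists_leaf_beyond hT hn
      exact ⟨l, hl, fun x hx hxs => absurd (hS' x hx) (by exact fun h => hxs h)⟩

lemma mv_ncard_le_leaves [Finite V] (hT : T.IsTree) (h2 : 1 ≤ T.edgeSet.ncard) {S : Set V}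
    (hS : MutualVisSet T S) : S.ncard ≤ (leaves T).ncard := by
  classical
  have hch : ∀ s ∈ S, ∃ l, l ∈ leaves T ∧
      ∀ x ∈ S, x ≠ s → T.dist l x = T.dist l s + T.dist s x := by
    intro s hs
    obtain ⟨l, hl, hprop⟩ := exists_escort hT h2 hS hs
    exact ⟨l, hl, hprop⟩
  choose! f hf1 hf2 using hch
  have hinj : Set.InjOn f S := by
    intro s hs s' hs' heq
    by_contra hne
    have e1 := hf2 s hs s' hs' (fun h => hne h.symm)
    have e2 := hf2 s' hs' s hs (fun h => hne h)
    rw [heq] at e1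
    have c1 : T.dist s s' = T.dist s' s := SimpleGraph.dist_comm
    have h0 : T.dist s s' = 0 := by omega
    exact hne ((hT.isConnected.dist_eq_zero_iff).mp h0)
  calc S.ncard = (f '' S).ncard := (Set.ncard_image_of_injOn hinj).symm
    _ ≤ (leaves T).ncard := Set.ncard_le_ncard
        (by rintro _ ⟨s, hs, rfl⟩; exact hf1 s hs) (Set.toFinite _)

/-! ### Line graph walks -/

lemma dist_le_one_of_mem_edge (hT : T.IsTree) {e : Sym2 V} (he : e ∈ T.edgeSet)
    {x y : V} (hx : x ∈ e) (hy : y ∈ e) : T.dist x y ≤ 1 := by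
  induction e with
  | h a b =>
    have hab : T.Adj a b := he
    rw [Sym2.mem_iff] at hx hy
    rcases hx with rfl | rfl <;> rcases hy with rfl | rfl
    · rw [T.dist_self]; omega
    · rw [dist_eq_one_iff_adj.mpr hab]
    · rw [dist_eq_one_iff_adj.mpr hab.symm]
    · rw [T.dist_self]; omega

/-- lower bound: a walk in the line graph between two edges gives a bound on
tree distances between their endpoints -/
lemma dist_le_lineWalk (hT : T.IsTree) {e f : T.edgeSet} (W : (T.lineGraph).Walk e f)
    {x y : V} (hx : x ∈ (e : Sym2 V)) (hy : y ∈ (f : Sym2 V)) :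
    T.dist x y ≤ W.length + 1 := by
  induction W generalizing x with
  | nil => have := dist_le_one_of_mem_edge hT (Subtype.mem _) hx hy; omega
  | @cons e e' f hadj W ih =>
    obtain ⟨hne, z, hz1, hz2⟩ := lineGraph_adj_iff_exists.mp hadj
    have h1 : T.dist x z ≤ 1 := dist_le_one_of_mem_edge hT (Subtype.mem _) hx hz1
    have h2 : T.dist z y ≤ W.length + 1 := ih hz2 hy
    have tri := hT.isConnected.dist_triangle (u := x) (v := z) (w := y)
    simp only [Walk.length_cons]
    omega

/-- the walk in the line graph induced by a path in the tree -/
lemma exists_lineWalk (hT : T.IsTree) :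
    ∀ {x y : V} (p : T.Walk x y), p.IsPath → 1 ≤ p.length →
    ∀ (e f : T.edgeSet), (e : Sym2 V) = s(x, p.getVert 1) →
      (f : Sym2 V) = s(p.getVert (p.length - 1), y) →
    ∃ W : (T.lineGraph).Walk e f, W.length + 1 = p.length ∧
      ∀ g ∈ W.support, (g : Sym2 V) ∈ p.edges := by
  intro x y p
  induction p with
  | nil =>
    intro _ h
    simp only [Walk.length_nil] at h
    exact absurd h (by omega)
  | @cons x w y hadj q ih =>
    intro hp hlen e f he hf
    have hq : q.IsPath := hp.of_cons
    have hxq : x ∉ q.support := ((Walk.cons_isPath_iff hadj q).mp hp).2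
    have hgv1 : (Walk.cons hadj q).getVert 1 = w := (Walk.getVert_cons_succ (n := 0) q hadj).trans (Walk.getVert_zero q)
    rw [hgv1] at he
    by_cases hq0 : q.length = 0
    · have hwy : w = y := Walk.eq_of_length_eq_zero hq0
      have hidx : (Walk.cons hadj q).length - 1 = 0 := by
        simp [Walk.length_cons, hq0]
      rw [hidx, Walk.getVert_zero] at hf
      have hef : e = f := by
        apply Subtype.ext
        rw [he, hf, hwy]
      subst hef
      refine ⟨Walk.nil, by simp [hq0], ?_⟩
      intro g hg
      simp only [Walk.support_nil, List.mem_singleton] at hg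
      subst hg
      rw [he]
      simp [Walk.edges_cons]
    · have hq1 : 1 ≤ q.length := by omega
      have hz1adj : T.Adj w (q.getVert 1) := by
        have := q.adj_getVert_succ (i := 0) (by omega)
        rwa [Walk.getVert_zero] at this
      set e' : T.edgeSet := ⟨s(w, q.getVert 1), hz1adj⟩ with he'
      have hfq : (f : Sym2 V) = s(q.getVert (q.length - 1), y) := by
        have hn : (Walk.cons hadj q).length - 1 = q.length := by
          simp [Walk.length_cons]
        rw [hf, hn, Walk.getVert_cons q hadj (by omega)]
      obtain ⟨W', hW'len, hW'supp⟩ := ih hq hq1 e' f rfl hfq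
      have hxz1 : x ≠ q.getVert 1 := by
        intro hcon
        exact hxq (hcon ▸ Walk.mem_support_iff_exists_getVert.mpr ⟨1, rfl, by omega⟩)
      have hnee' : e ≠ e' := by
        intro hcon
        have hcc : (e : Sym2 V) = (e' : Sym2 V) := by rw [hcon]
        rw [he, he'] at hcc
        rw [Sym2.eq_iff] at hcc
        rcases hcc with ⟨h1, h2⟩ | ⟨h1, h2⟩
        · exact hadj.ne h1
        · exact hxz1 h1
      have hadjL : (T.lineGraph).Adj e e' := by
        rw [lineGraph_adj_iff_exists]
        exact ⟨hnee', w, by rw [he]; simp, by rw [he']; simp⟩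
      refine ⟨Walk.cons hadjL W', ?_, ?_⟩
      · simp only [Walk.length_cons]
        omega
      · intro g hg
        simp only [Walk.support_cons, List.mem_cons] at hg
        rcases hg with rfl | hg
        · rw [he]
          simp [Walk.edges_cons]
        · exact List.mem_cons_of_mem _ (hW'supp g hg)

/-- the pendant edges form a mutual-visibility set of the line graph -/
lemma line_mv_pendant [Finite V] (hT : T.IsTree) (h2 : 2 ≤ T.edgeSet.ncard) :
    ∃ F : Set T.edgeSet, MutualVisSet T.lineGraph F ∧ F.ncard = (leaves T).ncard := by
  classical
  have hch : ∀ u ∈ leaves T, ∃ n, T.neighborSet u = {n} := fun u hu => leaf_spec hu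
  choose! nb hnb using hch
  have hAdj : ∀ u ∈ leaves T, T.Adj u (nb u) := by
    intro u hu
    have : nb u ∈ T.neighborSet u := by rw [hnb u hu]; rfl
    exact this
  obtain ⟨a₀, b₀, hab₀⟩ := exists_adj_pair (T := T) (by omega)
  set f : V → T.edgeSet := fun u =>
    if h : T.Adj u (nb u) then ⟨s(u, nb u), h⟩ else ⟨s(a₀, b₀), hab₀⟩ with hfdef
  have hfval : ∀ u ∈ leaves T, (f u : Sym2 V) = s(u, nb u) := by
    intro u hu
    simp only [hfdef, dif_pos (hAdj u hu)]
  have hinj : Set.InjOn f (leaves T) := by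
    intro u hu v hv heq
    by_contra hne
    have : (f u : Sym2 V) = (f v : Sym2 V) := by rw [heq]
    rw [hfval u hu, hfval v hv, Sym2.eq_iff] at this
    rcases this with ⟨ha1, _⟩ | ⟨ha1, ha2⟩
    · exact hne ha1
    · have : T.Adj u v := by
        have := hAdj u hu
        rwa [ha2] at this
      exact no_adj_leaves hT h2 this hu hv
  refine ⟨f '' leaves T, ?_, Set.ncard_image_of_injOn hinj⟩
  rintro E1 ⟨u, hu, rfl⟩ E2 ⟨v, hv, rfl⟩ hE
  have huv : u ≠ v := fun h => hE (h ▸ rfl)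
  obtain ⟨p, hp, hpl⟩ := hT.isConnected.exists_path_of_dist u v
  set k := T.dist u v with hk
  have hk1 : 1 ≤ k := dist_pos_of_ne hT huv
  have hk2 : 2 ≤ k := by
    by_contra hcon
    have hk1' : k = 1 := by omega
    have : T.Adj u v := dist_eq_one_iff_adj.mp (show T.dist u v = 1 by rw [← hk, hk1'])
    exact no_adj_leaves hT h2 this hu hv
  have hnil : ¬p.Nil := by rw [Walk.nil_iff_length_eq]; omega
  have hadj1 : T.Adj u (p.getVert 1) := p.adj_snd hnil
  have hg1 : p.getVert 1 = nb u := by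
    have : p.getVert 1 ∈ T.neighborSet u := hadj1
    rwa [hnb u hu, Set.mem_singleton_iff] at this
  have he : (f u : Sym2 V) = s(u, p.getVert 1) := by rw [hfval u hu, hg1]
  have hadjlast : T.Adj (p.getVert (p.length - 1)) v := by
    have := p.adj_getVert_succ (i := p.length - 1) (by omega)
    rw [show p.length - 1 + 1 = p.length by omega, Walk.getVert_length] at this
    exact this
  have hglast : p.getVert (p.length - 1) = nb v := by
    have : p.getVert (p.length - 1) ∈ T.neighborSet v := hadjlast.symm
    rwa [hnb v hv, Set.mem_singleton_iff] at this
  have hf : (f v : Sym2 V) = s(p.getVert (p.length - 1), v) := by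
    rw [hfval v hv, hglast, Sym2.eq_swap]
  obtain ⟨W, hWlen, hWsupp⟩ := exists_lineWalk hT p hp (by omega) (f u) (f v) he hf
  have hWdist : W.length = (T.lineGraph).dist (f u) (f v) := by
    have hle : (T.lineGraph).dist (f u) (f v) ≤ W.length := SimpleGraph.dist_le W
    have hreach : (T.lineGraph).Reachable (f u) (f v) := ⟨W⟩
    obtain ⟨W0, hW0⟩ := hreach.exists_walk_length_eq_dist
    have humem : u ∈ ((f u) : Sym2 V) := by rw [hfval u hu]; simp
    have hvmem : v ∈ ((f v) : Sym2 V) := by rw [hfval v hv]; simp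
    have := dist_le_lineWalk hT W0 humem hvmem
    rw [hW0] at this
    omega
  refine ⟨W, hWdist.symm ▸ rfl, ?_⟩
  rintro g hg hgE1 hgE2 ⟨t, ht, rfl⟩
  have hgval : (f t : Sym2 V) = s(t, nb t) := hfval t ht
  have hedge : s(t, nb t) ∈ p.edges := by rw [← hgval]; exact hWsupp _ hg
  have htsupp : t ∈ p.support := Walk.fst_mem_support_of_mem_edges p hedge
  have htu : t ≠ u := by
    rintro rfl
    exact hgE1 rfl
  have htv : t ≠ v := by
    rintro rfl
    exact hgE2 rfl
  exact internal_not_leaf hT hp htsupp htu htv ht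

/-! ### Part 4 : upper bound for the line graph -/

lemma sym2_nonempty {W : Type*} (e : Sym2 W) : ∃ x, x ∈ e := by
  induction e with
  | h a b => exact ⟨a, by simp⟩

lemma edge_same_side (hT : T.IsTree) {a b c d : V} (hab : T.Adj a b) (hcd : T.Adj c d)
    (hne : s(c, d) ≠ s(a, b)) (hc : T.dist a c = T.dist b c + 1) :
    T.dist a d = T.dist b d + 1 := by
  rcases side_dichotomy hT hab d with h | h
  · exact h
  · exfalso
    have hcross := cross hT hab h hc
    have hdc : T.dist d c = 1 := dist_eq_one_iff_adj.mpr hcd.symm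
    have h0 : T.dist d a = 0 := by omega
    have h0' : T.dist b c = 0 := by omega
    have hda : d = a := (hT.isConnected.dist_eq_zero_iff).mp h0
    have hbc : b = c := (hT.isConnected.dist_eq_zero_iff).mp h0'
    apply hne
    rw [hda, ← hbc, Sym2.eq_swap]

lemma edge_side_all (hT : T.IsTree) {a b : V} (hab : T.Adj a b) (g : T.edgeSet)
    (hne : (g : Sym2 V) ≠ s(a, b)) {z : V} (hz : z ∈ (g : Sym2 V))
    (hzs : T.dist a z = T.dist b z + 1) :
    ∀ x ∈ (g : Sym2 V), T.dist a x = T.dist b x + 1 := by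
  obtain ⟨gv, hgv⟩ := g
  induction gv with
  | h c d =>
    have hcd : T.Adj c d := hgv
    simp only [Sym2.mem_iff] at hz ⊢
    intro x hx
    rcases hz with rfl | rfl <;> rcases hx with rfl | rfl
    · exact hzs
    · exact edge_same_side hT hab hcd hne hzs
    · exact edge_same_side hT hab hcd.symm (by rwa [Sym2.eq_swap]) hzs
    · exact hzs

lemma lwalk_side (hT : T.IsTree) {a b : V} (hab : T.Adj a b) {e : T.edgeSet}
    (heval : (e : Sym2 V) = s(a, b)) {g₁ g₂ : T.edgeSet}
    (W : (T.lineGraph).Walk g₁ g₂) (he : e ∉ W.support)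
    (h₁ : ∀ x ∈ (g₁ : Sym2 V), T.dist a x = T.dist b x + 1) :
    ∀ x ∈ (g₂ : Sym2 V), T.dist a x = T.dist b x + 1 := by
  induction W with
  | nil => exact h₁
  | @cons g₁ g g₂ hadjL W ih =>
    simp only [Walk.support_cons, List.mem_cons] at he
    push_neg at he
    refine ih he.2 ?_
    obtain ⟨hne, z, hz1, hz2⟩ := lineGraph_adj_iff_exists.mp hadjL
    have hgne : (g : Sym2 V) ≠ s(a, b) := by
      intro hcon
      apply he.2
      have hge : g = e := Subtype.ext (by rw [hcon, heval])
      rw [← hge]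
      exact Walk.start_mem_support W
    exact edge_side_all hT hab g hgne hz2 (h₁ z hz1)

lemma no_both_sides [Finite V] (hT : T.IsTree) {F : Set T.edgeSet}
    (hF : MutualVisSet T.lineGraph F) {e f g : T.edgeSet} (he : e ∈ F) (hf : f ∈ F)
    (hg : g ∈ F) (hfe : f ≠ e) (hge : g ≠ e) {a b : V} (hab : T.Adj a b)
    (heval : (e : Sym2 V) = s(a, b))
    (hfside : ∀ x ∈ (f : Sym2 V), T.dist b x = T.dist a x + 1)
    (hgside : ∀ x ∈ (g : Sym2 V), T.dist a x = T.dist b x + 1) : False := by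
  have hfg : f ≠ g := by
    rintro rfl
    obtain ⟨x, hx⟩ := sym2_nonempty (f : Sym2 V)
    have := hfside x hx
    have := hgside x hx
    omega
  obtain ⟨W, hWlen, hWint⟩ := hF f hf g hg hfg
  by_cases heW : e ∈ W.support
  · exact (hWint e heW (Ne.symm hfe) (Ne.symm hge)) he
  · have := lwalk_side hT hab.symm (by rw [heval, Sym2.eq_swap]) W heW hfside
    obtain ⟨x, hx⟩ := sym2_nonempty (g : Sym2 V)
    have h1 := this x hx
    have h2 := hgside x hx
    omega

lemma line_exists_escort [Finite V] (hT : T.IsTree) {F : Set T.edgeSet}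
    (hF : MutualVisSet T.lineGraph F) {e : T.edgeSet} (he : e ∈ F) :
    ∃ l ∈ leaves T, ∃ a b : V, T.Adj a b ∧ (e : Sym2 V) = s(a, b) ∧
      T.dist b l = T.dist a l + 1 ∧
      ∀ f ∈ F, f ≠ e → ∀ x ∈ (f : Sym2 V), T.dist a x = T.dist b x + 1 := by
  classical
  obtain ⟨ev, hev⟩ := e
  obtain ⟨a₀, b₀, rfl⟩ : ∃ a b, ev = s(a, b) := by
    induction ev with
    | h a b => exact ⟨a, b, rfl⟩
  have hab₀ : T.Adj a₀ b₀ := hev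
  by_cases hcase : ∀ f ∈ F, f ≠ ⟨s(a₀, b₀), hev⟩ → ∀ x ∈ (f : Sym2 V),
      T.dist a₀ x = T.dist b₀ x + 1
  · obtain ⟨l, hl, hld⟩ := exists_leaf_beyond hT (hab₀.symm)
    exact ⟨l, hl, a₀, b₀, hab₀, rfl, by
      have c1 : T.dist b₀ l = T.dist a₀ l + 1 := hld
      exact c1, hcase⟩
  · push_neg at hcase
    obtain ⟨f₀, hf₀F, hf₀ne, x₀, hx₀, hx₀side⟩ := hcase
    have hx₀a : T.dist b₀ x₀ = T.dist a₀ x₀ + 1 := by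
      rcases side_dichotomy hT hab₀ x₀ with h | h
      · exact absurd h hx₀side
      · exact h
    have hf₀ne' : (f₀ : Sym2 V) ≠ s(a₀, b₀) := by
      intro hcon
      exact hf₀ne (Subtype.ext hcon)
    have hf₀side : ∀ x ∈ (f₀ : Sym2 V), T.dist b₀ x = T.dist a₀ x + 1 :=
      edge_side_all hT hab₀.symm f₀ (by rwa [Sym2.eq_swap] : (f₀ : Sym2 V) ≠ s(b₀, a₀)) hx₀
        hx₀a
    have hall : ∀ g ∈ F, g ≠ ⟨s(a₀, b₀), hev⟩ → ∀ x ∈ (g : Sym2 V),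
        T.dist b₀ x = T.dist a₀ x + 1 := by
      intro g hgF hgne x hx
      rcases side_dichotomy hT hab₀ x with h | h
      · exfalso
        have hgne' : (g : Sym2 V) ≠ s(a₀, b₀) := fun hcon => hgne (Subtype.ext hcon)
        have hgside : ∀ x' ∈ (g : Sym2 V), T.dist a₀ x' = T.dist b₀ x' + 1 :=
          edge_side_all hT hab₀ g hgne' hx h
        exact no_both_sides hT hF he hf₀F hgF hf₀ne hgne hab₀ rfl hf₀side hgside
      · exact h
    obtain ⟨l, hl, hld⟩ := exists_leaf_beyond hT hab₀
    refine ⟨l, hl, b₀, a₀, hab₀.symm, Sym2.eq_swap, ?_, hall⟩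
    exact hld

lemma line_mv_ncard_le_leaves [Finite V] (hT : T.IsTree) {F : Set T.edgeSet}
    (hF : MutualVisSet T.lineGraph F) : F.ncard ≤ (leaves T).ncard := by
  classical
  have hch : ∀ e : T.edgeSet, ∃ lv : V, e ∈ F → lv ∈ leaves T ∧
      (∃ a b : V, T.Adj a b ∧ (e : Sym2 V) = s(a, b) ∧
      T.dist b lv = T.dist a lv + 1 ∧
      ∀ f ∈ F, f ≠ e → ∀ x ∈ (f : Sym2 V), T.dist a x = T.dist b x + 1) := by
    intro e
    by_cases he : e ∈ F
    · obtain ⟨lv, hl, rest⟩ := line_exists_escort hT hF he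
      exact ⟨lv, fun _ => ⟨hl, rest⟩⟩
    · obtain ⟨x, _⟩ := sym2_nonempty (e : Sym2 V)
      exact ⟨x, fun h => absurd h he⟩
  choose l hl using hch
  have hlmem : ∀ e ∈ F, l e ∈ leaves T := fun e he => (hl e he).1
  have hrest : ∀ e ∈ F, ∃ a b : V, T.Adj a b ∧ (e : Sym2 V) = s(a, b) ∧
      T.dist b (l e) = T.dist a (l e) + 1 ∧
      ∀ f ∈ F, f ≠ e → ∀ x ∈ (f : Sym2 V), T.dist a x = T.dist b x + 1 :=
    fun e he => (hl e he).2
  have hinj : Set.InjOn l F := by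
    intro e he e' he' heq
    by_contra hne
    obtain ⟨a, b, hab, heval, hlside, hprop⟩ := hrest e he
    obtain ⟨a', b', hab', heval', hlside', hprop'⟩ := hrest e' he'
    have hamem : a ∈ (e : Sym2 V) := by rw [heval]; simp
    have ha'mem : a' ∈ (e' : Sym2 V) := by rw [heval']; simp
    have h1 : T.dist a a' = T.dist b a' + 1 := hprop e' he' (Ne.symm hne) a' ha'mem
    have h2 : T.dist a' a = T.dist b' a + 1 := hprop' e he (hne) a hamem
    have hc1 := cross hT hab hlside h1
    have hc2 := cross hT hab' hlside' h2
    rw [heq] at hc1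
    have c1 : T.dist (l e') a = T.dist a (l e') := SimpleGraph.dist_comm
    have c2 : T.dist (l e') a' = T.dist a' (l e') := SimpleGraph.dist_comm
    omega
  calc F.ncard = (l '' F).ncard := (Set.ncard_image_of_injOn hinj).symm
    _ ≤ (leaves T).ncard := Set.ncard_le_ncard
        (by rintro _ ⟨g, hg, rfl⟩; exact hlmem g hg) (Set.toFinite _)

lemma muNumber_eq_of {W : Type*} (G : SimpleGraph W) (m : ℕ)
    (hmem : ∃ S, MutualVisSet G S ∧ S.ncard = m)
    (hub : ∀ S : Set W, MutualVisSet G S → S.ncard ≤ m) : muNumber G = m := by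
  have hbdd : m ∈ upperBounds {n : ℕ | ∃ S : Set W, MutualVisSet G S ∧ S.ncard = n} := by
    rintro n ⟨S, hS, rfl⟩
    exact hub S hS
  apply le_antisymm
  · exact csSup_le ⟨m, hmem⟩ hbdd
  · exact le_csSup ⟨m, hbdd⟩ hmem

end MVAux

/-- For a finite tree `T` with at least two edges, the mutual-visibility number
of the line graph of `T` equals that of `T`. -/
theorem stmt11 [Fintype V] (T : SimpleGraph V) (hT : T.IsTree)
    (h2 : 2 ≤ T.edgeSet.ncard) :
    muNumber T.lineGraph = muNumber T := by
  have h1 : 1 ≤ T.edgeSet.ncard := by omega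
  have hmuT : muNumber T = (leaves T).ncard :=
    MVAux.muNumber_eq_of T (leaves T).ncard ⟨leaves T, MVAux.leaves_mutualVis hT, rfl⟩
      (fun S hS => MVAux.mv_ncard_le_leaves hT h1 hS)
  have hmuL : muNumber T.lineGraph = (leaves T).ncard := by
    obtain ⟨F, hF, hFcard⟩ := MVAux.line_mv_pendant hT h2
    exact MVAux.muNumber_eq_of T.lineGraph (leaves T).ncard ⟨F, hF, hFcard⟩
      (fun S hS => MVAux.line_mv_ncard_le_leaves hT hS)
  rw [hmuT, hmuL]
end

section
/- Let T be a finite tree with exactly one branch vertex c (so deg_T(c) ≥ 3 and every other vertex has degree at most 2). If S ⊆ V(T) is a mutual-visibility set of T with c ∈ S, then |S| ≤ 2; in particular |S| < |𝓛(T)|, since T has at least three leaves. -/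
open SimpleGraph

variable {V : Type*}

section TreeHelpers
variable {V : Type*}

lemma tree_path_eq {T : SimpleGraph V} (hT : T.IsTree) {u v : V} {p q : T.Walk u v}
    (hp : p.IsPath) (hq : q.IsPath) : p = q := by
  obtain ⟨r, -, hr⟩ := hT.existsUnique_path u v
  rw [hr p hp, hr q hq]

lemma tree_path_length {T : SimpleGraph V} (hT : T.IsTree) {u v : V} {p : T.Walk u v}
    (hp : p.IsPath) : p.length = T.dist u v := by
  obtain ⟨q, hq, hql⟩ := hT.isConnected.exists_path_of_dist u v
  rw [tree_path_eq hT hp hq, hql]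

lemma second_of_path {T : SimpleGraph V} {u v : V} (hne : u ≠ v) (p : T.Walk u v)
    (hp : p.IsPath) : ∃ b, T.Adj u b ∧ b ∈ p.support ∧ b ≠ u := by
  obtain ⟨b, h, p', rfl⟩ := Walk.exists_eq_cons_of_ne hne p
  have hb : b ∈ p'.support := p'.start_mem_support
  refine ⟨b, h, by simp [Walk.support_cons, hb], fun hbu => ?_⟩
  exact ((Walk.cons_isPath_iff h p').mp hp).2 (hbu ▸ hb)

lemma unique_nbr_on_path {T : SimpleGraph V} (hT : T.IsTree) {l b c y : V} {W' : T.Walk b c}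
    {h : T.Adj l b} (hW : (Walk.cons h W').IsPath) (hy : T.Adj l y) (hymem : y ∈ W'.support) :
    y = b := by
  classical
  have h1 : (Walk.cons h (W'.takeUntil y hymem)).IsPath := by
    rw [Walk.cons_isPath_iff] at hW ⊢
    exact ⟨hW.1.takeUntil hymem, fun hl => hW.2 (Walk.support_takeUntil_subset _ hymem hl)⟩
  have h2 : (Walk.cons hy Walk.nil).IsPath := by simp [hy.ne]
  have he := tree_path_eq hT h1 h2
  have := congrArg (fun r => r.getVert 1) he
  simpa [Walk.getVert_cons] using this.symm

lemma cons_path_of_dist {T : SimpleGraph V} (hT : T.IsTree) {c w x : V} (hadj : T.Adj c w)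
    (hx : T.dist c x = T.dist w x + 1) : ∃ pw : T.Walk w x, (Walk.cons hadj pw).IsPath := by
  obtain ⟨pw, hpw, hpwl⟩ := hT.isConnected.exists_path_of_dist w x
  exact ⟨pw, (Walk.cons hadj pw).isPath_of_length_eq_dist (by rw [Walk.length_cons, hpwl, hx])⟩

lemma B_disjoint {T : SimpleGraph V} (hT : T.IsTree) {c w w' x : V} (h1 : T.Adj c w)
    (h2 : T.Adj c w') (hx : T.dist c x = T.dist w x + 1) (hx' : T.dist c x = T.dist w' x + 1) :
    w = w' := by
  obtain ⟨pw, hp⟩ := cons_path_of_dist hT h1 hx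
  obtain ⟨pw', hp'⟩ := cons_path_of_dist hT h2 hx'
  have he := tree_path_eq hT hp hp'
  have := congrArg (fun r => r.getVert 1) he
  simpa [Walk.getVert_cons] using this

lemma exists_leaf' [Fintype V] {T : SimpleGraph V} (hT : T.IsTree) {c w : V} (hadj : T.Adj c w) :
    ∃ l ∈ leaves T, T.dist c l = T.dist w l + 1 := by
  classical
  set B : Set V := {x | T.dist c x = T.dist w x + 1} with hB
  have hwB : w ∈ B := by
    simp only [hB, Set.mem_setOf_eq, SimpleGraph.dist_self]
    exact dist_eq_one_iff_adj.mpr hadj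
  obtain ⟨l, hlB, hlmax⟩ := Set.exists_max_image B (T.dist c) (Set.toFinite B) ⟨w, hwB⟩
  have hlB' : T.dist c l = T.dist w l + 1 := hlB
  have hlc : l ≠ c := by
    intro h; subst h
    simp [SimpleGraph.dist_self] at hlB'
  obtain ⟨pw, hP⟩ := cons_path_of_dist hT hadj hlB'
  set P : T.Walk c l := Walk.cons hadj pw with hPdef
  obtain ⟨b, hbR, R', hR'⟩ := Walk.exists_eq_cons_of_ne hlc P.reverse
  have hRpath : P.reverse.IsPath := hP.reverse
  have hkey : ∀ y, T.Adj l y → y = b := by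
    intro y hy
    by_cases hymem : y ∈ P.support
    · have hyR : y ∈ R'.support := by
        have : y ∈ P.reverse.support := by rwa [Walk.support_reverse, List.mem_reverse]
        rw [hR', Walk.support_cons, List.mem_cons] at this
        rcases this with h1 | h1
        · exact absurd h1 hy.ne'
        · exact h1
      exact unique_nbr_on_path hT (hR' ▸ hRpath) hy hyR
    · exfalso
      have hyP : (P.append (Walk.cons hy Walk.nil)).IsPath := by
        rw [Walk.isPath_def, Walk.support_append]
        simp only [Walk.support_cons, Walk.support_nil, List.tail_cons]
        rw [List.nodup_append]
        exact ⟨hP.support_nodup, List.nodup_singleton y,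
          fun z hz b hb hzb => by simp at hb; subst hb; subst hzb; exact hymem hz⟩
      have hypw : y ∉ pw.support := fun h =>
        hymem (by rw [hPdef, Walk.support_cons]; right; exact h)
      have hywP : (pw.append (Walk.cons hy Walk.nil)).IsPath := by
        rw [Walk.isPath_def, Walk.support_append]
        simp only [Walk.support_cons, Walk.support_nil, List.tail_cons]
        rw [List.nodup_append]
        exact ⟨(hP.of_cons).support_nodup, List.nodup_singleton y,
          fun z hz b hb hzb => by simp at hb; subst hb; subst hzb; exact hypw hz⟩
      have e1 : (P.append (Walk.cons hy Walk.nil)).length = P.length + 1 := by simp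
      have e2 : (pw.append (Walk.cons hy Walk.nil)).length = pw.length + 1 := by simp
      have hd1 : T.dist c y = T.dist c l + 1 := by
        rw [← tree_path_length hT hyP, e1, tree_path_length hT hP]
      have hd2 : T.dist w y = T.dist w l + 1 := by
        rw [← tree_path_length hT hywP, e2, tree_path_length hT hP.of_cons]
      have hyB : y ∈ B := by
        simp only [hB, Set.mem_setOf_eq, hd1, hd2, hlB']
      have := hlmax y hyB
      omega
  refine ⟨l, ?_, hlB'⟩
  have : T.neighborSet l = {b} := by
    ext z
    simp only [mem_neighborSet, Set.mem_singleton_iff]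
    exact ⟨fun h => hkey z h, fun h => h ▸ hbR⟩
  simp [leaves, this]

lemma exists_first {T : SimpleGraph V} (P : Set V) :
    ∀ {a u : V} (q : T.Walk a u), q.IsPath → a ∉ P → u ∈ P →
      ∃ (y : V), y ∈ P ∧ ∃ (q1 : T.Walk a y), q1.IsPath ∧
        q1.support ⊆ q.support ∧ ∀ z ∈ q1.support, z ≠ y → z ∉ P := by
  intro a u q
  induction q with
  | nil => intro _ ha hu; exact absurd hu ha
  | @cons a b u h q' ih =>
    intro hq ha hu
    by_cases hb : b ∈ P
    · refine ⟨b, hb, Walk.cons h Walk.nil, ?_, ?_, ?_⟩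
      · simp [Walk.cons_isPath_iff, h.ne]
      · intro z hz
        simp only [Walk.support_cons, Walk.support_nil, List.mem_cons] at hz ⊢
        rcases hz with rfl | hz
        · exact Or.inl rfl
        · simp at hz; subst hz; exact Or.inr q'.start_mem_support
      · intro z hz hzb
        simp only [Walk.support_cons, Walk.support_nil, List.mem_cons] at hz
        rcases hz with rfl | hz
        · exact ha
        · simp at hz; exact absurd hz hzb
    · obtain ⟨y, hy, q1, hq1, hsub, hcond⟩ := ih ((Walk.cons_isPath_iff h q').mp hq).1 hb hu
      refine ⟨y, hy, Walk.cons h q1, ?_, ?_, ?_⟩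
      · rw [Walk.cons_isPath_iff]
        exact ⟨hq1, fun hmem => ((Walk.cons_isPath_iff h q').mp hq).2 (hsub hmem)⟩
      · intro z hz
        simp only [Walk.support_cons, List.mem_cons] at hz ⊢
        rcases hz with rfl | hz
        · exact Or.inl rfl
        · exact Or.inr (hsub hz)
      · intro z hz hzy
        simp only [Walk.support_cons, List.mem_cons] at hz
        rcases hz with rfl | hz
        · exact ha
        · exact hcond z hz hzy

lemma key_mvs [Fintype V] {T : SimpleGraph V} (hT : T.IsTree) {c : V}
    (hb : ∀ v ∈ branchVerts T, v = c) {S : Set V} (hS : MutualVisSet T S) (hcS : c ∈ S)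
    {u v : V} (hu : u ∈ S) (hv : v ∈ S) (huc : u ≠ c) (hvc : v ≠ c) (huv : u ≠ v) : False := by
  classical
  obtain ⟨p, hplen, hpint⟩ := hS u hu v hv huv
  have hp : p.IsPath := p.isPath_of_length_eq_dist hplen
  have hcp : c ∉ p.support := fun hcsup => hpint c hcsup (Ne.symm huc) (Ne.symm hvc) hcS
  obtain ⟨q, hq, -⟩ := hT.isConnected.exists_path_of_dist c u
  have hustart : u ∈ {z | z ∈ p.support} := p.start_mem_support
  obtain ⟨y, hy, q1, hq1, -, hcond⟩ := exists_first {z | z ∈ p.support} q hq hcp hustart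
  have hy : y ∈ p.support := hy
  have hyc : y ≠ c := fun h => hcp (h ▸ hy)
  have hps : p.support = (p.takeUntil y hy).support ++ (p.dropUntil y hy).support.tail := by
    conv_lhs => rw [← Walk.take_spec p hy]
    rw [Walk.support_append]
  have hnd := hp.support_nodup
  rw [hps, List.nodup_append] at hnd
  rcases eq_or_ne y u with rfl | hyu
  · set t2 := p.dropUntil y hy with ht2def
    have ht2 : t2.IsPath := hp.dropUntil hy
    have hW : (q1.append t2).IsPath := by
      rw [Walk.isPath_def, Walk.support_append, List.nodup_append]
      refine ⟨hq1.support_nodup, ?_, ?_⟩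
      · have := ht2.support_nodup
        rw [t2.support_eq_cons] at this
        exact this.of_cons
      · intro z hz1 b hz2 hzb
        subst hzb
        have hzt : z ∈ t2.support := by rw [t2.support_eq_cons]; exact List.mem_cons_of_mem _ hz2
        have hzu : z ≠ y := by
          have := ht2.support_nodup
          rw [t2.support_eq_cons, List.nodup_cons] at this
          exact fun h => this.1 (h ▸ hz2)
        exact hcond z hz1 hzu (Walk.support_dropUntil_subset p hy hzt)
    obtain ⟨r, hrlen, hrint⟩ := hS c hcS v hv (Ne.symm hvc)
    have hr : r.IsPath := r.isPath_of_length_eq_dist hrlen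
    have hreq : r = q1.append t2 := tree_path_eq hT hr hW
    have humem : y ∈ r.support := by
      rw [hreq, Walk.mem_support_append_iff]; exact Or.inl q1.end_mem_support
    exact hrint y humem huc huv hu
  rcases eq_or_ne y v with rfl | hyv
  · set t1 := (p.takeUntil y hy).reverse with ht1def
    have ht1 : t1.IsPath := (hp.takeUntil hy).reverse
    have hW : (q1.append t1).IsPath := by
      rw [Walk.isPath_def, Walk.support_append, List.nodup_append]
      refine ⟨hq1.support_nodup, ?_, ?_⟩
      · have := ht1.support_nodup
        rw [t1.support_eq_cons] at this
        exact this.of_cons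
      · intro z hz1 b hz2 hzb
        subst hzb
        have hzt : z ∈ t1.support := by rw [t1.support_eq_cons]; exact List.mem_cons_of_mem _ hz2
        have hzv : z ≠ y := by
          have := ht1.support_nodup
          rw [t1.support_eq_cons, List.nodup_cons] at this
          exact fun h => this.1 (h ▸ hz2)
        have : z ∈ p.support := by
          have : z ∈ (p.takeUntil y hy).support := by
            rw [ht1def, Walk.support_reverse, List.mem_reverse] at hzt; exact hzt
          exact Walk.support_takeUntil_subset p hy this
        exact hcond z hz1 hzv this
    obtain ⟨r, hrlen, hrint⟩ := hS c hcS u hu (Ne.symm huc)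
    have hr : r.IsPath := r.isPath_of_length_eq_dist hrlen
    have hreq : r = q1.append t1 := tree_path_eq hT hr hW
    have hvmem : y ∈ r.support := by
      rw [hreq, Walk.mem_support_append_iff]; exact Or.inl q1.end_mem_support
    exact hrint y hvmem hvc (Ne.symm huv) hv
  · have hycq1 : c ≠ y := fun h => hyc h.symm
    obtain ⟨a', ha'adj, ha'mem, ha'ne⟩ := second_of_path (Ne.symm hycq1) q1.reverse hq1.reverse
    have ha'q1 : a' ∈ q1.support := by rwa [Walk.support_reverse, List.mem_reverse] at ha'mem
    have ha'np : a' ∉ p.support := hcond a' ha'q1 ha'ne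
    obtain ⟨b1, hb1adj, hb1mem, hb1ne⟩ :=
      second_of_path hyu (p.takeUntil y hy).reverse (hp.takeUntil hy).reverse
    have hb1t : b1 ∈ (p.takeUntil y hy).support := by
      rwa [Walk.support_reverse, List.mem_reverse] at hb1mem
    obtain ⟨b2, hb2adj, hb2mem, hb2ne⟩ := second_of_path hyv (p.dropUntil y hy) (hp.dropUntil hy)
    have hb2tail : b2 ∈ (p.dropUntil y hy).support.tail := by
      have := (p.dropUntil y hy).support_eq_cons
      rw [this, List.mem_cons] at hb2mem
      rcases hb2mem with h | h
      · exact absurd h hb2ne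
      · exact h
    have hb12 : b1 ≠ b2 := fun h => hnd.2.2 b1 hb1t b2 hb2tail h
    have hb1p : b1 ∈ p.support := Walk.support_takeUntil_subset p hy hb1t
    have hb2p : b2 ∈ p.support := Walk.support_dropUntil_subset p hy hb2mem
    have hab1 : a' ≠ b1 := fun h => ha'np (h ▸ hb1p)
    have hab2 : a' ≠ b2 := fun h => ha'np (h ▸ hb2p)
    have hsub3 : ({a', b1, b2} : Set V) ⊆ T.neighborSet y := by
      intro z hz
      simp only [Set.mem_insert_iff, Set.mem_singleton_iff] at hz
      rcases hz with rfl | rfl | rfl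
      · exact ha'adj
      · exact hb1adj
      · exact hb2adj
    have h3 : 3 ≤ (T.neighborSet y).ncard := by
      have hcard : ({a', b1, b2} : Set V).ncard = 3 := by
        rw [Set.ncard_insert_of_notMem (by simp [hab1, hab2]) (Set.toFinite _),
          Set.ncard_insert_of_notMem (by simp [hb12]) (Set.toFinite _), Set.ncard_singleton]
      rw [← hcard]
      exact Set.ncard_le_ncard hsub3 (Set.toFinite _)
    exact hyc (hb y h3)

end TreeHelpers

/-- In a finite tree with exactly one branch vertex `c`, any mutual-visibility
set containing `c` has at most two elements, hence fewer than `|𝓛(T)|`. -/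
theorem stmt13 [Fintype V] (T : SimpleGraph V) (hT : T.IsTree) (c : V)
    (hc : c ∈ branchVerts T) (hunique : ∀ v ∈ branchVerts T, v = c)
    (S : Set V) (hS : MutualVisSet T S) (hcS : c ∈ S) :
    S.ncard ≤ 2 ∧ S.ncard < (leaves T).ncard := by
  classical
  -- Part 1: `S.ncard ≤ 2`
  have h2 : S.ncard ≤ 2 := by
    by_cases hex : ∃ u ∈ S, u ≠ c
    · obtain ⟨u, hu, huc⟩ := hex
      have hsub : S ⊆ {c, u} := by
        intro v hv
        rcases eq_or_ne v c with rfl | hvc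
        · exact Set.mem_insert _ _
        rcases eq_or_ne v u with rfl | hvu
        · exact Set.mem_insert_of_mem _ rfl
        · exact absurd (key_mvs hT hunique hS hcS hu hv huc hvc (Ne.symm hvu)) not_false
      calc S.ncard ≤ ({c, u} : Set V).ncard := Set.ncard_le_ncard hsub (Set.toFinite _)
        _ ≤ ({u} : Set V).ncard + 1 := Set.ncard_insert_le _ _
        _ ≤ 2 := by rw [Set.ncard_singleton]
    · push_neg at hex
      have hsub : S ⊆ {c} := fun v hv => hex v hv
      calc S.ncard ≤ ({c} : Set V).ncard := Set.ncard_le_ncard hsub (Set.toFinite _)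
        _ ≤ 2 := by rw [Set.ncard_singleton]; omega
  -- Part 2: `T` has at least three leaves
  have hc3 : 3 ≤ (T.neighborSet c).ncard := hc
  have hne0 : (T.neighborSet c).ncard ≠ 0 := by omega
  obtain ⟨w1, hw1⟩ := Set.nonempty_of_ncard_ne_zero hne0
  have h1lt : 1 < (T.neighborSet c).ncard := by omega
  obtain ⟨w2, hw2, hw21⟩ := Set.exists_ne_of_one_lt_ncard h1lt w1
  have hdiff : 1 ≤ ((T.neighborSet c) \ {w1, w2}).ncard := by
    have hle := Set.ncard_le_ncard_diff_add_ncard (T.neighborSet c) {w1, w2} (Set.toFinite _)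
    have : ({w1, w2} : Set V).ncard ≤ 2 := by
      calc ({w1, w2} : Set V).ncard ≤ ({w2} : Set V).ncard + 1 := Set.ncard_insert_le _ _
        _ ≤ 2 := by rw [Set.ncard_singleton]
    omega
  have hne0' : ((T.neighborSet c) \ {w1, w2}).ncard ≠ 0 := by omega
  obtain ⟨w3, hw3'⟩ := Set.nonempty_of_ncard_ne_zero hne0'
  obtain ⟨hw3, hw3ne⟩ := hw3'
  simp only [Set.mem_insert_iff, Set.mem_singleton_iff, not_or] at hw3ne
  obtain ⟨hw31, hw32⟩ := hw3ne
  have hw1a : T.Adj c w1 := hw1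
  have hw2a : T.Adj c w2 := hw2
  have hw3a : T.Adj c w3 := hw3
  obtain ⟨l1, hl1, hd1⟩ := exists_leaf' hT hw1a
  obtain ⟨l2, hl2, hd2⟩ := exists_leaf' hT hw2a
  obtain ⟨l3, hl3, hd3⟩ := exists_leaf' hT hw3a
  have h12 : l1 ≠ l2 := fun h => hw21 (B_disjoint hT hw2a hw1a (h ▸ hd2) (h ▸ hd1))
  have h13 : l1 ≠ l3 := fun h => hw31 (B_disjoint hT hw3a hw1a (h ▸ hd3) (h ▸ hd1))
  have h23 : l2 ≠ l3 := fun h => hw32 (B_disjoint hT hw3a hw2a (h ▸ hd3) (h ▸ hd2))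
  have hsubl : ({l1, l2, l3} : Set V) ⊆ leaves T := by
    intro z hz
    simp only [Set.mem_insert_iff, Set.mem_singleton_iff] at hz
    rcases hz with rfl | rfl | rfl
    · exact hl1
    · exact hl2
    · exact hl3
  have h3 : 3 ≤ (leaves T).ncard := by
    have hcard : ({l1, l2, l3} : Set V).ncard = 3 := by
      rw [Set.ncard_insert_of_notMem (by simp [h12, h13]) (Set.toFinite _),
        Set.ncard_insert_of_notMem (by simp [h23]) (Set.toFinite _), Set.ncard_singleton]
    rw [← hcard]
    exact Set.ncard_le_ncard hsubl (Set.toFinite _)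
  exact ⟨h2, lt_of_le_of_lt h2 (lt_of_lt_of_le (by norm_num) h3)⟩
end

section
/- Let T be a finite tree containing at least one branch vertex, and for each leaf u of T let W(u) = V(P_T(u, b(u))) \ {b(u)}, where b(u) is the branch vertex of T nearest to u. Then every set S ⊆ V(T) obtained by choosing exactly one vertex from each set W(u), u ∈ 𝓛(T), is a mutual-visibility set of T of cardinality μ(T) = |𝓛(T)|. -/
open SimpleGraph

variable {V : Type*}

set_option linter.unusedSectionVars false

namespace TreeMV

open SimpleGraph Walk

variable {V : Type*} [DecidableEq V] {T : SimpleGraph V}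


lemma path_eq (hT : T.IsTree) {u v : V} {q r : T.Walk u v} (hq : q.IsPath) (hr : r.IsPath) :
    q = r := (hT.existsUnique_path u v).unique hq hr

noncomputable def pth (hT : T.IsTree) (u v : V) : T.Walk u v :=
  (hT.isConnected.exists_path_of_dist u v).choose

lemma pth_isPath (hT : T.IsTree) (u v : V) : (pth hT u v).IsPath :=
  (hT.isConnected.exists_path_of_dist u v).choose_spec.1

lemma pth_length (hT : T.IsTree) (u v : V) : (pth hT u v).length = T.dist u v :=
  (hT.isConnected.exists_path_of_dist u v).choose_spec.2

lemma path_length (hT : T.IsTree) {u v : V} {q : T.Walk u v} (hq : q.IsPath) :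
    q.length = T.dist u v := by
  rw [path_eq hT hq (pth_isPath hT u v), pth_length]

lemma path_support_subset (hT : T.IsTree) {u v : V} {q : T.Walk u v} (hq : q.IsPath)
    (r : T.Walk u v) : q.support ⊆ r.support := by
  have h : r.bypass = q := path_eq hT r.bypass_isPath hq
  rw [← h]
  exact r.support_bypass_subset

lemma sandwich {u v x c : V} {q : T.Walk u v} (hq : q.IsPath) (hx : x ∈ q.support)
    (h1 : c ∈ (q.takeUntil x hx).support) (h2 : c ∈ (q.dropUntil x hx).support) : c = x := by
  by_contra hne
  have hnd : q.support.Nodup := hq.support_nodup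
  conv at hnd => rw [← take_spec q hx]
  rw [support_append, List.nodup_append] at hnd
  have h2' : c ∈ ((q.dropUntil x hx).support).tail := by
    have hc := support_eq_cons (q.dropUntil x hx)
    rw [hc] at h2
    rcases List.mem_cons.mp h2 with h | h
    · exact absurd h hne
    · exact h
  exact hnd.2.2 c h1 c h2' rfl

lemma exit_forward {U : Set V} {c : V}
    (hcl : ∀ x ∈ U, x ≠ c → ∀ y, T.Adj x y → y ∈ U) :
    ∀ {a w : V} (q : T.Walk a w), a ∈ U → w ∉ U → c ∈ q.support := by
  intro a w q
  induction q with
  | nil => intro ha hw; exact absurd ha hw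
  | @cons a y w h q ih =>
    intro ha hw
    by_cases hac : a = c
    · rw [support_cons]; exact hac ▸ List.mem_cons_self
    · rw [support_cons]; exact List.mem_cons_of_mem _ (ih (hcl a ha hac y h) hw)

lemma exit_backward {U : Set V} {c : V}
    (hcl : ∀ x ∈ U, x ≠ c → ∀ y, T.Adj x y → y ∈ U)
    {a w : V} (q : T.Walk w a) (ha : a ∈ U) (hw : w ∉ U) : c ∈ q.support := by
  have h := exit_forward hcl q.reverse ha hw
  rwa [support_reverse, List.mem_reverse] at h

lemma exists_dir (hT : T.IsTree) {s u : V} (h : s ≠ u) :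
    ∃ z, T.Adj s z ∧ z ∈ (pth hT s u).support := by
  obtain ⟨z, hadj, q, hq⟩ := Walk.exists_eq_cons_of_ne h (pth hT s u)
  exact ⟨z, hadj, by rw [hq]; simp⟩

noncomputable def dir (hT : T.IsTree) (s u : V) : V :=
  if h : s ≠ u then (exists_dir hT h).choose else s

lemma dir_adj (hT : T.IsTree) {s u : V} (h : s ≠ u) :
    T.Adj s (dir hT s u) ∧ dir hT s u ∈ (pth hT s u).support := by
  rw [dir, dif_pos h]; exact (exists_dir hT h).choose_spec

lemma pth_self (hT : T.IsTree) (s : V) : pth hT s s = Walk.nil := by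
  exact path_eq hT (pth_isPath hT s s) IsPath.nil

lemma dir_unique (hT : T.IsTree) {s u z z' : V} (hz : T.Adj s z) (hz' : T.Adj s z')
    (hmz : z ∈ (pth hT s u).support) (hmz' : z' ∈ (pth hT s u).support) : z = z' := by
  by_contra hne
  have hsu : s ≠ u := by
    rintro rfl
    rw [pth_self hT s] at hmz
    simp only [support_nil, List.mem_singleton] at hmz
    exact T.irrefl (v := s) (hmz ▸ hz)
  obtain ⟨z0, h0, q2, hq0⟩ := Walk.exists_eq_cons_of_ne hsu (pth hT s u)
  have hpath := pth_isPath hT s u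
  rw [hq0, Walk.cons_isPath_iff] at hpath
  have hmem : ∀ y, T.Adj s y → y ∈ (pth hT s u).support → y ∈ q2.support := by
    intro y hy hmy
    rw [hq0, support_cons] at hmy
    rcases List.mem_cons.mp hmy with h | h
    · exact absurd (h ▸ hy) (T.irrefl (v := s))
    · exact h
  have hz2 : z ∈ q2.support := hmem z hz hmz
  have hz2' : z' ∈ q2.support := hmem z' hz' hmz'
  have hseg : ∃ (r : T.Walk z z'), r.IsPath ∧ s ∉ r.support := by
    by_cases hc : z ∈ (q2.takeUntil z' hz2').support
    · exact ⟨(q2.takeUntil z' hz2').dropUntil z hc, (hpath.1.takeUntil hz2').dropUntil hc,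
        fun hs => hpath.2 (support_takeUntil_subset _ hz2' (support_dropUntil_subset _ hc hs))⟩
    · have hc2 : z ∈ (q2.dropUntil z' hz2').support := by
        have hzz := hz2
        rw [← take_spec q2 hz2', mem_support_append_iff] at hzz
        tauto
      refine ⟨((q2.dropUntil z' hz2').takeUntil z hc2).reverse,
        ((hpath.1.dropUntil hz2').takeUntil hc2).reverse, ?_⟩
      rw [support_reverse, List.mem_reverse]
      exact fun hs => hpath.2 (support_dropUntil_subset _ hz2' (support_takeUntil_subset _ hc2 hs))
  obtain ⟨r, hr, hsr⟩ := hseg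
  have h2p : (Walk.cons hz.symm (Walk.cons hz' Walk.nil) : T.Walk z z').IsPath := by
    rw [Walk.isPath_def]
    simp only [support_cons, support_nil]
    refine List.nodup_cons.mpr ⟨?_, List.nodup_cons.mpr ⟨?_, List.nodup_singleton _⟩⟩
    · intro h
      rcases List.mem_cons.mp h with h | h
      · exact hz.ne' h
      · exact hne (List.mem_singleton.mp h)
    · intro h
      exact hz'.ne (List.mem_singleton.mp h)
  have heq := path_eq hT hr h2p
  rw [heq] at hsr
  simp at hsr

lemma dir_prefix (hT : T.IsTree) {s u y : V} (hsu : s ≠ u) (hy : y ∈ (pth hT s u).support)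
    (hys : y ≠ s) : dir hT s y = dir hT s u := by
  have hsy : s ≠ y := Ne.symm hys
  have h1 := dir_adj hT hsy
  have h2 := dir_adj hT hsu
  have hpre : pth hT s y = (pth hT s u).takeUntil y hy :=
    path_eq hT (pth_isPath hT s y) ((pth_isPath hT s u).takeUntil hy)
  refine dir_unique hT h1.1 h2.1 ?_ h2.2
  have := h1.2
  rw [hpre] at this
  exact support_takeUntil_subset _ hy this

lemma dir_sep (hT : T.IsTree) {s u v : V} (hu : u ≠ s) (hv : v ≠ s)
    (hd : dir hT s u ≠ dir hT s v) : s ∈ (pth hT u v).support := by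
  have hdisj : ∀ y, y ∈ (pth hT s u).support → y ∈ (pth hT s v).support → y = s := by
    intro y h1 h2
    by_contra hys
    have e1 := dir_prefix hT (Ne.symm hu) h1 hys
    have e2 := dir_prefix hT (Ne.symm hv) h2 hys
    exact hd (e1.symm.trans e2)
  have hWpath : ((pth hT s u).reverse.append (pth hT s v)).IsPath := by
    rw [Walk.isPath_def, support_append, List.nodup_append]
    refine ⟨(pth_isPath hT s u).reverse.support_nodup, ?_, ?_⟩
    · have hnd := (pth_isPath hT s v).support_nodup
      rw [support_eq_cons] at hnd
      exact hnd.of_cons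
    · intro y hy1 y' hy2 hyy'
      subst hyy'
      rw [support_reverse, List.mem_reverse] at hy1
      have hy2' : y ∈ (pth hT s v).support := by
        rw [support_eq_cons]; exact List.mem_cons_of_mem _ hy2
      have hnd := (pth_isPath hT s v).support_nodup
      rw [support_eq_cons, List.nodup_cons] at hnd
      exact hnd.1 ((hdisj y hy1 hy2') ▸ hy2)
  have heq : pth hT u v = (pth hT s u).reverse.append (pth hT s v) :=
    path_eq hT (pth_isPath hT u v) hWpath
  rw [heq, mem_support_append_iff]
  left
  rw [support_reverse, List.mem_reverse]
  exact start_mem_support _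

lemma exists_leaf_dir [Fintype V] (hT : T.IsTree) {s z : V} (hadj : T.Adj s z) :
    ∃ e, e ∈ leaves T ∧ e ≠ s ∧ z ∈ (pth hT s e).support := by
  classical
  set A : Set V := {w | z ∈ (pth hT s w).support ∧ w ≠ s} with hA
  have hzA : z ∈ A := ⟨end_mem_support _, hadj.ne'⟩
  obtain ⟨e, heA, hmax⟩ : ∃ e ∈ A, ∀ a' ∈ A, (fun w => T.dist s w) e ≤ (fun w => T.dist s w) a' →
      (fun w => T.dist s w) e = (fun w => T.dist s w) a' := by
    obtain ⟨e, he, h⟩ := Set.exists_max_image A (fun w => T.dist s w) A.toFinite ⟨z, hzA⟩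
    exact ⟨e, he, fun a' ha' h' => le_antisymm h' (h a' ha')⟩
  have hes : e ≠ s := heA.2
  have hnbr : ∀ y, T.Adj e y → y ∈ (pth hT s e).support := by
    intro y hy
    by_contra hyn
    have hq' : ((pth hT s e).concat hy).IsPath := by
      rw [Walk.isPath_def, Walk.concat_eq_append, support_append, List.nodup_append]
      refine ⟨(pth_isPath hT s e).support_nodup, by simp, ?_⟩
      intro a ha1 a' ha2 haa'
      subst haa'
      simp only [support_cons, support_nil, List.tail_cons, List.mem_singleton] at ha2
      exact hyn (ha2 ▸ ha1)
    have hy_ne_s : y ≠ s := fun h => hyn (h ▸ start_mem_support _)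
    have hpe : (pth hT s e).concat hy = pth hT s y := path_eq hT hq' (pth_isPath hT s y)
    have hyA : y ∈ A := by
      refine ⟨?_, hy_ne_s⟩
      rw [← hpe, Walk.concat_eq_append, mem_support_append_iff]
      exact Or.inl heA.1
    have hlt : T.dist s e < T.dist s y := by
      have h1 := pth_length hT s e
      have h2 : ((pth hT s e).concat hy).length = T.dist s y := by rw [hpe, pth_length]
      rw [Walk.length_concat] at h2
      omega
    have := hmax y hyA (le_of_lt hlt)
    simp only at this
    omega
  obtain ⟨y3, h3, q3, hq3⟩ := Walk.exists_eq_cons_of_ne hes (pth hT s e).reverse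
  have hrev : (pth hT s e).reverse = pth hT e s :=
    path_eq hT (pth_isPath hT s e).reverse (pth_isPath hT e s)
  have hy3 : y3 ∈ (pth hT e s).support := by
    rw [← hrev, hq3]; simp
  have hNe : T.neighborSet e = {y3} := by
    ext y
    simp only [mem_neighborSet, Set.mem_singleton_iff]
    constructor
    · intro hy
      refine dir_unique hT (u := s) hy h3 ?_ hy3
      rw [← hrev, support_reverse, List.mem_reverse]
      exact hnbr y hy
    · rintro rfl; exact h3
  exact ⟨e, by simp [leaves, hNe], hes, heA.1⟩

section Legs

variable [Fintype V] {b : V → V} {p : ∀ u : V, T.Walk u (b u)}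

/-- Structure of legs: vertices of the leg other than `b e` have all their
neighbors on the leg, and the internal ones have degree exactly 2. -/
lemma leg (hT : T.IsTree)
    (hb : ∀ u ∈ leaves T, b u ∈ branchVerts T ∧
      ∀ c ∈ branchVerts T, T.dist u (b u) ≤ T.dist u c)
    (hp : ∀ u, (p u).IsPath) {e : V} (he : e ∈ leaves T) :
    ∀ x, ∀ hx : x ∈ (p e).support, x ≠ b e →
      (∀ y, T.Adj x y → y ∈ (p e).support) ∧ (x ≠ e → (T.neighborSet x).ncard = 2) := by
  have he1 : (T.neighborSet e).ncard = 1 := he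
  have hbe3 : 3 ≤ (T.neighborSet (b e)).ncard := (hb e he).1
  have hebe : e ≠ b e := by
    intro h
    rw [← h] at hbe3
    omega
  intro x hx hxb
  by_cases hxe : x = e
  · subst hxe
    obtain ⟨y0, hy0⟩ := Set.ncard_eq_one.mp he1
    obtain ⟨y1, hadj, q1, hcons⟩ := Walk.exists_eq_cons_of_ne hebe (p x)
    have hy1 : y1 ∈ (p x).support := by rw [hcons]; simp
    have hy1y0 : y1 = y0 := by
      have : y1 ∈ T.neighborSet x := hadj
      rwa [hy0, Set.mem_singleton_iff] at this
    refine ⟨?_, fun h => absurd rfl h⟩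
    intro y hy
    have : y ∈ T.neighborSet x := hy
    rw [hy0, Set.mem_singleton_iff] at this
    rw [this, ← hy1y0]
    exact hy1
  · set tk := (p e).takeUntil x hx with htkdef
    set dk := (p e).dropUntil x hx with hdkdef
    have htk : tk.IsPath := (hp e).takeUntil hx
    have hdk : dk.IsPath := (hp e).dropUntil hx
    obtain ⟨y, hyadj, qy, hy⟩ := Walk.exists_eq_cons_of_ne (Ne.symm (Ne.symm hxe)) tk.reverse
    have hy_in_tk : y ∈ tk.support := by
      have h1 : y ∈ tk.reverse.support := by rw [hy]; simp
      rwa [support_reverse, List.mem_reverse] at h1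
    obtain ⟨z, hzadj, qz, hz⟩ := Walk.exists_eq_cons_of_ne hxb dk
    have hz_in_dk : z ∈ dk.support := by rw [hz]; simp
    have hyz : y ≠ z := by
      rintro rfl
      exact hyadj.ne (sandwich (hp e) hx hy_in_tk hz_in_dk).symm
    have hle2 : (T.neighborSet x).ncard ≤ 2 := by
      by_contra hgt
      have hxbr : x ∈ branchVerts T := by
        have : 3 ≤ (T.neighborSet x).ncard := by omega
        exact this
      have h1 := (hb e he).2 x hxbr
      have h2 : tk.length = T.dist e x := path_length hT htk
      have h3 : dk.length = T.dist x (b e) := path_length hT hdk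
      have h4 : (p e).length = T.dist e (b e) := path_length hT (hp e)
      have h5 : tk.length + dk.length = (p e).length := by
        have := congrArg Walk.length (take_spec (p e) hx)
        rwa [length_append] at this
      have h6 : 1 ≤ dk.length := by rw [hz]; simp [length_cons]
      omega
    have hsub : ({y, z} : Set V) ⊆ T.neighborSet x := by
      rintro w (rfl | rfl)
      · exact hyadj
      · exact hzadj
    have hpair : ({y, z} : Set V).ncard = 2 := Set.ncard_pair hyz
    have hNx : ({y, z} : Set V) = T.neighborSet x :=
      Set.eq_of_subset_of_ncard_le hsub (by rw [hpair]; exact hle2) (Set.toFinite _)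
    constructor
    · intro w hw
      have : w ∈ ({y, z} : Set V) := by rw [hNx]; exact hw
      rcases this with rfl | rfl
      · exact support_takeUntil_subset _ hx hy_in_tk
      · exact support_dropUntil_subset _ hx hz_in_dk
    · intro _
      rw [← hNx]
      exact hpair

lemma legN (hT : T.IsTree)
    (hb : ∀ u ∈ leaves T, b u ∈ branchVerts T ∧
      ∀ c ∈ branchVerts T, T.dist u (b u) ≤ T.dist u c)
    (hp : ∀ u, (p u).IsPath) {e : V} (he : e ∈ leaves T)
    {w : V} (hw : w ∉ ({x | x ∈ (p e).support} \ {b e} : Set V)) (q : T.Walk w e) :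
    b e ∈ q.support := by
  by_cases hwb : w ∈ (p e).support
  · have hwbe : w = b e := by
      by_contra h
      exact hw ⟨hwb, h⟩
    rw [← hwbe]
    exact q.start_mem_support
  · exact exit_backward (U := {x | x ∈ (p e).support}) (c := b e)
      (fun x hx hxb y hxy => (leg hT hb hp he x hx hxb).1 y hxy)
      q ((p e).start_mem_support) hwb

lemma legNx (hT : T.IsTree)
    (hb : ∀ u ∈ leaves T, b u ∈ branchVerts T ∧
      ∀ c ∈ branchVerts T, T.dist u (b u) ≤ T.dist u c)
    (hp : ∀ u, (p u).IsPath) {e : V} (he : e ∈ leaves T)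
    {x : V} (hx : x ∈ (p e).support) (hxb : x ≠ b e)
    {w : V} (hw : w ∉ ({y | y ∈ (p e).support} \ {b e} : Set V)) (q : T.Walk w x) :
    b e ∈ q.support := by
  by_contra hnot
  have hQ := legN hT hb hp he hw (q.append ((p e).takeUntil x hx).reverse)
  rw [mem_support_append_iff] at hQ
  rcases hQ with h | h
  · exact hnot h
  · rw [support_reverse, List.mem_reverse] at h
    exact hxb (sandwich (hp e) hx h (end_mem_support _)).symm

end Legs

lemma mv_card_le [Fintype V] (hT : T.IsTree) (hbr : (branchVerts T).Nonempty)
    {S' : Set V} (hMV : MutualVisSet T S') : S'.ncard ≤ (leaves T).ncard := by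
  classical
  obtain ⟨b0, hb0⟩ := hbr
  have hb03 : 3 ≤ (T.neighborSet b0).ncard := hb0
  have hb0n : (T.neighborSet b0).Nonempty :=
    Set.nonempty_of_ncard_ne_zero (by omega)
  have hadj_ex : ∀ s : V, ∃ y, T.Adj s y := by
    intro s
    by_cases h : s = b0
    · obtain ⟨c0, hc0⟩ := hb0n
      exact ⟨c0, h ▸ hc0⟩
    · obtain ⟨y, hy, q, _⟩ := Walk.exists_eq_cons_of_ne h (hT.isConnected.preconnected s b0).some
      exact ⟨y, hy⟩
  have hUdir : ∀ s ∈ S', ∀ u ∈ S', ∀ v' ∈ S', u ≠ s → v' ≠ s →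
      dir hT s u = dir hT s v' := by
    intro s hs u hu v' hv' hus hvs
    by_cases huv : u = v'
    · rw [huv]
    · by_contra hne
      have hsmem := dir_sep hT hus hvs hne
      obtain ⟨Wq, hWlen, hWav⟩ := hMV u hu v' hv' huv
      have hsub : (pth hT u v').support ⊆ Wq.support :=
        path_support_subset hT (pth_isPath hT u v') Wq
      exact hWav s (hsub hsmem) (Ne.symm hus) (Ne.symm hvs) hs
  have key : ∀ s ∈ S', ∃ e, e ∈ leaves T ∧
      (∀ m ∈ (pth hT s e).support, m ∈ S' → m = s) ∧
      (e = s ∨ (e ≠ s ∧ ∀ u ∈ S', u ≠ s → dir hT s u ≠ dir hT s e)) := by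
    intro s hs
    by_cases hsl : s ∈ leaves T
    · refine ⟨s, hsl, ?_, Or.inl rfl⟩
      intro m hm _
      rw [pth_self hT s] at hm
      simpa using hm
    · have hn1 : (T.neighborSet s).ncard ≠ 1 := hsl
      have hn_pos : 0 < (T.neighborSet s).ncard := by
        rw [Set.ncard_pos (Set.toFinite _)]
        obtain ⟨y, hy⟩ := hadj_ex s
        exact ⟨y, hy⟩
      have hn2 : 2 ≤ (T.neighborSet s).ncard := by omega
      have hzex : ∃ z ∈ T.neighborSet s, ∀ u ∈ S', u ≠ s → dir hT s u ≠ z := by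
        by_cases hex : ∃ u ∈ S', u ≠ s
        · obtain ⟨u0, hu0, hu0s⟩ := hex
          have hnsub : ¬(T.neighborSet s ⊆ {dir hT s u0}) := by
            intro hsub
            have := Set.ncard_le_ncard hsub (Set.finite_singleton _)
            rw [Set.ncard_singleton] at this
            omega
          obtain ⟨z, hz1, hz2⟩ := Set.not_subset.mp hnsub
          refine ⟨z, hz1, fun u hu hus => ?_⟩
          rw [hUdir s hs u hu u0 hu0 hus hu0s]
          intro h
          exact hz2 (by rw [← h]; rfl)
        · push_neg at hex
          obtain ⟨z, hzadj⟩ := hadj_ex s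
          exact ⟨z, hzadj, fun u hu hus => absurd (hex u hu) hus⟩
      obtain ⟨z, hzN, hzav⟩ := hzex
      obtain ⟨e, hel, hes, hzm⟩ := exists_leaf_dir hT (hzN : T.Adj s z)
      have hse : s ≠ e := Ne.symm hes
      have hdse : dir hT s e = z :=
        dir_unique hT (dir_adj hT hse).1 hzN (dir_adj hT hse).2 hzm
      refine ⟨e, hel, ?_, Or.inr ⟨hes, ?_⟩⟩
      · intro m hm hmS
        by_contra hms
        have hdm := dir_prefix hT hse hm hms
        exact hzav m hmS hms (hdm.trans hdse)
      · intro u hu hus h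
        exact hzav u hu hus (h.trans hdse)
  choose! ℓ h1 h2 h3 using key
  have hinj : Set.InjOn ℓ S' := by
    intro s hs t ht heq
    by_contra hst
    have hts : t ≠ s := fun h => hst h.symm
    rcases h3 s hs with h | hds
    · have hse : s ∈ (pth hT t (ℓ t)).support := by
        rw [← h, heq]
        exact end_mem_support _
      exact hst (h2 t ht s hse hs)
    · obtain ⟨hes, hds'⟩ := hds
      have hd : dir hT s t ≠ dir hT s (ℓ s) := hds' t ht hts
      have hsep := dir_sep hT hts hes hd
      rw [heq] at hsep
      exact hst (h2 t ht s hsep hs)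
  calc S'.ncard = (ℓ '' S').ncard := (Set.ncard_image_of_injOn hinj).symm
    _ ≤ (leaves T).ncard := Set.ncard_le_ncard
        (by rintro _ ⟨s, hs, rfl⟩; exact h1 s hs) (Set.toFinite _)


end TreeMV

set_option linter.unusedSectionVars true

/-- In a finite tree `T` with a branch vertex, every set `S` obtained by choosing
exactly one vertex from each leg set `W(u) = V(P_T(u, b(u))) \ {b(u)}`, `u ∈ 𝓛(T)`,
is a mutual-visibility set of cardinality `μ(T) = |𝓛(T)|`. -/
theorem stmt15 [Fintype V] (T : SimpleGraph V) (hT : T.IsTree)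
    (hbr : (branchVerts T).Nonempty) (b : V → V)
    (hb : ∀ u ∈ leaves T, b u ∈ branchVerts T ∧
      ∀ c ∈ branchVerts T, T.dist u (b u) ≤ T.dist u c)
    (p : ∀ u : V, T.Walk u (b u)) (hp : ∀ u, (p u).IsPath)
    (S : Set V)
    (hS1 : S ⊆ ⋃ u ∈ leaves T, ({x | x ∈ (p u).support} \ {b u}))
    (hS2 : ∀ u ∈ leaves T, (S ∩ ({x | x ∈ (p u).support} \ {b u})).ncard = 1) :
    MutualVisSet T S ∧ S.ncard = muNumber T ∧ muNumber T = (leaves T).ncard := by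
  classical
  have hsingle : ∀ e ∈ leaves T, ∃ a, S ∩ ({x | x ∈ (p e).support} \ {b e}) = {a} :=
    fun e he => Set.ncard_eq_one.mp (hS2 e he)
  choose! f hf using hsingle
  have hfW : ∀ e ∈ leaves T,
      f e ∈ S ∧ f e ∈ ({x | x ∈ (p e).support} \ {b e} : Set V) := by
    intro e he
    have hmem : f e ∈ S ∩ ({x | x ∈ (p e).support} \ {b e}) := by rw [hf e he]; rfl
    exact ⟨hmem.1, hmem.2⟩
  have hMV : MutualVisSet T S := by
    intro u hu v hv huv
    obtain ⟨q, hqp, hql⟩ := hT.isConnected.exists_path_of_dist u v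
    refine ⟨q, hql, ?_⟩
    intro x hxq hxu hxv hxS
    have hx1 := hS1 hxS
    rw [Set.mem_iUnion₂] at hx1
    obtain ⟨e, he, hxW⟩ := hx1
    have hxfe : x = f e := by
      have hmem : x ∈ S ∩ ({y | y ∈ (p e).support} \ {b e}) := ⟨hxS, hxW⟩
      rw [hf e he] at hmem
      exact hmem
    have huW : u ∉ ({y | y ∈ (p e).support} \ {b e} : Set V) := by
      intro hW
      have hmem : u ∈ S ∩ ({y | y ∈ (p e).support} \ {b e}) := ⟨hu, hW⟩
      rw [hf e he] at hmem
      exact hxu (hxfe.trans hmem.symm)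
    have hvW : v ∉ ({y | y ∈ (p e).support} \ {b e} : Set V) := by
      intro hW
      have hmem : v ∈ S ∩ ({y | y ∈ (p e).support} \ {b e}) := ⟨hv, hW⟩
      rw [hf e he] at hmem
      exact hxv (hxfe.trans hmem.symm)
    obtain ⟨hxsup, hxb0⟩ := hxW
    have hxb : x ≠ b e := fun h => hxb0 h
    have hbe1 : b e ∈ (q.takeUntil x hxq).support :=
      TreeMV.legNx hT hb hp he hxsup hxb huW _
    have hbe2 : b e ∈ (q.dropUntil x hxq).support := by
      have h := TreeMV.legNx hT hb hp he hxsup hxb hvW ((q.dropUntil x hxq).reverse)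
      rwa [Walk.support_reverse, List.mem_reverse] at h
    exact hxb (TreeMV.sandwich hqp hxq hbe1 hbe2).symm
  have hWdisj : ∀ e ∈ leaves T, ∀ e' ∈ leaves T, ∀ x : V,
      x ∈ ({y | y ∈ (p e).support} \ {b e} : Set V) →
      x ∈ ({y | y ∈ (p e').support} \ {b e'} : Set V) → e = e' := by
    intro e he e' he' x hxe hxe'
    by_contra hee
    have he1 : (T.neighborSet e').ncard = 1 := he'
    have hbe3 : 3 ≤ (T.neighborSet (b e)).ncard := (hb e he).1
    have he'W : e' ∉ ({y | y ∈ (p e).support} \ {b e} : Set V) := by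
      intro hW
      have hne : e' ≠ e := fun h => hee h.symm
      have h2 := (TreeMV.leg hT hb hp he e' hW.1 (fun h => hW.2 h)).2 hne
      omega
    obtain ⟨hxs, hxb0⟩ := hxe
    have hxb : x ≠ b e := fun h => hxb0 h
    obtain ⟨hxs', hxb0'⟩ := hxe'
    have hxb' : x ≠ b e' := fun h => hxb0' h
    have hbe_tk : b e ∈ ((p e').takeUntil x hxs').support :=
      TreeMV.legNx hT hb hp he hxs hxb he'W _
    have hbsup : b e ∈ (p e').support := Walk.support_takeUntil_subset _ hxs' hbe_tk
    have hbee' : b e = b e' := by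
      by_contra hne
      have hbe_ne_e' : b e ≠ e' := by
        intro h
        rw [h] at hbe3
        omega
      have h2 := (TreeMV.leg hT hb hp he' (b e) hbsup hne).2 hbe_ne_e'
      omega
    rw [hbee'] at hbe_tk
    exact hxb' (TreeMV.sandwich (hp e') hxs' hbe_tk (Walk.end_mem_support _)).symm
  have himg : S = f '' (leaves T) := by
    apply Set.Subset.antisymm
    · intro x hxS
      have hx1 := hS1 hxS
      rw [Set.mem_iUnion₂] at hx1
      obtain ⟨e, he, hxW⟩ := hx1
      have hmem : x ∈ S ∩ ({y | y ∈ (p e).support} \ {b e}) := ⟨hxS, hxW⟩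
      rw [hf e he] at hmem
      exact ⟨e, he, hmem.symm⟩
    · rintro _ ⟨e, he, rfl⟩
      exact (hfW e he).1
  have hfinj : Set.InjOn f (leaves T) := by
    intro e he e' he' heq
    refine hWdisj e he e' he' (f e) (hfW e he).2 ?_
    rw [heq]
    exact (hfW e' he').2
  have hcardS : S.ncard = (leaves T).ncard := by
    rw [himg, Set.ncard_image_of_injOn hfinj]
  have hub : ∀ n ∈ {n : ℕ | ∃ S'' : Set V, MutualVisSet T S'' ∧ S''.ncard = n},
      n ≤ (leaves T).ncard := by
    rintro n ⟨S'', hS'', rfl⟩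
    exact TreeMV.mv_card_le hT hbr hS''
  have hmem : S.ncard ∈ {n : ℕ | ∃ S'' : Set V, MutualVisSet T S'' ∧ S''.ncard = n} :=
    ⟨S, hMV, rfl⟩
  have hmu : muNumber T = (leaves T).ncard := by
    apply le_antisymm
    · exact csSup_le ⟨S.ncard, hmem⟩ hub
    · rw [← hcardS]
      exact le_csSup ⟨(leaves T).ncard, hub⟩ hmem
  exact ⟨hMV, by rw [hcardS, hmu], hmu⟩
end

section
/- Let T be a tree and let Q ⊆ V(T) be a mutual-visibility set with |Q| ≥ 2, and let H = T⟨Q⟩ be the Steiner subtree spanned by Q. Then W = { w ∈ V(T) \ Q : a_Q(w) ∈ V(H) \ Q } is an absolute c_Q-visible set, and it is the unique maximal absolute c_Q-visible set: every absolute c_Q-visible set is contained in W. -/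
open SimpleGraph

variable {V : Type*}

/-! ### Auxiliary development for trees -/

section TreeAux

variable {T : SimpleGraph V}

/-- The unique path between two vertices of a tree. -/
noncomputable def tp (hT : T.IsTree) (u v : V) : T.Walk u v :=
  (hT.existsUnique_path u v).choose

lemma tp_isPath (hT : T.IsTree) (u v : V) : (tp hT u v).IsPath :=
  (hT.existsUnique_path u v).choose_spec.1

lemma tp_unique (hT : T.IsTree) {u v : V} (p : T.Walk u v) (hp : p.IsPath) :
    p = tp hT u v :=
  (hT.existsUnique_path u v).choose_spec.2 p hp

lemma tp_support_sub (hT : T.IsTree) {u v : V} (w : T.Walk u v) :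
    (tp hT u v).support ⊆ w.support := by
  classical
  rw [← tp_unique hT w.bypass w.bypass_isPath]
  exact w.support_bypass_subset

lemma tp_length (hT : T.IsTree) (u v : V) : (tp hT u v).length = T.dist u v := by
  classical
  obtain ⟨p, hp⟩ := hT.isConnected.exists_walk_length_eq_dist u v
  refine le_antisymm ?_ (SimpleGraph.dist_le _)
  calc (tp hT u v).length = p.bypass.length := by
        rw [← tp_unique hT p.bypass p.bypass_isPath]
    _ ≤ p.length := p.length_bypass_le
    _ = T.dist u v := hp

lemma visible_iff (hT : T.IsTree) (X : Set V) (u v : V) :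
    Visible T X u v ↔ ∀ x ∈ (tp hT u v).support, x ≠ u → x ≠ v → x ∉ X := by
  constructor
  · rintro ⟨p, _, hp⟩ x hx hxu hxv
    exact hp x (tp_support_sub hT p hx) hxu hxv
  · intro h
    exact ⟨tp hT u v, tp_length hT u v, h⟩

lemma tp_reverse (hT : T.IsTree) (u v : V) : tp hT v u = (tp hT u v).reverse :=
  (tp_unique hT _ ((tp_isPath hT u v).reverse)).symm

lemma tp_mem_comm (hT : T.IsTree) {u v x : V} :
    x ∈ (tp hT v u).support ↔ x ∈ (tp hT u v).support := by
  rw [tp_reverse hT u v, SimpleGraph.Walk.support_reverse, List.mem_reverse]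

lemma tp_self (hT : T.IsTree) (u : V) : tp hT u u = SimpleGraph.Walk.nil :=
  (tp_unique hT SimpleGraph.Walk.nil (by simp)).symm

lemma tp_take_eq (hT : T.IsTree) {u v x : V} (h : x ∈ (tp hT u v).support) :
    tp hT u v = (tp hT u x).append (tp hT x v) := by
  classical
  have hs := (tp hT u v).take_spec h
  have h1 : (tp hT u v).takeUntil x h = tp hT u x :=
    tp_unique hT _ ((tp_isPath hT u v).takeUntil h)
  have h2 : (tp hT u v).dropUntil x h = tp hT x v :=
    tp_unique hT _ ((tp_isPath hT u v).dropUntil h)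
  rw [← h1, ← h2]
  exact hs.symm

lemma tp_dist_add (hT : T.IsTree) {u v x : V} (h : x ∈ (tp hT u v).support) :
    T.dist u x + T.dist x v = T.dist u v := by
  have := congrArg SimpleGraph.Walk.length (tp_take_eq hT h)
  rw [SimpleGraph.Walk.length_append, tp_length, tp_length, tp_length] at this
  exact this.symm

lemma tp_supp_left (hT : T.IsTree) {u v x : V} (h : x ∈ (tp hT u v).support) :
    (tp hT u x).support ⊆ (tp hT u v).support := by
  rw [tp_take_eq hT h]
  intro y hy
  rw [SimpleGraph.Walk.mem_support_append_iff]
  exact Or.inl hy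

lemma tp_supp_right (hT : T.IsTree) {u v x : V} (h : x ∈ (tp hT u v).support) :
    (tp hT x v).support ⊆ (tp hT u v).support := by
  rw [tp_take_eq hT h]
  intro y hy
  rw [SimpleGraph.Walk.mem_support_append_iff]
  exact Or.inr hy

lemma tp_triangle (hT : T.IsTree) (y : V) {u v x : V} (h : x ∈ (tp hT u v).support) :
    x ∈ (tp hT u y).support ∨ x ∈ (tp hT y v).support := by
  have := tp_support_sub hT ((tp hT u y).append (tp hT y v)) h
  rwa [SimpleGraph.Walk.mem_support_append_iff] at this

lemma isPath_append' {G : SimpleGraph V} {u v w : V} {p : G.Walk u v} {q : G.Walk v w}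
    (hp : p.IsPath) (hq : q.IsPath)
    (h : ∀ x, x ∈ p.support → x ∈ q.support → x = v) : (p.append q).IsPath := by
  rw [SimpleGraph.Walk.isPath_def, SimpleGraph.Walk.support_append]
  have hqt : q.support = v :: q.support.tail := q.support_eq_cons
  have hqn := hq.support_nodup
  refine List.Nodup.append hp.support_nodup ?_ ?_
  · rw [hqt] at hqn; exact hqn.of_cons
  · intro x hx hx'
    have hxq : x ∈ q.support := by rw [hqt]; exact List.mem_cons_of_mem _ hx'
    have hxv : x = v := h x hx hxq
    rw [hqt, List.nodup_cons] at hqn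
    exact hqn.1 (hxv ▸ hx')

/-- Along any walk ending in `S`, there is a first vertex of `S`. -/
lemma exists_first_s18 {G : SimpleGraph V} {u v : V} (p : G.Walk u v) (S : Set V) :
    v ∈ S → ∃ c, c ∈ S ∧ ∃ (w₁ : G.Walk u c) (w₂ : G.Walk c v), p = w₁.append w₂ ∧
      ∀ x ∈ w₁.support, x ∈ S → x = c := by
  induction p with
  | nil =>
    intro hv
    exact ⟨_, hv, SimpleGraph.Walk.nil, SimpleGraph.Walk.nil, rfl, by
      intro x hx _; simpa using hx⟩
  | @cons a b d h q ih =>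
    intro hv
    by_cases ha : a ∈ S
    · exact ⟨a, ha, SimpleGraph.Walk.nil, SimpleGraph.Walk.cons h q, rfl, by
        intro x hx _; simpa using hx⟩
    · obtain ⟨c, hc, w₁, w₂, hspec, hfirst⟩ := ih hv
      refine ⟨c, hc, SimpleGraph.Walk.cons h w₁, w₂, by rw [SimpleGraph.Walk.cons_append, hspec], ?_⟩
      intro x hx hxS
      rw [SimpleGraph.Walk.support_cons] at hx
      rcases List.mem_cons.mp hx with hx' | hx'
      · exact absurd (hx' ▸ hxS) ha
      · exact hfirst x hx' hxS

/-- Median of three vertices in a tree. -/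
lemma tp_median (hT : T.IsTree) (x y z : V) :
    ∃ m, m ∈ (tp hT x y).support ∧ m ∈ (tp hT y z).support ∧ m ∈ (tp hT x z).support := by
  classical
  obtain ⟨c, hc, w₁, w₂, hspec, hfirst⟩ :=
    exists_first_s18 (tp hT z x) {a | a ∈ (tp hT x y).support}
      ((tp hT x y).start_mem_support)
  have hzx : c ∈ (tp hT z x).support := by
    rw [hspec, SimpleGraph.Walk.mem_support_append_iff]
    exact Or.inl w₁.end_mem_support
  have hw₁path : w₁.IsPath := by
    have := tp_isPath hT z x
    rw [hspec] at this
    exact this.of_append_left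
  refine ⟨c, hc, ?_, tp_mem_comm hT |>.mpr hzx⟩
  -- build the path from z to y through c
  have hcy : c ∈ (tp hT x y).support := hc
  set q := (tp hT x y).dropUntil c hcy with hq
  have hqpath : q.IsPath := (tp_isPath hT x y).dropUntil hcy
  have hqsub : q.support ⊆ (tp hT x y).support := (tp hT x y).support_dropUntil_subset hcy
  have hpath : (w₁.append q).IsPath := by
    refine isPath_append' hw₁path hqpath ?_
    intro a ha ha'
    exact hfirst a ha (hqsub ha')
  have heq : w₁.append q = tp hT z y := tp_unique hT _ hpath
  have : c ∈ (tp hT z y).support := by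
    rw [← heq, SimpleGraph.Walk.mem_support_append_iff]
    exact Or.inl w₁.end_mem_support
  exact tp_mem_comm hT |>.mp this

end TreeAux

section SteinerAux

variable {T : SimpleGraph V}

lemma mem_steiner_iff (hT : T.IsTree) (Q : Set V) (x : V) :
    x ∈ (steinerSub T Q).verts ↔ ∃ u ∈ Q, ∃ v ∈ Q, x ∈ (tp hT u v).support := by
  constructor
  · rintro ⟨u, hu, v, hv, p, hp, hx⟩
    exact ⟨u, hu, v, hv, by rwa [tp_unique hT p hp] at hx⟩
  · rintro ⟨u, hu, v, hv, hx⟩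
    exact ⟨u, hu, v, hv, tp hT u v, tp_isPath hT u v, hx⟩

lemma Q_sub_steiner (hT : T.IsTree) {Q : Set V} (hQ2 : Q.Nontrivial) :
    Q ⊆ (steinerSub T Q).verts := by
  intro q hq
  obtain ⟨q', hq', hne⟩ := hQ2.exists_ne q
  exact (mem_steiner_iff hT Q q).mpr ⟨q, hq, q', hq', SimpleGraph.Walk.start_mem_support _⟩

/-- The Steiner subtree is path-closed. -/
lemma steiner_pathclosed (hT : T.IsTree) (Q : Set V) {y z : V}
    (hy : y ∈ (steinerSub T Q).verts) (hz : z ∈ (steinerSub T Q).verts) :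
    ∀ x ∈ (tp hT y z).support, x ∈ (steinerSub T Q).verts := by
  obtain ⟨u₁, hu₁, v₁, hv₁, hy'⟩ := (mem_steiner_iff hT Q y).mp hy
  obtain ⟨u₂, hu₂, v₂, hv₂, hz'⟩ := (mem_steiner_iff hT Q z).mp hz
  intro x hx
  rcases tp_triangle hT u₂ hx with hx1 | hx2
  · rcases tp_triangle hT u₁ hx1 with hx3 | hx4
    · -- x ∈ tp y u₁ ⊆ tp u₁ v₁
      have : x ∈ (tp hT u₁ y).support := tp_mem_comm hT |>.mp hx3
      exact (mem_steiner_iff hT Q x).mpr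
        ⟨u₁, hu₁, v₁, hv₁, tp_supp_left hT hy' this⟩
    · exact (mem_steiner_iff hT Q x).mpr ⟨u₁, hu₁, u₂, hu₂, hx4⟩
  · have : x ∈ (tp hT u₂ v₂).support := tp_supp_left hT hz' hx2
    exact (mem_steiner_iff hT Q x).mpr ⟨u₂, hu₂, v₂, hv₂, this⟩

/-- In the Steiner subtree of a mutual-visibility set `Q`, no vertex of `Q` is
internal on a path between two vertices of the subtree. -/
lemma steiner_no_interior (hT : T.IsTree) {Q : Set V} (hQ : MutualVisSet T Q)
    {a b q : V} (ha : a ∈ (steinerSub T Q).verts) (hb : b ∈ (steinerSub T Q).verts)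
    (hqQ : q ∈ Q) (hq : q ∈ (tp hT a b).support) : q = a ∨ q = b := by
  by_contra hcon
  push_neg at hcon
  obtain ⟨hqa, hqb⟩ := hcon
  obtain ⟨u₁, hu₁, v₁, hv₁, ha'⟩ := (mem_steiner_iff hT Q a).mp ha
  obtain ⟨u₂, hu₂, v₂, hv₂, hb'⟩ := (mem_steiner_iff hT Q b).mp hb
  -- find s₁ ∈ Q with q ∉ supp (tp a s₁)
  have key : ∀ (u v c : V), c ∈ (tp hT u v).support → u ∈ Q → v ∈ Q → q ≠ c →
      ∃ s ∈ Q, q ∉ (tp hT c s).support := by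
    intro u v c hc huQ hvQ hqc
    by_cases h1 : q ∈ (tp hT c u).support
    · refine ⟨v, hvQ, fun h2 => ?_⟩
      -- q in both halves, contradicting nodup of tp u v
      have hsplit := tp_take_eq hT hc
      have hnodup := (tp_isPath hT u v).support_nodup
      rw [hsplit, SimpleGraph.Walk.support_append] at hnodup
      have hq1 : q ∈ (tp hT u c).support := tp_mem_comm hT |>.mp h1
      have hq2 : q ∈ (tp hT c v).support.tail := by
        have := (tp hT c v).support_eq_cons
        rw [this, List.mem_cons] at h2
        rcases h2 with h | h
        · exact absurd h hqc
        · exact h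
      exact (List.disjoint_of_nodup_append hnodup) hq1 hq2
    · exact ⟨u, huQ, h1⟩
  obtain ⟨s₁, hs₁Q, hs₁⟩ := key u₁ v₁ a ha' hu₁ hv₁ hqa
  obtain ⟨s₂, hs₂Q, hs₂⟩ := key u₂ v₂ b hb' hu₂ hv₂ hqb
  -- q ∈ supp (tp s₁ b)
  have hq1 : q ∈ (tp hT s₁ b).support := by
    rcases tp_triangle hT s₁ hq with h | h
    · exact absurd h hs₁
    · exact h
  have hq2 : q ∈ (tp hT s₁ s₂).support := by
    rcases tp_triangle hT s₂ hq1 with h | h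
    · exact h
    · exact absurd (tp_mem_comm hT |>.mp h) hs₂
  have hqs₁ : q ≠ s₁ := fun h => hs₁ (h ▸ (tp hT a s₁).end_mem_support)
  have hqs₂ : q ≠ s₂ := fun h => hs₂ (h ▸ (tp hT b s₂).end_mem_support)
  have hne : s₁ ≠ s₂ := by
    rintro rfl
    rw [tp_self hT s₁] at hq2
    simp at hq2
    exact hqs₁ hq2
  have := (visible_iff hT Q s₁ s₂).mp (hQ s₁ hs₁Q s₂ hs₂Q hne) q hq2 hqs₁ hqs₂
  exact this hqQ

/-- The attachment point lies on every path from `w` to the Steiner subtree. -/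
lemma steiner_gate (hT : T.IsTree) (Q : Set V) (aQ : V → V)
    (haQ : ∀ w, aQ w ∈ (steinerSub T Q).verts ∧
      ∀ y ∈ (steinerSub T Q).verts, T.dist w (aQ w) ≤ T.dist w y)
    (w y : V) (hy : y ∈ (steinerSub T Q).verts) : aQ w ∈ (tp hT w y).support := by
  obtain ⟨c, hc, w₁, w₂, hspec, hfirst⟩ := exists_first_s18 (tp hT w y) (steinerSub T Q).verts hy
  have hw₁path : w₁.IsPath := by
    have := tp_isPath hT w y; rw [hspec] at this; exact this.of_append_left
  have hw₁ : w₁ = tp hT w c := tp_unique hT w₁ hw₁path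
  obtain ⟨m, hm1, hm2, hm3⟩ := tp_median hT w c (aQ w)
  have hmH : m ∈ (steinerSub T Q).verts := steiner_pathclosed hT Q hc (haQ w).1 m hm2
  have hmc : m = c := by
    refine hfirst m ?_ hmH
    rw [hw₁]; exact hm1
  have hcmem : c ∈ (tp hT w (aQ w)).support := hmc ▸ hm3
  have hcdist : T.dist w c + T.dist c (aQ w) = T.dist w (aQ w) := tp_dist_add hT hcmem
  have hle : T.dist w (aQ w) ≤ T.dist w c := (haQ w).2 c hc
  have h0 : T.dist c (aQ w) = 0 := by omega
  have hca : c = aQ w := (hT.isConnected.dist_eq_zero_iff).mp h0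
  rw [hspec, SimpleGraph.Walk.mem_support_append_iff]
  left
  rw [← hca]
  exact w₁.end_mem_support

/-- Any Steiner vertex on the path from `w` to its attachment point is the
attachment point itself. -/
lemma steiner_seg (hT : T.IsTree) (Q : Set V) (aQ : V → V)
    (haQ : ∀ w, aQ w ∈ (steinerSub T Q).verts ∧
      ∀ y ∈ (steinerSub T Q).verts, T.dist w (aQ w) ≤ T.dist w y)
    (w x : V) (hx : x ∈ (tp hT w (aQ w)).support)
    (hxH : x ∈ (steinerSub T Q).verts) : x = aQ w := by
  have h1 := tp_dist_add hT hx
  have h2 : T.dist w (aQ w) ≤ T.dist w x := (haQ w).2 x hxH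
  have h0 : T.dist x (aQ w) = 0 := by omega
  exact (hT.isConnected.dist_eq_zero_iff).mp h0

end SteinerAux

/-- For a tree `T` and a mutual-visibility set `Q` with `|Q| ≥ 2`, the set
`W = {w ∉ Q : a_Q(w) ∈ V(T⟨Q⟩) \ Q}` is an absolute `c_Q`-visible set and is the
unique maximal one: every absolute `c_Q`-visible set is contained in it. -/
theorem stmt18 (T : SimpleGraph V) (hT : T.IsTree) (Q : Set V)
    (hQ : MutualVisSet T Q) (hQ2 : Q.Nontrivial) (aQ : V → V)
    (haQ : ∀ w, aQ w ∈ (steinerSub T Q).verts ∧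
      ∀ y ∈ (steinerSub T Q).verts, T.dist w (aQ w) ≤ T.dist w y) :
    AbsCQVisible T Q {w | w ∉ Q ∧ aQ w ∈ (steinerSub T Q).verts \ Q} ∧
    ∀ W', AbsCQVisible T Q W' →
      W' ⊆ {w | w ∉ Q ∧ aQ w ∈ (steinerSub T Q).verts \ Q} := by
  have hQH : Q ⊆ (steinerSub T Q).verts := Q_sub_steiner hT hQ2
  constructor
  · refine ⟨⟨?_, ?_, ?_⟩, hQ⟩
    · intro w hw; exact hw.1
    · rintro w₁ ⟨hw₁Q, hw₁a⟩ w₂ ⟨hw₂Q, hw₂a⟩ hne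
      rw [visible_iff hT]
      intro x hx hxu hxv hxQ
      rcases tp_triangle hT (aQ w₁) hx with h1 | h23
      · have := steiner_seg hT Q aQ haQ w₁ x h1 (hQH hxQ)
        exact hw₁a.2 (this ▸ hxQ)
      · rcases tp_triangle hT (aQ w₂) h23 with h2 | h3
        · rcases steiner_no_interior hT hQ hw₁a.1 hw₂a.1 hxQ h2 with rfl | rfl
          · exact hw₁a.2 hxQ
          · exact hw₂a.2 hxQ
        · have := steiner_seg hT Q aQ haQ w₂ x (tp_mem_comm hT |>.mp h3) (hQH hxQ)
          exact hw₂a.2 (this ▸ hxQ)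
    · rintro q hqQ w ⟨hwQ, hwa⟩
      rw [visible_iff hT]
      intro x hx hxq hxw hxQ
      rcases tp_triangle hT (aQ w) hx with h1 | h2
      · rcases steiner_no_interior hT hQ (hQH hqQ) hwa.1 hxQ h1 with rfl | rfl
        · exact hxq rfl
        · exact hwa.2 hxQ
      · have := steiner_seg hT Q aQ haQ w x (tp_mem_comm hT |>.mp h2) (hQH hxQ)
        exact hwa.2 (this ▸ hxQ)
  · rintro W' ⟨⟨hW'Q, hWW, hQW⟩, _⟩ w hw
    have hwQ : w ∉ Q := hW'Q hw
    refine ⟨hwQ, (haQ w).1, ?_⟩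
    intro haQQ
    obtain ⟨q', hq'Q, hq'ne⟩ := hQ2.exists_ne (aQ w)
    have hgate : aQ w ∈ (tp hT w q').support := steiner_gate hT Q aQ haQ w q' (hQH hq'Q)
    have hvis := (visible_iff hT Q q' w).mp (hQW q' hq'Q w hw)
    have hmem : aQ w ∈ (tp hT q' w).support := tp_mem_comm hT |>.mp hgate
    exact hvis (aQ w) hmem (Ne.symm hq'ne) (fun h => hwQ (h ▸ haQQ)) haQQ
end
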